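/- arXiv:2212.14661 — 7 statements merged into one kernel-verified Lean document; each statement's English description precedes it below -/
import Mathlib

section
/- The number of k-Dyck paths of size n (lattice paths from (0,0) to (kn,n) using up steps (0,1) and down steps (1,0) that never go below the line y=x/k) equals the Fuss–Catalan number (1/(kn+1)) * binomial((k+1)n, n). -/
open List

/-- A `k`-Dyck path of size `n`, encoded as a word over `Bool` where `true` is an
up step `(0,1)` and `false` is a down step `(1,0)`.  The path goes from `(0,0)`
to `(kn, n)` and never goes below the line `y = x/k`, i.e. every prefix has
`#D ≤ k * #U`. -/
def IsKDyckPath (k n : ℕ) (w : List Bool) : Prop :=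
  w.count true = n ∧ w.count false = k * n ∧
  ∀ i, (w.take i).count false ≤ k * (w.take i).count true

namespace KDyckAux


/-- weight: up steps count `k`, down steps count `-1`. -/
def wt (k : ℕ) (w : List Bool) : ℤ := k * w.count true - w.count false

lemma wt_append (k : ℕ) (a b : List Bool) : wt k (a ++ b) = wt k a + wt k b := by
  simp [wt, count_append]; ring

lemma count_add_count (w : List Bool) : w.count true + w.count false = w.length := by
  induction w with
  | nil => simp
  | cons h t ih => cases h <;> simp [count_cons] <;> omega

lemma finite_counts (a b : ℕ) :
    {w : List Bool | w.count true = a ∧ w.count false = b}.Finite := by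
  apply (List.finite_length_eq Bool (a + b)).subset
  rintro w ⟨h1, h2⟩
  simp only [Set.mem_setOf_eq, ← count_add_count w, h1, h2]

lemma ncard_counts (a b : ℕ) :
    {w : List Bool | w.count true = a ∧ w.count false = b}.ncard = (a + b).choose a := by
  suffices H : ∀ m a b, a + b = m →
      {w : List Bool | w.count true = a ∧ w.count false = b}.ncard = (a + b).choose a from
    H (a + b) a b rfl
  clear a b
  intro m
  induction m with
  | zero =>
    intro a b hm
    obtain ⟨rfl, rfl⟩ : a = 0 ∧ b = 0 := by omega
    have : {w : List Bool | w.count true = 0 ∧ w.count false = 0} = {([] : List Bool)} := by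
      ext w
      simp only [Set.mem_setOf_eq, Set.mem_singleton_iff]
      constructor
      · rintro ⟨h1, h2⟩
        have := count_add_count w
        rw [h1, h2] at this
        exact List.eq_nil_of_length_eq_zero this.symm
      · rintro rfl; simp
    rw [this]; simp
  | succ m ih =>
    intro a b hm
    rcases Nat.eq_zero_or_pos a with rfl | ha
    · -- all false
      have : {w : List Bool | w.count true = 0 ∧ w.count false = b}
          = {List.replicate b false} := by
        ext w
        simp only [Set.mem_setOf_eq, Set.mem_singleton_iff]
        constructor
        · rintro ⟨h1, h2⟩
          have hl := count_add_count w
          rw [h1, h2] at hl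
          rw [List.eq_replicate_iff]
          refine ⟨by omega, fun x hx => ?_⟩
          cases x
          · rfl
          · exact absurd hx (List.count_eq_zero.mp h1)
        · rintro rfl
          simp [List.count_replicate]
      rw [this]; simp
    rcases Nat.eq_zero_or_pos b with rfl | hb
    · have : {w : List Bool | w.count true = a ∧ w.count false = 0}
          = {List.replicate a true} := by
        ext w
        simp only [Set.mem_setOf_eq, Set.mem_singleton_iff]
        constructor
        · rintro ⟨h1, h2⟩
          have hl := count_add_count w
          rw [h1, h2] at hl
          rw [List.eq_replicate_iff]
          refine ⟨by omega, fun x hx => ?_⟩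
          cases x
          · exact absurd hx (List.count_eq_zero.mp h2)
          · rfl
        · rintro rfl
          simp [List.count_replicate]
      rw [this]; simp
    -- a, b ≥ 1
    obtain ⟨a', rfl⟩ : ∃ a', a = a' + 1 := ⟨a - 1, by omega⟩
    obtain ⟨b', rfl⟩ : ∃ b', b = b' + 1 := ⟨b - 1, by omega⟩
    have hsplit : {w : List Bool | w.count true = a' + 1 ∧ w.count false = b' + 1}
        = (List.cons true) '' {w | w.count true = a' ∧ w.count false = b' + 1}
          ∪ (List.cons false) '' {w | w.count true = a' + 1 ∧ w.count false = b'} := by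
      ext w
      simp only [Set.mem_setOf_eq, Set.mem_union, Set.mem_image]
      constructor
      · rintro ⟨h1, h2⟩
        match w with
        | [] => simp at h1
        | true :: t =>
          left; exact ⟨t, ⟨by simpa [count_cons] using h1, by simpa [count_cons] using h2⟩, rfl⟩
        | false :: t =>
          right; exact ⟨t, ⟨by simpa [count_cons] using h1, by simpa [count_cons] using h2⟩, rfl⟩
      · rintro (⟨t, ⟨h1, h2⟩, rfl⟩ | ⟨t, ⟨h1, h2⟩, rfl⟩) <;>
          simp [count_cons, h1, h2]
    rw [hsplit, Set.ncard_union_eq ?disj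
        ((finite_counts a' (b'+1)).image _) ((finite_counts (a'+1) b').image _),
      Set.ncard_image_of_injective _ (List.cons_injective),
      Set.ncard_image_of_injective _ (List.cons_injective),
      ih a' (b'+1) (by omega), ih (a'+1) b' (by omega)]
    case disj =>
      rw [Set.disjoint_left]
      rintro x ⟨t, _, rfl⟩ ⟨t', _, h⟩
      simp at h
    have h1 : a' + 1 + (b' + 1) = (a' + (b' + 1)) + 1 := by ring
    rw [h1, Nat.choose_succ_succ]
    congr 1
    congr 1
    omega


/-- all proper prefixes have nonnegative weight -/
def Good (k : ℕ) (w : List Bool) : Prop := ∀ i < w.length, 0 ≤ wt k (w.take i)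

lemma wt_take_add (k : ℕ) (w : List Bool) (j t : ℕ) :
    wt k (w.take (j + t)) = wt k (w.take j) + wt k ((w.drop j).take t) := by
  rw [take_add, wt_append]

lemma wt_drop (k : ℕ) (w : List Bool) (j : ℕ) :
    wt k (w.drop j) = wt k w - wt k (w.take j) := by
  have h := wt_append k (w.take j) (w.drop j)
  rw [take_append_drop] at h
  omega

lemma wt_take_rotate_low (k : ℕ) (w : List Bool) {j t : ℕ}
    (hj : j ≤ w.length) (ht : t ≤ w.length - j) :
    wt k ((w.rotate j).take t) = wt k (w.take (j + t)) - wt k (w.take j) := by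
  rw [rotate_eq_drop_append_take hj, take_append]
  have h0 : t - (w.drop j).length = 0 := by simp [length_drop]; omega
  rw [h0, take_zero, append_nil, wt_take_add]
  ring

lemma wt_take_rotate_high (k : ℕ) (w : List Bool) {j t : ℕ}
    (hj : j ≤ w.length) (ht1 : w.length - j ≤ t) (ht2 : t ≤ w.length) :
    wt k ((w.rotate j).take t)
      = wt k w - wt k (w.take j) + wt k (w.take (t - (w.length - j))) := by
  rw [rotate_eq_drop_append_take hj, take_append, wt_append]
  have h1 : (w.drop j).length ≤ t := by simp [length_drop]; omega
  rw [take_of_length_le h1, wt_drop, length_drop]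
  congr 2
  rw [take_take]
  congr 1
  omega

lemma good_rotate_iff (k : ℕ) (w : List Bool) {j : ℕ} (hw : wt k w = -1)
    (hj1 : 1 ≤ j) (hjL : j < w.length) :
    Good k (w.rotate j) ↔
      (∀ i < j, wt k (w.take j) < wt k (w.take i)) ∧
      (∀ i, j ≤ i → i ≤ w.length → wt k (w.take j) ≤ wt k (w.take i)) := by
  have hlen : (w.rotate j).length = w.length := length_rotate w j
  constructor
  · intro H
    have hsec : ∀ i, j ≤ i → i ≤ w.length → wt k (w.take j) ≤ wt k (w.take i) := by
      intro i hji hiL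
      have ht : i - j ≤ w.length - j := by omega
      have h := H (i - j) (by omega)
      rw [wt_take_rotate_low k w hjL.le ht] at h
      have : j + (i - j) = i := by omega
      rw [this] at h
      omega
    refine ⟨?_, hsec⟩
    intro i hij
    rcases Nat.eq_zero_or_pos i with rfl | hi
    · have := hsec w.length hjL.le le_rfl
      rw [take_length] at this
      simp only [take_zero]
      have : wt k ([] : List Bool) = 0 := by simp [wt]
      omega
    · have ht : w.length - j ≤ i + (w.length - j) := by omega
      have h := H (i + (w.length - j)) (by omega)
      rw [wt_take_rotate_high k w hjL.le ht (by omega)] at h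
      have he : i + (w.length - j) - (w.length - j) = i := by omega
      rw [he, hw] at h
      omega
  · rintro ⟨H1, H2⟩ t ht
    rw [hlen] at ht
    rcases le_or_gt t (w.length - j) with h | h
    · rw [wt_take_rotate_low k w hjL.le h]
      have := H2 (j + t) (by omega) (by omega)
      omega
    · rw [wt_take_rotate_high k w hjL.le h.le (by omega), hw]
      have hi1 : 1 ≤ t - (w.length - j) := by omega
      have hi2 : t - (w.length - j) < j := by omega
      have := H1 _ hi2
      omega

lemma length_pos_of_wt (k : ℕ) (w : List Bool) (hw : wt k w = -1) : 1 ≤ w.length := by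
  rcases w with _ | _
  · simp [wt] at hw
  · simp

lemma exists_least_argmin (s : ℕ → ℤ) (L : ℕ) (hL : 1 ≤ L) :
    ∃ m, (1 ≤ m ∧ m ≤ L) ∧ (∀ i, 1 ≤ i → i ≤ L → s m ≤ s i) ∧
      (∀ i, 1 ≤ i → i < m → s m < s i) := by
  classical
  have hexQ : ∃ j, (1 ≤ j ∧ j ≤ L) ∧ ∀ i, 1 ≤ i → i ≤ L → s j ≤ s i := by
    obtain ⟨m, hm, hmin⟩ := Finset.exists_min_image (Finset.Icc 1 L) s
      ⟨L, by simp; omega⟩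
    rw [Finset.mem_Icc] at hm
    exact ⟨m, hm, fun i h1 h2 => hmin i (Finset.mem_Icc.mpr ⟨h1, h2⟩)⟩
  refine ⟨Nat.find hexQ, (Nat.find_spec hexQ).1, (Nat.find_spec hexQ).2, ?_⟩
  intro i h1 h2
  have hni := Nat.find_min hexQ h2
  push_neg at hni
  obtain ⟨i', hi'1, hi'2, hlt⟩ := hni ⟨h1, le_trans (le_of_lt h2) (Nat.find_spec hexQ).1.2⟩
  exact lt_of_le_of_lt ((Nat.find_spec hexQ).2 i' hi'1 hi'2) hlt

lemma existsUnique_good_rotate (k : ℕ) (w : List Bool) (hw : wt k w = -1) :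
    ∃! j, j < w.length ∧ Good k (w.rotate j) := by
  have hL1 : 1 ≤ w.length := length_pos_of_wt k w hw
  obtain ⟨m, ⟨hm1, hmL⟩, hmmin, hkey⟩ :=
    exists_least_argmin (fun i => wt k (w.take i)) w.length hL1
  --
  have hsL : wt k (w.take w.length) = -1 := by rw [take_length, hw]
  have hs0 : wt k (w.take 0) = 0 := by simp [wt]
  have hsm : wt k (w.take m) ≤ -1 := by
    have := hmmin w.length hL1 le_rfl
    omega
  rcases eq_or_lt_of_le hmL with hmeq | hmlt
  · -- m = w.length : good rotation is j = 0
    refine ⟨0, ⟨by omega, ?_⟩, ?_⟩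
    · intro i hi
      rw [length_rotate] at hi
      rw [rotate_zero]
      rcases Nat.eq_zero_or_pos i with rfl | hi1
      · omega
      · have := hkey i hi1 (by omega)
        rw [hmeq, hsL] at this
        omega
    · rintro j ⟨hjL, hgood⟩
      by_contra hj0
      have hj1 : 1 ≤ j := by omega
      rw [good_rotate_iff k w hw hj1 hjL] at hgood
      have h1 := hgood.2 w.length (by omega) le_rfl
      have h2 := hkey j hj1 (by omega)
      rw [hmeq, hsL] at h2
      omega
  · -- m < w.length : good rotation is j = m
    refine ⟨m, ⟨hmlt, ?_⟩, ?_⟩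
    · rw [good_rotate_iff k w hw hm1 hmlt]
      constructor
      · intro i hi
        rcases Nat.eq_zero_or_pos i with rfl | hi1
        · omega
        · exact hkey i hi1 hi
      · intro i hmi hiL
        exact hmmin i (by omega) hiL
    · rintro j ⟨hjL, hgood⟩
      rcases Nat.eq_zero_or_pos j with rfl | hj1
      · exfalso
        rw [rotate_zero] at hgood
        have := hgood m (by omega)
        omega
      · rw [good_rotate_iff k w hw hj1 hjL] at hgood
        rcases lt_trichotomy j m with h | h | h
        · exfalso
          have h1 := hgood.2 m (by omega) hmL
          have h2 := hkey j hj1 h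
          omega
        · exact h
        · exfalso
          have h1 := hgood.1 m h
          have h2 := hmmin j hj1 (by omega)
          omega

lemma ncard_prod {α β : Type*} (s : Set α) (t : Set β) :
    (s ×ˢ t).ncard = s.ncard * t.ncard := by
  rw [← Nat.card_coe_set_eq, ← Nat.card_coe_set_eq, ← Nat.card_coe_set_eq,
    ← Nat.card_prod]
  exact Nat.card_congr (Equiv.Set.prod s t)

lemma ncard_Iio (L : ℕ) : (Set.Iio L).ncard = L := by
  rw [← Finset.coe_Iio, Set.ncard_coe_finset, Nat.card_Iio]

section Main

variable (k n : ℕ)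

def S : Set (List Bool) := {w | w.count true = n ∧ w.count false = k * n + 1}
def G : Set (List Bool) := {w | w ∈ S k n ∧ Good k w}
def P : Set (List Bool × ℕ) :=
  {p | p.1 ∈ S k n ∧ p.2 < (k + 1) * n + 1 ∧ Good k (p.1.rotate p.2)}

variable {k n}

lemma length_of_mem_S {w : List Bool} (hw : w ∈ S k n) : w.length = (k + 1) * n + 1 := by
  obtain ⟨h1, h2⟩ := hw
  have := count_add_count w
  rw [h1, h2] at this
  have h3 : (k + 1) * n = k * n + n := by ring
  omega

lemma wt_of_mem_S {w : List Bool} (hw : w ∈ S k n) : wt k w = -1 := by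
  obtain ⟨h1, h2⟩ := hw
  rw [wt, h1, h2]
  push_cast
  ring

lemma rotate_mem_S {w : List Bool} (hw : w ∈ S k n) (j : ℕ) : w.rotate j ∈ S k n := by
  obtain ⟨h1, h2⟩ := hw
  have hperm := List.rotate_perm w j
  exact ⟨(hperm.count_eq true).trans h1, (hperm.count_eq false).trans h2⟩

lemma finite_S : (S k n).Finite := finite_counts n (k * n + 1)
lemma finite_G : (G k n).Finite := finite_S.subset fun w hw => hw.1
lemma finite_P : (P k n).Finite := by
  apply (finite_S.prod (Set.finite_Iio ((k + 1) * n + 1))).subset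
  rintro ⟨w, j⟩ ⟨h1, h2, _⟩
  exact ⟨h1, h2⟩

lemma ncard_S : (S k n).ncard = ((k + 1) * n + 1).choose n := by
  rw [S, ncard_counts]
  congr 1
  ring

lemma ncard_P_eq_ncard_S : (P k n).ncard = (S k n).ncard := by
  have himg : Prod.fst '' P k n = S k n := by
    ext w
    constructor
    · rintro ⟨⟨w', j⟩, ⟨h1, _, _⟩, rfl⟩
      exact h1
    · intro hw
      obtain ⟨j, ⟨hj1, hj2⟩, _⟩ := existsUnique_good_rotate k w (wt_of_mem_S hw)
      exact ⟨(w, j), ⟨hw, by rwa [length_of_mem_S hw] at hj1, hj2⟩, rfl⟩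
  have hinj : Set.InjOn Prod.fst (P k n) := by
    rintro ⟨w, j⟩ ⟨h1, h2, h3⟩ ⟨w', j'⟩ ⟨h1', h2', h3'⟩ heq
    simp only at heq
    subst heq
    obtain ⟨j₀, _, huniq⟩ := existsUnique_good_rotate k w (wt_of_mem_S h1)
    have e1 : j = j₀ := huniq j ⟨by rwa [length_of_mem_S h1], h3⟩
    have e2 : j' = j₀ := huniq j' ⟨by rwa [length_of_mem_S h1], h3'⟩
    simp [e1, e2]
  rw [← himg, Set.ncard_image_of_injOn hinj]

lemma ncard_P_eq : (P k n).ncard = (G k n).ncard * ((k + 1) * n + 1) := by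
  set L := (k + 1) * n + 1 with hL
  have himg : (fun p : List Bool × ℕ => (p.1.rotate (L - p.2), p.2)) ''
      (G k n ×ˢ Set.Iio L) = P k n := by
    ext ⟨w, j⟩
    constructor
    · rintro ⟨⟨g, j'⟩, ⟨⟨hgS, hgGood⟩, hj'⟩, heq⟩
      cases heq
      have hj2 : j' < L := hj'
      have hglen : g.length = L := length_of_mem_S hgS
      refine ⟨rotate_mem_S hgS _, hj2, ?_⟩
      rw [rotate_rotate]
      have : L - j' + j' = L := by omega
      rw [this, ← hglen, rotate_length]
      exact hgGood
    · rintro ⟨hwS, hj, hGood⟩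
      refine ⟨(w.rotate j, j), ⟨⟨rotate_mem_S hwS j, hGood⟩, hj⟩, ?_⟩
      have hwlen : w.length = L := length_of_mem_S hwS
      have he : (w.rotate j).rotate (L - j) = w := by
        rw [rotate_rotate]
        have hj' : j < L := hj
        have : j + (L - j) = L := by omega
        rw [this, ← hwlen, rotate_length]
      simp only [he]
  have hinj : Set.InjOn (fun p : List Bool × ℕ => (p.1.rotate (L - p.2), p.2))
      (G k n ×ˢ Set.Iio L) := by
    rintro ⟨g, j⟩ ⟨⟨hgS, _⟩, hj⟩ ⟨g', j'⟩ ⟨⟨hgS', _⟩, hj'⟩ heq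
    simp only [Prod.mk.injEq] at heq
    obtain ⟨he1, he2⟩ := heq
    subst he2
    have hgl : g.length = L := length_of_mem_S hgS
    have hgl' : g'.length = L := length_of_mem_S hgS'
    have hthis : (g.rotate (L - j)).rotate j = (g'.rotate (L - j)).rotate j := by rw [he1]
    rw [rotate_rotate, rotate_rotate] at hthis
    have hLj : L - j + j = L := by
      have : j < L := hj
      omega
    rw [hLj] at hthis
    have e1 : g.rotate L = g := by rw [← hgl, rotate_length]
    have e2 : g'.rotate L = g' := by rw [← hgl', rotate_length]
    rw [e1, e2] at hthis
    rw [hthis]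
  rw [← himg, Set.ncard_image_of_injOn hinj, ncard_prod, ncard_Iio]


lemma chain : ((k + 1) * n + 1).choose n = (G k n).ncard * ((k + 1) * n + 1) := by
  rw [← ncard_S, ← ncard_P_eq_ncard_S, ncard_P_eq]

lemma G_eq : G k n = (fun w => w ++ [false]) '' {w | IsKDyckPath k n w} := by
  ext v
  constructor
  · rintro ⟨hS, hGood⟩
    have hlen : v.length = (k + 1) * n + 1 := length_of_mem_S hS
    have hne : v ≠ [] := by
      intro h
      rw [h] at hlen
      simp at hlen
    have hv : v.dropLast ++ [v.getLast hne] = v := dropLast_append_getLast hne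
    have hwtv : wt k v = -1 := wt_of_mem_S hS
    have hsplit : wt k v.dropLast + wt k [v.getLast hne] = wt k v := by
      rw [← wt_append, hv]
    have hdl : 0 ≤ wt k v.dropLast := by
      have h := hGood (v.length - 1) (by omega)
      rwa [← dropLast_eq_take] at h
    have hlast : v.getLast hne = false := by
      by_contra h
      have hb : v.getLast hne = true := by
        cases hx : v.getLast hne
        · exact absurd hx h
        · rfl
      rw [hb] at hsplit
      have : wt k [true] = (k : ℤ) := by simp [wt]
      rw [this] at hsplit
      have : (0 : ℤ) ≤ k := Int.ofNat_nonneg k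
      omega
    rw [hlast] at hv hsplit
    have hwf : wt k [false] = -1 := by simp [wt]
    rw [hwf] at hsplit
    refine ⟨v.dropLast, ?_, hv⟩
    have hct : v.dropLast.count true = n := by
      have := hS.1
      rw [← hv, count_append] at this
      simpa using this
    have hcf : v.dropLast.count false = k * n := by
      have := hS.2
      rw [← hv, count_append] at this
      simp at this
      omega
    refine ⟨hct, hcf, ?_⟩
    have hul : v.dropLast.length = (k + 1) * n := by
      rw [← hv] at hlen
      simp only [length_append, length_cons, length_nil] at hlen
      omega
    have key : ∀ i ≤ v.dropLast.length,
        (v.dropLast.take i).count false ≤ k * (v.dropLast.take i).count true := by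
      intro i hi
      have htake : v.dropLast.take i = v.take i := by
        rw [dropLast_eq_take, take_take]
        congr 1
        omega
      have h := hGood i (by omega)
      rw [← htake, wt] at h
      have : ((v.dropLast.take i).count false : ℤ) ≤ k * (v.dropLast.take i).count true := by
        omega
      exact_mod_cast this
    intro i
    rcases le_or_gt i v.dropLast.length with h | h
    · exact key i h
    · rw [take_of_length_le h.le]
      have := key v.dropLast.length le_rfl
      rwa [take_length] at this
  · rintro ⟨u, ⟨hct, hcf, hpre⟩, rfl⟩
    have hul : u.length = k * n + n := by
      have := count_add_count u
      omega
    constructor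
    · constructor
      · rw [count_append, hct]
        simp
      · rw [count_append, hcf]
        simp
    · intro i hi
      rw [length_append, hul] at hi
      simp only [length_cons, length_nil] at hi
      have hi' : i ≤ u.length := by omega
      rw [take_append_of_le_length hi']
      have h := hpre i
      rw [wt]
      have : ((u.take i).count false : ℤ) ≤ k * (u.take i).count true := by
        exact_mod_cast h
      omega

lemma ncard_A : {w : List Bool | IsKDyckPath k n w}.ncard = (G k n).ncard := by
  rw [G_eq, Set.ncard_image_of_injective _ (List.append_left_injective [false])]

theorem number_of_kDyck_paths' :
    ({w : List Bool | IsKDyckPath k n w}.ncard : ℚ)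
      = (1 / (k * n + 1 : ℚ)) * (((k + 1) * n).choose n : ℚ) := by
  set A := {w : List Bool | IsKDyckPath k n w}.ncard with hA
  have key : ((k + 1) * n + 1).choose n = A * ((k + 1) * n + 1) := by
    rw [hA, ncard_A]; exact chain
  have hrow := Nat.choose_mul_succ_eq ((k + 1) * n) n
  have hsub : (k + 1) * n + 1 - n = k * n + 1 := by
    have : (k + 1) * n = k * n + n := by ring
    omega
  rw [hsub, key] at hrow
  -- hrow : ((k+1)n).choose n * ((k+1)n + 1) = A * ((k+1)n + 1) * (kn + 1)
  have hQ : (((k + 1) * n).choose n : ℚ) * ((k + 1) * n + 1)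
      = (A : ℚ) * ((k + 1) * n + 1) * (k * n + 1) := by exact_mod_cast hrow
  have hL0 : ((k : ℚ) + 1) * n + 1 ≠ 0 := by positivity
  have hk0 : ((k : ℚ) * n + 1) ≠ 0 := by positivity
  have h4 : (((k + 1) * n).choose n : ℚ) = (A : ℚ) * (k * n + 1) := by
    apply mul_right_cancel₀ hL0
    push_cast at hQ ⊢
    linarith
  rw [h4]
  field_simp


end Main
end KDyckAux

theorem number_of_kDyck_paths (k n : ℕ) (hk : 1 ≤ k) :
    ({w : List Bool | IsKDyckPath k n w}.ncard : ℚ)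
      = (1 / (k * n + 1 : ℚ)) * (((k + 1) * n).choose n : ℚ) :=
  KDyckAux.number_of_kDyck_paths' (k := k) (n := n)
end

section
/- The number of Motzkin paths of size n is given by |Mot(n;1)| = (1/(n+1)) Σ_{j=0}^{n} binomial(n+1, n−j) binomial(n−j, j). -/
open Finset

/-- A `k`-Motzkin path of size `n`, encoded by the list of height increments of its
steps: `U = (1,k)` contributes `k`, `D = (1,-1)` contributes `-1`, `H = (1,0)`
contributes `0`. -/
def IsKMotzkinPath (k n : ℕ) (w : List ℤ) : Prop :=
  w.length = n ∧ (∀ s ∈ w, s = (k : ℤ) ∨ s = -1 ∨ s = 0) ∧ w.sum = 0 ∧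
  ∀ i, 0 ≤ (w.take i).sum

/-- Ballot numbers `C(2j+h, j) - C(2j+h, j-1)` as rationals. -/
def Bq (j h : ℕ) : ℚ :=
  ((2*j+h).choose j : ℚ) - (if j = 0 then 0 else ((2*j+h).choose (j-1) : ℚ))

lemma Bq_zero (h : ℕ) : Bq 0 h = 1 := by simp [Bq]

lemma Bq_succ (j h : ℕ) : Bq (j+1) h
    = ((2*j+2+h).choose (j+1) : ℚ) - ((2*j+2+h).choose j : ℚ) := by
  simp only [Bq]
  norm_num
  ring_nf

lemma Bq_rec (j h : ℕ) : Bq (j+1) (h+1) = Bq j (h+2) + Bq (j+1) h := by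
  cases j with
  | zero =>
      rw [Bq_succ, Bq_succ, Bq_zero]
      have h1 : (2*0+2+(h+1)).choose (0+1) = (2*0+2+h).choose 0 + (2*0+2+h).choose (0+1) := by
        have e : 2*0+2+(h+1) = (2*0+2+h)+1 := by ring
        rw [e]; exact Nat.choose_succ_succ' (2*0+2+h) 0
      have h2 : (2*0+2+(h+1)).choose 0 = 1 := Nat.choose_zero_right _
      have h3 : (2*0+2+h).choose 0 = 1 := Nat.choose_zero_right _
      push_cast [h1, h2, h3]
      ring
  | succ k =>
      rw [Bq_succ, Bq_succ, Bq_succ]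
      have h1 : (2*(k+1)+2+(h+1)).choose (k+1+1)
          = (2*(k+1)+2+h).choose (k+1) + (2*(k+1)+2+h).choose (k+1+1) := by
        have e : 2*(k+1)+2+(h+1) = (2*(k+1)+2+h)+1 := by ring
        rw [e]; exact Nat.choose_succ_succ' _ _
      have h2 : (2*(k+1)+2+(h+1)).choose (k+1)
          = (2*(k+1)+2+h).choose k + (2*(k+1)+2+h).choose (k+1) := by
        have e : 2*(k+1)+2+(h+1) = (2*(k+1)+2+h)+1 := by ring
        rw [e]; exact Nat.choose_succ_succ' _ _
      have e2 : 2*k+2+(h+2) = 2*(k+1)+2+h := by ring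
      rw [h1, h2, e2]
      push_cast
      ring

lemma Bq_rec0 (j : ℕ) : Bq (j+1) 0 = Bq j 1 := by
  cases j with
  | zero =>
      rw [Bq_succ, Bq_zero]
      norm_num
  | succ k =>
      rw [Bq_succ, Bq_succ]
      have h1 : (2*(k+1)+2+0).choose (k+1+1)
          = (2*k+2+1).choose (k+1) + (2*k+2+1).choose (k+1+1) := by
        have e : 2*(k+1)+2+0 = (2*k+2+1)+1 := by ring
        rw [e]; exact Nat.choose_succ_succ' _ _
      have h2 : (2*(k+1)+2+0).choose (k+1)
          = (2*k+2+1).choose k + (2*k+2+1).choose (k+1) := by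
        have e : 2*(k+1)+2+0 = (2*k+2+1)+1 := by ring
        rw [e]; exact Nat.choose_succ_succ' _ _
      have h3 : (2*k+2+1).choose (k+1+1) = (2*k+2+1).choose (k+1) := by
        rw [← Nat.choose_symm (by omega : k+1+1 ≤ 2*k+2+1)]
        congr 1
        omega
      rw [h1, h2, h3]
      push_cast
      ring

/-- `(j+1) * Bq j 0 = C(2j, j)`. -/
lemma Bq_cat (j : ℕ) : (j+1 : ℚ) * Bq j 0 = ((2*j).choose j : ℚ) := by
  cases j with
  | zero => simp [Bq_zero]
  | succ k =>
      rw [Bq_succ]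
      have h1 : (2*k+2+0).choose (k+1) * (k+1) = (2*k+2+0).choose k * (k+2) := by
        have h := Nat.choose_succ_right_eq (2*k+2+0) k
        have e : 2*k+2+0 - k = k+2 := by omega
        rw [e] at h
        exact h
      have h2 : 2*(k+1) = 2*k+2+0 := by ring
      rw [h2]
      have h1' : ((2*k+2+0).choose (k+1) : ℚ) * (k+1) = ((2*k+2+0).choose k : ℚ) * (k+2) := by
        exact_mod_cast congrArg (Nat.cast : ℕ → ℚ) h1
      push_cast at h1' ⊢
      linarith

lemma choose_cast_zero {n m : ℕ} (h : n < m) : ((n.choose m : ℕ) : ℚ) = 0 := by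
  rw [Nat.choose_eq_zero_of_lt h]; norm_num

lemma sum_step (n h : ℕ) :
    ∑ j ∈ range (n+2), (((n+1).choose (2*j+h) : ℕ) : ℚ) * Bq j h
      = (∑ j ∈ range (n+1), ((n.choose (2*j+(h+1)) : ℕ) : ℚ) * Bq j (h+1))
        + (∑ j ∈ range (n+1), ((n.choose (2*j+h) : ℕ) : ℚ) * Bq j h)
        + (if h = 0 then 0
           else ∑ j ∈ range (n+1), ((n.choose (2*j+(h-1)) : ℕ) : ℚ) * Bq j (h-1)) := by
  cases h with
  | zero =>
      rw [if_pos rfl]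
      have key : ∀ j, (((n+1).choose (2*(j+1)+0) : ℕ) : ℚ) * Bq (j+1) 0
          = ((n.choose (2*j+(0+1)) : ℕ) : ℚ) * Bq j (0+1)
            + ((n.choose (2*(j+1)+0) : ℕ) : ℚ) * Bq (j+1) 0 := by
        intro j
        have e : 2*(j+1)+0 = (2*j+1)+1 := by ring
        rw [e, Nat.choose_succ_succ (n := n) (k := 2*j+1), Bq_rec0 j]
        push_cast
        ring
      rw [Finset.sum_range_succ' (fun j => (((n+1).choose (2*j+0) : ℕ) : ℚ) * Bq j 0) (n+1)]
      simp only [key]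
      rw [Finset.sum_add_distrib]
      have e2 : (∑ j ∈ range (n+1), ((n.choose (2*(j+1)+0) : ℕ) : ℚ) * Bq (j+1) 0)
            + (((n+1).choose (2*0+0) : ℕ) : ℚ) * Bq 0 0
          = ∑ j ∈ range (n+2), ((n.choose (2*j+0) : ℕ) : ℚ) * Bq j 0 := by
        rw [Finset.sum_range_succ' (fun j => ((n.choose (2*j+0) : ℕ) : ℚ) * Bq j 0) (n+1)]
        norm_num
      rw [add_assoc, e2,
        Finset.sum_range_succ (fun j => ((n.choose (2*j+0) : ℕ) : ℚ) * Bq j 0) (n+1)]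
      have : ((n.choose (2*(n+1)+0) : ℕ) : ℚ) = 0 := choose_cast_zero (by omega)
      rw [this]
      ring
  | succ h' =>
      rw [if_neg (by omega)]
      have key : ∀ j, (((n+1).choose (2*j+(h'+1)) : ℕ) : ℚ) * Bq j (h'+1)
          = ((n.choose (2*j+(h'+1)) : ℕ) : ℚ) * Bq j (h'+1)
            + ((n.choose (2*j+h') : ℕ) : ℚ) * Bq j (h'+1) := by
        intro j
        have e : 2*j+(h'+1) = (2*j+h')+1 := by ring
        rw [e, Nat.choose_succ_succ (n := n) (k := 2*j+h')]
        push_cast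
        ring
      simp only [key]
      rw [Finset.sum_add_distrib]
      have eG : ∑ j ∈ range (n+2), ((n.choose (2*j+(h'+1)) : ℕ) : ℚ) * Bq j (h'+1)
          = ∑ j ∈ range (n+1), ((n.choose (2*j+(h'+1)) : ℕ) : ℚ) * Bq j (h'+1) := by
        rw [Finset.sum_range_succ]
        have : ((n.choose (2*(n+1)+(h'+1)) : ℕ) : ℚ) = 0 := choose_cast_zero (by omega)
        rw [this]; ring
      have eA : ∑ j ∈ range (n+2), ((n.choose (2*j+h') : ℕ) : ℚ) * Bq j (h'+1)
          = (∑ j ∈ range (n+1), ((n.choose (2*j+(h'+1+1)) : ℕ) : ℚ) * Bq j (h'+1+1))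
            + ∑ j ∈ range (n+1), ((n.choose (2*j+(h'+1-1)) : ℕ) : ℚ) * Bq j (h'+1-1) := by
        rw [Finset.sum_range_succ' (fun j => ((n.choose (2*j+h') : ℕ) : ℚ) * Bq j (h'+1)) (n+1)]
        have key2 : ∀ j, ((n.choose (2*(j+1)+h') : ℕ) : ℚ) * Bq (j+1) (h'+1)
            = ((n.choose (2*j+(h'+1+1)) : ℕ) : ℚ) * Bq j (h'+1+1)
              + ((n.choose (2*(j+1)+h') : ℕ) : ℚ) * Bq (j+1) h' := by
          intro j
          rw [Bq_rec j h']
          have e : 2*(j+1)+h' = 2*j+(h'+1+1) := by ring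
          rw [e]
          ring
        simp only [key2]
        rw [Finset.sum_add_distrib]
        have e3 : (∑ j ∈ range (n+1), ((n.choose (2*(j+1)+h') : ℕ) : ℚ) * Bq (j+1) h')
              + ((n.choose (2*0+h') : ℕ) : ℚ) * Bq 0 (h'+1)
            = ∑ j ∈ range (n+2), ((n.choose (2*j+h') : ℕ) : ℚ) * Bq j h' := by
          rw [Finset.sum_range_succ' (fun j => ((n.choose (2*j+h') : ℕ) : ℚ) * Bq j h') (n+1)]
          rw [Bq_zero, Bq_zero]
        rw [add_assoc, e3,
          Finset.sum_range_succ (fun j => ((n.choose (2*j+h') : ℕ) : ℚ) * Bq j h') (n+1)]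
        have : ((n.choose (2*(n+1)+h') : ℕ) : ℚ) = 0 := choose_cast_zero (by omega)
        rw [this]
        simp only [Nat.add_sub_cancel]
        ring
      rw [eG, eA]
      ring

/-- Paths from height `h` down to `0` in `n` steps. -/
def motzF : ℕ → ℕ → Finset (List ℤ)
  | 0, 0 => {([] : List ℤ)}
  | 0, _+1 => (∅ : Finset (List ℤ))
  | n+1, 0 => ((motzF n 1).image (List.cons 1)) ∪ ((motzF n 0).image (List.cons 0))
  | n+1, h+1 => ((motzF n (h+2)).image (List.cons 1)) ∪ ((motzF n (h+1)).image (List.cons 0))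
      ∪ ((motzF n h).image (List.cons (-1)))

def MP (n h : ℕ) (w : List ℤ) : Prop :=
  w.length = n ∧ (∀ s ∈ w, s = 1 ∨ s = -1 ∨ s = 0) ∧ (h : ℤ) + w.sum = 0 ∧
    ∀ i, 0 ≤ (h : ℤ) + (w.take i).sum

lemma MP_cons_of {n h h' : ℕ} {s : ℤ} {w : List ℤ} (hs : s = 1 ∨ s = -1 ∨ s = 0)
    (hh : (h : ℤ) + s = (h' : ℤ)) (hw : MP n h' w) : MP (n+1) h (s :: w) := by
  obtain ⟨hl, hst, hsum, hpre⟩ := hw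
  refine ⟨by simp [hl], ?_, ?_, ?_⟩
  · intro t ht
    rcases List.mem_cons.mp ht with rfl | ht
    · exact hs
    · exact hst t ht
  · simp only [List.sum_cons]
    linarith
  · intro i
    cases i with
    | zero => simpa using Int.natCast_nonneg h
    | succ i =>
        have := hpre i
        simp only [List.take_succ_cons, List.sum_cons]
        linarith

lemma MP_cons_dest {n h : ℕ} {s : ℤ} {w : List ℤ} (hw : MP (n+1) h (s :: w)) :
    (s = 1 ∨ s = -1 ∨ s = 0) ∧ (s = -1 → 1 ≤ h) ∧
      ∀ h' : ℕ, (h : ℤ) + s = (h' : ℤ) → MP n h' w := by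
  obtain ⟨hl, hst, hsum, hpre⟩ := hw
  have hs := hst s List.mem_cons_self
  have h1 : 0 ≤ (h : ℤ) + s := by
    have := hpre 1
    simpa using this
  refine ⟨hs, fun hneg => by omega, fun h' hh => ⟨?_, ?_, ?_, ?_⟩⟩
  · simpa using hl
  · intro t ht; exact hst t (List.mem_cons_of_mem _ ht)
  · simp only [List.sum_cons] at hsum; linarith
  · intro i
    have := hpre (i+1)
    simp only [List.take_succ_cons, List.sum_cons] at this
    linarith

lemma motzF_mem : ∀ (n h : ℕ) (w : List ℤ), w ∈ motzF n h ↔ MP n h w := by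
  intro n
  induction n with
  | zero =>
      intro h w
      cases h with
      | zero =>
          simp only [motzF, Finset.mem_singleton]
          constructor
          · rintro rfl
            exact ⟨rfl, by simp, by simp, by simp⟩
          · rintro ⟨hl, -, -, -⟩
            exact List.eq_nil_of_length_eq_zero hl
      | succ h =>
          simp only [motzF, Finset.notMem_empty, false_iff]
          rintro ⟨hl, -, hsum, -⟩
          rw [List.eq_nil_of_length_eq_zero hl] at hsum
          simp at hsum
          omega
  | succ n ih =>
      intro h w
      cases h with
      | zero =>
          simp only [motzF, Finset.mem_union, Finset.mem_image]
          constructor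
          · rintro (⟨a, ha, rfl⟩ | ⟨a, ha, rfl⟩)
            · exact MP_cons_of (Or.inl rfl) (by norm_num) ((ih 1 a).mp ha)
            · exact MP_cons_of (Or.inr (Or.inr rfl)) (by norm_num) ((ih 0 a).mp ha)
          · intro hw
            have hl := hw.1
            cases w with
            | nil => simp at hl
            | cons s w' =>
                obtain ⟨hs, hneg, hrest⟩ := MP_cons_dest hw
                rcases hs with rfl | rfl | rfl
                · exact Or.inl ⟨w', (ih 1 w').mpr (hrest 1 (by norm_num)), rfl⟩
                · exact absurd (hneg rfl) (by omega)
                · exact Or.inr ⟨w', (ih 0 w').mpr (hrest 0 (by norm_num)), rfl⟩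
      | succ h =>
          simp only [motzF, Finset.mem_union, Finset.mem_image]
          constructor
          · rintro ((⟨a, ha, rfl⟩ | ⟨a, ha, rfl⟩) | ⟨a, ha, rfl⟩)
            · exact MP_cons_of (Or.inl rfl) (by push_cast; ring) ((ih (h+2) a).mp ha)
            · exact MP_cons_of (Or.inr (Or.inr rfl)) (by push_cast; ring) ((ih (h+1) a).mp ha)
            · exact MP_cons_of (Or.inr (Or.inl rfl)) (by push_cast; ring) ((ih h a).mp ha)
          · intro hw
            have hl := hw.1
            cases w with
            | nil => simp at hl
            | cons s w' =>
                obtain ⟨hs, hneg, hrest⟩ := MP_cons_dest hw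
                rcases hs with rfl | rfl | rfl
                · exact Or.inl (Or.inl ⟨w', (ih (h+2) w').mpr (hrest (h+2) (by push_cast; ring)),
                    rfl⟩)
                · exact Or.inr ⟨w', (ih h w').mpr (hrest h (by push_cast; ring)), rfl⟩
                · exact Or.inl (Or.inr ⟨w', (ih (h+1) w').mpr (hrest (h+1) (by push_cast; ring)),
                    rfl⟩)

lemma disj_image_cons {a b : ℤ} (hab : a ≠ b) (s t : Finset (List ℤ)) :
    Disjoint (s.image (List.cons a)) (t.image (List.cons b)) := by
  rw [Finset.disjoint_left]
  rintro w hw hw'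
  simp only [Finset.mem_image] at hw hw'
  obtain ⟨x, -, rfl⟩ := hw
  obtain ⟨y, -, hy⟩ := hw'
  simp only [List.cons.injEq] at hy
  exact hab hy.1.symm

lemma motzF_card : ∀ (n h : ℕ), ((motzF n h).card : ℚ)
    = ∑ j ∈ range (n+1), ((n.choose (2*j+h) : ℕ) : ℚ) * Bq j h := by
  intro n
  induction n with
  | zero =>
      intro h
      cases h with
      | zero => simp [motzF, Bq_zero]
      | succ h =>
          rw [Finset.sum_range_one]
          have : (0 : ℕ).choose (2*0+(h+1)) = 0 := by
            apply Nat.choose_eq_zero_of_lt; omega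
          simp [motzF, this]
  | succ n ih =>
      intro h
      cases h with
      | zero =>
          have hcard : (motzF (n+1) 0).card = (motzF n 1).card + (motzF n 0).card := by
            show ((motzF n 1).image (List.cons 1) ∪ (motzF n 0).image (List.cons 0)).card = _
            rw [Finset.card_union_of_disjoint (disj_image_cons one_ne_zero _ _),
              Finset.card_image_of_injective _ List.cons_injective,
              Finset.card_image_of_injective _ List.cons_injective]
          rw [hcard]
          push_cast
          rw [ih 1, ih 0, sum_step n 0, if_pos rfl]
          norm_num
      | succ h =>
          have hcard : (motzF (n+1) (h+1)).card
              = (motzF n (h+2)).card + (motzF n (h+1)).card + (motzF n h).card := by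
            show (((motzF n (h+2)).image (List.cons 1) ∪ (motzF n (h+1)).image (List.cons 0))
                ∪ (motzF n h).image (List.cons (-1))).card = _
            rw [Finset.card_union_of_disjoint, Finset.card_union_of_disjoint
                (disj_image_cons one_ne_zero _ _),
              Finset.card_image_of_injective _ List.cons_injective,
              Finset.card_image_of_injective _ List.cons_injective,
              Finset.card_image_of_injective _ List.cons_injective]
            apply Finset.disjoint_union_left.mpr
            exact ⟨disj_image_cons (by norm_num) _ _, disj_image_cons (by norm_num) _ _⟩
          rw [hcard]
          push_cast
          rw [ih (h+2), ih (h+1), ih h, sum_step n (h+1), if_neg (by omega)]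
          simp only [Nat.add_sub_cancel]

/-- `|Mot(n;1)| = (1/(n+1)) Σ_{j=0}^n C(n+1, n-j) C(n-j, j)`. -/
theorem number_of_motzkin_paths (n : ℕ) :
    ({w : List ℤ | IsKMotzkinPath 1 n w}.ncard : ℚ)
      = (1 / (n + 1 : ℚ)) *
          ∑ j ∈ Finset.range (n + 1), ((n + 1).choose (n - j) : ℚ) * ((n - j).choose j : ℚ) := by
  have hset : {w : List ℤ | IsKMotzkinPath 1 n w} = ↑(motzF n 0) := by
    ext w
    simp only [Set.mem_setOf_eq, Finset.mem_coe, motzF_mem, MP, IsKMotzkinPath]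
    norm_num
  rw [hset, Set.ncard_coe_finset, motzF_card, Finset.mul_sum]
  refine Finset.sum_congr rfl ?_
  intro j hj
  have hjn : j ≤ n := Nat.lt_succ_iff.mp (Finset.mem_range.mp hj)
  have hnat : (n+1) * (n.choose (2*j) * ((2*j).choose j))
      = (j+1) * ((n+1).choose (n-j) * ((n-j).choose j)) := by
    by_cases h2 : 2*j ≤ n
    · have e1 : n.choose (2*j) * (2*j).choose j = n.choose j * (n-j).choose j := by
        have h := Nat.choose_mul (n := n) (k := 2*j) (s := j) (by omega)
        have e : 2*j - j = j := by omega
        rwa [e] at h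
      have e2 : (n+1) * n.choose j = (n+1).choose (j+1) * (j+1) := Nat.add_one_mul_choose_eq n j
      have e3 : (n+1).choose (n-j) = (n+1).choose (j+1) := by
        rw [← Nat.choose_symm (by omega : j+1 ≤ n+1)]
        congr 1
        omega
      rw [e1, e3, ← mul_assoc, e2]
      ring
    · have z1 : n.choose (2*j) = 0 := Nat.choose_eq_zero_of_lt (by omega)
      have z2 : (n-j).choose j = 0 := Nat.choose_eq_zero_of_lt (by omega)
      rw [z1, z2]
      ring
  have hq : ((n:ℚ)+1) * ((n.choose (2*j) : ℚ) * (((2*j).choose j : ℚ)))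
      = ((j:ℚ)+1) * (((n+1).choose (n-j) : ℚ) * (((n-j).choose j : ℚ))) := by
    exact_mod_cast hnat
  have hb := Bq_cat j
  have hn1 : ((n:ℚ)+1) ≠ 0 := by positivity
  have hj1 : ((j:ℚ)+1) ≠ 0 := by positivity
  have key2 : ((n.choose (2*j) : ℕ) : ℚ) * Bq j 0 * ((n:ℚ)+1)
      = ((n+1).choose (n-j) : ℚ) * ((n-j).choose j : ℚ) := by
    apply mul_right_cancel₀ hj1
    calc ((n.choose (2*j) : ℕ) : ℚ) * Bq j 0 * ((n:ℚ)+1) * ((j:ℚ)+1)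
        = ((n:ℚ)+1) * ((n.choose (2*j) : ℚ) * (((j:ℚ)+1) * Bq j 0)) := by ring
      _ = ((n:ℚ)+1) * ((n.choose (2*j) : ℚ) * (((2*j).choose j : ℚ))) := by rw [hb]
      _ = ((j:ℚ)+1) * (((n+1).choose (n-j) : ℚ) * (((n-j).choose j : ℚ))) := hq
      _ = ((n+1).choose (n-j) : ℚ) * ((n-j).choose j : ℚ) * ((j:ℚ)+1) := by ring
  rw [← key2]
  field_simp
  simp only [add_zero]; ring
end

section
/- The number of k-Motzkin paths of size n is |Mot(n;k)| = (1/(n+1)) Σ_{j=0}^{⌊n/k⌋} binomial(n+1, n−kj) binomial(n−kj, j). -/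
open Finset List
namespace KM


/-- The alphabet of step increments. -/
def alpha (k : ℕ) : Finset ℤ := {(k : ℤ), -1, 0}

/-- Finset of all words of length `l` over the alphabet. -/
def wordsF (k : ℕ) : ℕ → Finset (List ℤ)
  | 0 => {([] : List ℤ)}
  | (l + 1) => ((alpha k) ×ˢ wordsF k l).image fun p => p.1 :: p.2

lemma mem_wordsF {k l : ℕ} {w : List ℤ} :
    w ∈ wordsF k l ↔ w.length = l ∧ ∀ s ∈ w, s ∈ alpha k := by
  induction l generalizing w with
  | zero =>
    simp only [wordsF, Finset.mem_singleton]
    constructor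
    · rintro rfl; simp
    · rintro ⟨h, -⟩; exact List.length_eq_zero_iff.mp h
  | succ l ih =>
    simp only [wordsF, mem_image, Finset.mem_product, Prod.exists]
    constructor
    · rintro ⟨a, t, ⟨ha, ht⟩, rfl⟩
      obtain ⟨hlen, hall⟩ := ih.mp ht
      refine ⟨by simp [hlen], ?_⟩
      intro s hs
      rcases List.mem_cons.mp hs with rfl | hs
      · exact ha
      · exact hall s hs
    · rintro ⟨hlen, hall⟩
      cases w with
      | nil => simp at hlen
      | cons a t =>
        refine ⟨a, t, ⟨hall a (by simp), ih.mpr ⟨by simpa using hlen, fun s hs => hall s (by simp [hs])⟩⟩, rfl⟩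

/-- `good w` : all proper prefixes have nonnegative sum. -/
def good (w : List ℤ) : Prop := ∀ t, t < w.length → 0 ≤ (w.take t).sum

instance : DecidablePred good := fun w =>
  inferInstanceAs (Decidable (∀ t, t < w.length → 0 ≤ (w.take t).sum))

lemma card_filter_prod {α β : Type*} [DecidableEq α] [DecidableEq β]
    (A : Finset α) (s : Finset β) (Q : α → β → Prop) [∀ a t, Decidable (Q a t)] :
    ((A ×ˢ s).filter (fun p => Q p.1 p.2)).card = ∑ a ∈ A, (s.filter (Q a)).card := by
  rw [Finset.card_filter, Finset.sum_product]
  exact Finset.sum_congr rfl fun a _ => (Finset.card_filter _ _).symm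

lemma cons_inj : Function.Injective (fun p : ℤ × List ℤ => p.1 :: p.2) := by
  rintro ⟨a, t⟩ ⟨b, u⟩ h
  simp only [List.cons.injEq] at h
  simp [h.1, h.2]

/-- the Pascal-style identity needed in the main induction, case `a+1, b+1`. -/
lemma pascal_case (l a b : ℕ) :
    (l+1).choose (a+1) * (l - a).choose (b+1)
      = l.choose a * (l - a).choose (b+1)
        + (l.choose (a+1) * (l - (a+1)).choose b
            + l.choose (a+1) * (l - (a+1)).choose (b+1)) := by
  rcases le_or_gt (a+1) l with h | h
  · have h1 : l - a = (l - (a+1)) + 1 := by omega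
    rw [Nat.choose_succ_succ l a, Nat.add_mul, h1, Nat.choose_succ_succ (l - (a+1)) b]
    ring
  · have h2 : l.choose (a+1) = 0 := Nat.choose_eq_zero_of_lt h
    have h3 : (l+1).choose (a+1) = l.choose a := by
      rw [Nat.choose_succ_succ, h2]; omega
    rw [h2, h3]; ring

lemma count_card (k : ℕ) (hk : 1 ≤ k) : ∀ l a b : ℕ,
    ((wordsF k l).filter (fun w => w.count ((k : ℤ)) = a ∧ w.count (-1) = b)).card
      = l.choose a * (l - a).choose b := by
  have hx1 : ((k : ℤ)) ≠ -1 := by omega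
  have hx2 : ((k : ℤ)) ≠ 0 := by positivity
  have hx3 : ((-1 : ℤ)) ≠ 0 := by omega
  intro l
  induction l with
  | zero =>
    intro a b
    show (Finset.filter _ {([] : List ℤ)}).card = _
    rw [Finset.filter_singleton]
    rcases a with _ | a <;> rcases b with _ | b <;>
      simp [Nat.choose]
  | succ l ih =>
    intro a b
    show ((((alpha k) ×ˢ wordsF k l).image fun p => p.1 :: p.2).filter _).card = _
    rw [Finset.filter_image, Finset.card_image_of_injective _ cons_inj]
    rw [card_filter_prod (alpha k) (wordsF k l)
      (fun c t => (c :: t).count ((k:ℤ)) = a ∧ (c :: t).count (-1) = b)]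
    have halpha : alpha k = insert ((k:ℤ)) (insert (-1) ({0} : Finset ℤ)) := rfl
    rw [halpha, Finset.sum_insert (by simp [hx1, hx2]; omega), Finset.sum_insert (by simp [hx3]),
      Finset.sum_singleton]
    have c1 : ∀ t : List ℤ, ((k:ℤ) :: t).count ((k:ℤ)) = t.count ((k:ℤ)) + 1 := by
      intro t; simp [List.count_cons]
    have c2 : ∀ t : List ℤ, ((k:ℤ) :: t).count (-1) = t.count (-1) := by
      intro t; simp [List.count_cons, hx1]
    have c3 : ∀ t : List ℤ, ((-1:ℤ) :: t).count ((k:ℤ)) = t.count ((k:ℤ)) := by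
      intro t; simp [List.count_cons, hx1.symm]
    have c4 : ∀ t : List ℤ, ((-1:ℤ) :: t).count (-1) = t.count (-1) + 1 := by
      intro t; simp [List.count_cons]
    have c5 : ∀ t : List ℤ, ((0:ℤ) :: t).count ((k:ℤ)) = t.count ((k:ℤ)) := by
      intro t; simp [List.count_cons, hx2.symm]
    have c6 : ∀ t : List ℤ, ((0:ℤ) :: t).count (-1) = t.count (-1) := by
      intro t; simp [List.count_cons, hx3.symm]
    have Bx0 : ∀ b' : ℕ, ((wordsF k l).filter
        (fun t => ((k:ℤ) :: t).count ((k:ℤ)) = 0 ∧ ((k:ℤ) :: t).count (-1) = b')).card = 0 := by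
      intro b'
      rw [Finset.filter_false_of_mem, Finset.card_empty]
      intro t _
      rw [c1]
      omega
    have BxS : ∀ a' b' : ℕ, ((wordsF k l).filter
        (fun t => ((k:ℤ) :: t).count ((k:ℤ)) = a' + 1 ∧ ((k:ℤ) :: t).count (-1) = b')).card
        = l.choose a' * (l - a').choose b' := by
      intro a' b'
      have heq : (wordsF k l).filter
          (fun t => ((k:ℤ) :: t).count ((k:ℤ)) = a' + 1 ∧ ((k:ℤ) :: t).count (-1) = b')
          = (wordsF k l).filter (fun t => t.count ((k:ℤ)) = a' ∧ t.count (-1) = b') :=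
        Finset.filter_congr (fun t _ => by rw [c1, c2]; omega)
      rw [heq]
      exact ih a' b'
    have By0 : ∀ a' : ℕ, ((wordsF k l).filter
        (fun t => ((-1:ℤ) :: t).count ((k:ℤ)) = a' ∧ ((-1:ℤ) :: t).count (-1) = 0)).card = 0 := by
      intro a'
      rw [Finset.filter_false_of_mem, Finset.card_empty]
      intro t _
      rw [c4]
      omega
    have ByS : ∀ a' b' : ℕ, ((wordsF k l).filter
        (fun t => ((-1:ℤ) :: t).count ((k:ℤ)) = a' ∧ ((-1:ℤ) :: t).count (-1) = b' + 1)).card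
        = l.choose a' * (l - a').choose b' := by
      intro a' b'
      have heq : (wordsF k l).filter
          (fun t => ((-1:ℤ) :: t).count ((k:ℤ)) = a' ∧ ((-1:ℤ) :: t).count (-1) = b' + 1)
          = (wordsF k l).filter (fun t => t.count ((k:ℤ)) = a' ∧ t.count (-1) = b') :=
        Finset.filter_congr (fun t _ => by rw [c3, c4]; omega)
      rw [heq]
      exact ih a' b'
    have Bz : ∀ a' b' : ℕ, ((wordsF k l).filter
        (fun t => ((0:ℤ) :: t).count ((k:ℤ)) = a' ∧ ((0:ℤ) :: t).count (-1) = b')).card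
        = l.choose a' * (l - a').choose b' := by
      intro a' b'
      have heq : (wordsF k l).filter
          (fun t => ((0:ℤ) :: t).count ((k:ℤ)) = a' ∧ ((0:ℤ) :: t).count (-1) = b')
          = (wordsF k l).filter (fun t => t.count ((k:ℤ)) = a' ∧ t.count (-1) = b') :=
        Finset.filter_congr (fun t _ => by rw [c5, c6])
      rw [heq]
      exact ih a' b'
    rcases a with _ | a <;> rcases b with _ | b
    · rw [Bx0, By0, Bz]
      simp
    · rw [Bx0, ByS, Bz]
      simp only [Nat.choose_zero_right, one_mul, Nat.sub_zero]
      rw [Nat.choose_succ_succ l b]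
      simp only [Nat.succ_eq_add_one]
      omega
    · rw [BxS, By0, Bz]
      simp only [Nat.choose_zero_right, Nat.mul_one, Nat.succ_sub_succ]
      rw [Nat.choose_succ_succ l a]
      simp only [Nat.succ_eq_add_one]
      omega
    · rw [BxS, ByS, Bz]
      rw [Nat.succ_sub_succ]
      have := pascal_case l a b
      omega

def S (w : List ℤ) (t : ℕ) : ℤ := (w.take t).sum

/-- `p` is the first position in `[1, length]` where the prefix sum is minimal. -/
def FM (w : List ℤ) (p : ℕ) : Prop :=
  1 ≤ p ∧ p ≤ w.length ∧ (∀ q, 1 ≤ q → q ≤ w.length → S w p ≤ S w q) ∧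
    (∀ q, 1 ≤ q → q < p → S w p < S w q)

lemma S_of_le {w : List ℤ} {t : ℕ} (h : w.length ≤ t) : S w t = w.sum := by
  rw [S, List.take_of_length_le h]

lemma rot_sum (w : List ℤ) (i t : ℕ) (hi : i ≤ w.length) (ht : t ≤ w.length) :
    ((w.rotate i).take t).sum
      = if t ≤ w.length - i then S w (i + t) - S w i
        else w.sum - S w i + S w (t - (w.length - i)) := by
  rw [List.rotate_eq_drop_append_take hi, List.take_append, List.sum_append,
      List.length_drop]
  have h2 : (w.take i).sum + (w.drop i).sum = w.sum := by
    rw [← List.sum_append, List.take_append_drop]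
  split_ifs with h
  · have h0 : t - (w.length - i) = 0 := by omega
    rw [h0]
    have h3 : (w.take (i + t)).sum = (w.take i).sum + ((w.drop i).take t).sum := by
      rw [List.take_add, List.sum_append]
    simp only [List.take_zero, List.sum_nil, add_zero, S]
    omega
  · have h1 : (w.drop i).take t = w.drop i :=
      List.take_of_length_le (by rw [List.length_drop]; omega)
    rw [h1, List.take_take, min_eq_left (by omega)]
    simp only [S]
    omega

lemma good_rot_iff (w : List ℤ) (hw : w.sum = -1) {i : ℕ} (hi : i < w.length) :
    good (w.rotate i) ↔ FM w (if i = 0 then w.length else i) := by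
  have hm : 1 ≤ w.length := by omega
  have hSm : S w w.length = -1 := by rw [S_of_le le_rfl, hw]
  rcases Nat.eq_zero_or_pos i with rfl | hipos
  · rw [if_pos rfl, List.rotate_zero]
    constructor
    · intro hg
      refine ⟨hm, le_rfl, ?_, ?_⟩
      · intro q h1 hq
        rcases eq_or_lt_of_le hq with rfl | hq'
        · exact le_rfl
        · have := hg q hq'
          rw [hSm]; exact le_trans (by norm_num) this
      · intro q h1 hq
        have := hg q hq
        rw [hSm]; exact lt_of_lt_of_le (by norm_num) this
    · rintro ⟨-, -, -, hstrict⟩ t ht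
      rcases Nat.eq_zero_or_pos t with rfl | htpos
      · simp
      · have := hstrict t htpos ht
        rw [hSm] at this
        show (0:ℤ) ≤ S w t
        omega
  · rw [if_neg (by omega)]
    have hi' : i ≤ w.length := hi.le
    constructor
    · intro hg
      have hstrict : ∀ q, 1 ≤ q → q < i → S w i < S w q := by
        intro q h1 hq
        have ht : (w.length - i) + q < w.length := by omega
        have := hg ((w.length - i) + q) (by rw [List.length_rotate]; omega)
        rw [rot_sum w i _ hi' (by omega), if_neg (by omega)] at this
        have he : (w.length - i) + q - (w.length - i) = q := by omega
        rw [he, hw] at this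
        omega
      refine ⟨hipos, hi', ?_, hstrict⟩
      intro q h1 hq
      rcases lt_or_ge q i with hqi | hqi
      · exact (hstrict q h1 hqi).le
      · have := hg (q - i) (by rw [List.length_rotate]; omega)
        rw [rot_sum w i _ hi' (by omega), if_pos (by omega)] at this
        have he : i + (q - i) = q := by omega
        rw [he] at this
        omega
    · rintro ⟨-, -, hmin, hstrict⟩ t ht
      rw [List.length_rotate] at ht
      rw [rot_sum w i t hi' ht.le]
      split_ifs with h
      · have := hmin (i + t) (by omega) (by omega)
        omega
      · have := hstrict (t - (w.length - i)) (by omega) (by omega)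
        rw [hw]
        omega

lemma exists_unique_FM (w : List ℤ) (hm : 1 ≤ w.length) : ∃! p, FM w p := by
  obtain ⟨p, hp, hpmin⟩ := Finset.exists_min_image (Finset.Icc 1 w.length) (S w)
    ⟨1, by simp [hm]⟩
  set F : Finset ℕ := (Finset.Icc 1 w.length).filter (fun q => S w q = S w p) with hF
  have hpF : p ∈ F := by simp [hF, hp]
  have hFne : F.Nonempty := ⟨p, hpF⟩
  set p₀ := F.min' hFne with hp₀
  have hp₀F : p₀ ∈ F := F.min'_mem hFne
  simp only [hF, Finset.mem_filter, Finset.mem_Icc] at hp₀F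
  have hS₀ : S w p₀ = S w p := hp₀F.2
  have hFMp₀ : FM w p₀ := by
    refine ⟨hp₀F.1.1, hp₀F.1.2, ?_, ?_⟩
    · intro q h1 hq
      rw [hS₀]
      exact hpmin q (by simp [h1, hq])
    · intro q h1 hq
      have hle : S w p ≤ S w q := hpmin q (by simp only [Finset.mem_Icc]; omega)
      rcases eq_or_lt_of_le hle with heq | hlt
      · exfalso
        have hqF : q ∈ F := by
          simp only [hF, Finset.mem_filter, Finset.mem_Icc]
          exact ⟨⟨h1, by omega⟩, heq.symm⟩
        have := F.min'_le q hqF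
        omega
      · omega
  refine ⟨p₀, hFMp₀, ?_⟩
  intro p' hp'
  by_contra hne
  rcases lt_or_gt_of_ne hne with hlt | hlt
  · have h1 := hFMp₀.2.2.2 p' hp'.1 hlt
    have h2 := hp'.2.2.1 p₀ hFMp₀.1 hFMp₀.2.1
    omega
  · have h1 := hp'.2.2.2 p₀ hFMp₀.1 hlt
    have h2 := hFMp₀.2.2.1 p' hp'.1 hp'.2.1
    omega

lemma exists_unique_good_rot (w : List ℤ) (hw : w.sum = -1) (hm : 1 ≤ w.length) :
    ∃! i, i < w.length ∧ good (w.rotate i) := by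
  obtain ⟨p, hp, hup⟩ := exists_unique_FM w hm
  have hp1 : 1 ≤ p := hp.1
  have hpm : p ≤ w.length := hp.2.1
  refine ⟨if p = w.length then 0 else p, ?_, ?_⟩
  · split_ifs with h
    · refine ⟨by omega, ?_⟩
      rw [good_rot_iff w hw (by omega : 0 < w.length), if_pos rfl, ← h]
      exact hp
    · refine ⟨by omega, ?_⟩
      rw [good_rot_iff w hw (by omega : p < w.length), if_neg (by omega)]
      exact hp
  · rintro j ⟨hj, hjg⟩
    rw [good_rot_iff w hw hj] at hjg
    have := hup _ hjg
    split_ifs at this with h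
    · subst h
      split_ifs with h2
      · rfl
      · omega
    · split_ifs with h2
      · omega
      · omega


def Wst (k n : ℕ) : Finset (List ℤ) := (wordsF k (n+1)).filter (fun w => w.sum = -1)

def Gst (k n : ℕ) : Finset (List ℤ) := (Wst k n).filter good

lemma mem_W_length {k n : ℕ} {w : List ℤ} (h : w ∈ Wst k n) : w.length = n + 1 :=
  (mem_wordsF.mp (Finset.mem_filter.mp h).1).1

lemma mem_W_sum {k n : ℕ} {w : List ℤ} (h : w ∈ Wst k n) : w.sum = -1 :=
  (Finset.mem_filter.mp h).2

lemma rotate_mem_W {k n : ℕ} {w : List ℤ} (h : w ∈ Wst k n) (i : ℕ) :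
    w.rotate i ∈ Wst k n := by
  simp only [Wst, Finset.mem_filter, mem_wordsF] at *
  refine ⟨⟨by rw [List.length_rotate]; exact h.1.1,
    fun s hs => h.1.2 s (List.mem_rotate.mp hs)⟩, ?_⟩
  rw [(List.rotate_perm w i).sum_eq, h.2]

lemma card_W_eq_mul (k n : ℕ) : (Wst k n).card = (n + 1) * (Gst k n).card := by
  classical
  set T := ((Wst k n) ×ˢ Finset.range (n+1)).filter (fun p => good (p.1.rotate p.2)) with hT
  have hT1 : T.card = (Wst k n).card := by
    rw [hT, card_filter_prod (Wst k n) (Finset.range (n+1)) (fun w i => good (w.rotate i))]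
    rw [Finset.card_eq_sum_ones (Wst k n)]
    refine Finset.sum_congr rfl fun w hw => ?_
    have hlen : w.length = n + 1 := mem_W_length hw
    obtain ⟨i₀, ⟨hi₀, hg₀⟩, huniq⟩ :=
      exists_unique_good_rot w (mem_W_sum hw) (by omega)
    rw [Finset.card_eq_one]
    refine ⟨i₀, ?_⟩
    ext j
    simp only [Finset.mem_filter, Finset.mem_range, Finset.mem_singleton]
    constructor
    · rintro ⟨hj1, hj2⟩
      exact huniq j ⟨by omega, hj2⟩
    · rintro rfl
      exact ⟨by omega, hg₀⟩
  have hT2 : T.card = (Gst k n).card * (n + 1) := by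
    rw [← Finset.card_range (n+1), ← Finset.card_product]
    apply Finset.card_bij (fun p _ => (p.1.rotate p.2, p.2))
    · rintro ⟨w, i⟩ hp
      simp only [hT, Finset.mem_filter, Finset.mem_product] at hp
      simp only [Finset.mem_product]
      exact ⟨Finset.mem_filter.mpr ⟨rotate_mem_W hp.1.1 i, hp.2⟩, hp.1.2⟩
    · rintro ⟨w, i⟩ hp ⟨w', i'⟩ hp' heq
      simp only [Prod.mk.injEq] at heq
      obtain ⟨h1, rfl⟩ := heq
      have := List.rotate_injective i h1
      simp [this]
    · rintro ⟨g, i⟩ hgi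
      simp only [Finset.mem_product, Finset.mem_range] at hgi
      obtain ⟨hg, hi⟩ := hgi
      have hgW : g ∈ Wst k n := (Finset.mem_filter.mp hg).1
      have hglen : g.length = n + 1 := mem_W_length hgW
      have hrot : (g.rotate (n + 1 - i)).rotate i = g := by
        rw [List.rotate_rotate]
        have : n + 1 - i + i = n + 1 := by omega
        rw [this, ← hglen, List.rotate_length]
      refine ⟨(g.rotate (n + 1 - i), i), ?_, ?_⟩
      · simp only [hT, Finset.mem_filter, Finset.mem_product, Finset.mem_range]
        refine ⟨⟨rotate_mem_W hgW _, hi⟩, ?_⟩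
        rw [hrot]
        exact (Finset.mem_filter.mp hg).2
      · simp [hrot]
  rw [← hT1, hT2, Nat.mul_comm]

lemma sum_eq_counts (k : ℕ) (hk : 1 ≤ k) (w : List ℤ) (h : ∀ s ∈ w, s ∈ alpha k) :
    w.sum = (k : ℤ) * w.count ((k : ℤ)) - w.count (-1) := by
  have hx1 : ((k : ℤ)) ≠ -1 := by omega
  have hx2 : ((k : ℤ)) ≠ 0 := by positivity
  induction w with
  | nil => simp
  | cons a t ih =>
    have ha : a = (k:ℤ) ∨ a = -1 ∨ a = 0 := by
      have := h a List.mem_cons_self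
      simpa [alpha] using this
    have ht := ih (fun s hs => h s (List.mem_cons_of_mem _ hs))
    rcases ha with rfl | rfl | rfl
    · rw [List.sum_cons, ht]
      simp only [List.count_cons, if_pos, beq_self_eq_true, if_true]
      rw [if_neg (by simpa using hx1)]
      push_cast
      ring
    · rw [List.sum_cons, ht]
      simp only [List.count_cons, beq_self_eq_true, if_true]
      rw [if_neg (by simpa using (hx1.symm : (-1:ℤ) ≠ (k:ℤ)))]
      push_cast
      ring
    · rw [List.sum_cons, ht]
      rw [List.count_cons, List.count_cons, if_neg (by simpa using (hx2.symm : (0:ℤ) ≠ (k:ℤ))),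
        if_neg (by simp)]
      push_cast
      ring

lemma card_Wst (k n : ℕ) (hk : 1 ≤ k) :
    (Wst k n).card
      = ∑ j ∈ Finset.range (n / k + 1), (n+1).choose j * ((n+1) - j).choose (k*j+1) := by
  classical
  have hmem : ∀ w ∈ Wst k n, w.count ((k:ℤ)) ∈ Finset.range (n / k + 1) := by
    intro w hw
    have hlen : w.length = n + 1 := mem_W_length hw
    have hsum : w.sum = -1 := mem_W_sum hw
    have halpha : ∀ s ∈ w, s ∈ alpha k := (mem_wordsF.mp (Finset.mem_filter.mp hw).1).2
    have heq := sum_eq_counts k hk w halpha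
    have hd : w.count (-1) ≤ n + 1 := hlen ▸ List.count_le_length
    have hkc : k * w.count ((k:ℤ)) + 1 = w.count (-1) := by
      have : ((k * w.count ((k:ℤ)) + 1 : ℕ) : ℤ) = (w.count (-1) : ℤ) := by
        push_cast
        rw [hsum] at heq
        linarith
      exact_mod_cast this
    have hkn : k * w.count ((k:ℤ)) ≤ n := by
      generalize hK : k * w.count ((k:ℤ)) = K at hkc
      omega
    rw [Finset.mem_range]
    have hkn' : w.count ((k:ℤ)) * k ≤ n := by rw [Nat.mul_comm]; exact hkn
    have := (Nat.le_div_iff_mul_le (by omega : 0 < k)).mpr hkn'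
    omega
  rw [Finset.card_eq_sum_card_fiberwise hmem]
  refine Finset.sum_congr rfl fun j hj => ?_
  have hfib : (Wst k n).filter (fun w => w.count ((k:ℤ)) = j)
      = (wordsF k (n+1)).filter (fun w => w.count ((k:ℤ)) = j ∧ w.count (-1) = k*j+1) := by
    ext w
    simp only [Wst, Finset.mem_filter, and_assoc]
    constructor
    · rintro ⟨hmem', hsum, hcount⟩
      refine ⟨hmem', hcount, ?_⟩
      have halpha : ∀ s ∈ w, s ∈ alpha k := (mem_wordsF.mp hmem').2
      have heq := sum_eq_counts k hk w halpha
      rw [hsum, hcount] at heq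
      have : ((k * j + 1 : ℕ) : ℤ) = (w.count (-1) : ℤ) := by
        push_cast
        linarith
      exact_mod_cast this.symm
    · rintro ⟨hmem', hcount, hcount'⟩
      refine ⟨hmem', ?_, hcount⟩
      have halpha : ∀ s ∈ w, s ∈ alpha k := (mem_wordsF.mp hmem').2
      have heq := sum_eq_counts k hk w halpha
      rw [hcount, hcount'] at heq
      rw [heq]
      push_cast
      ring
  rw [hfib, count_card k hk (n+1) j (k*j+1)]

lemma choose_id' (n j c : ℕ) (hc : c ≤ n) :
    (n+1).choose j * ((n+1) - j).choose (c+1)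
      = (n+1).choose (n - c) * (n - c).choose j := by
  have e3 : (n+1).choose (n - c) = (n+1).choose (c+1) := by
    have := Nat.choose_symm (n := n + 1) (k := c + 1) (by omega)
    rwa [Nat.succ_sub_succ] at this
  rw [e3]
  rcases le_or_gt (c + 1 + j) (n + 1) with h | h
  · set K := c + 1 + j with hK
    have e1 := Nat.choose_mul (n := n+1) (k := K) (s := j) (by omega)
    have e2 := Nat.choose_mul (n := n+1) (k := K) (s := c+1) (by omega)
    have hKj : K - j = c + 1 := by omega
    have hKc : K - (c+1) = j := by omega
    have hnc : (n+1) - (c+1) = n - c := Nat.succ_sub_succ n c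
    rw [hKj] at e1
    rw [hKc, hnc] at e2
    have esymm : K.choose j = K.choose (c+1) := by
      have := Nat.choose_symm (n := K) (k := j) (by omega)
      rw [hKj] at this
      exact this.symm
    rw [← e1, esymm, e2]
  · have z1 : ((n+1) - j).choose (c+1) = 0 := Nat.choose_eq_zero_of_lt (by omega)
    have z2 : (n - c).choose j = 0 := Nat.choose_eq_zero_of_lt (by omega)
    rw [z1, z2, Nat.mul_zero, Nat.mul_zero]

def Mst (k n : ℕ) : Finset (List ℤ) :=
  (wordsF k n).filter (fun w => w.sum = 0 ∧ good w)

lemma card_M_eq_G (k n : ℕ) (hk : 1 ≤ k) : (Mst k n).card = (Gst k n).card := by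
  classical
  apply Finset.card_bij (fun w _ => w ++ [(-1 : ℤ)])
  · intro w hw
    simp only [Mst, Finset.mem_filter, mem_wordsF] at hw
    obtain ⟨⟨hlen, hlet⟩, hsum, hgood⟩ := hw
    simp only [Gst, Wst, Finset.mem_filter, mem_wordsF]
    refine ⟨⟨⟨by simp [hlen], ?_⟩, by simp [hsum]⟩, ?_⟩
    · intro s hs
      rcases List.mem_append.mp hs with hs | hs
      · exact hlet s hs
      · simp only [List.mem_singleton] at hs
        subst hs
        simp [alpha]
    · intro t ht
      simp only [List.length_append, List.length_singleton, hlen] at ht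
      have htn : t ≤ n := by omega
      rw [List.take_append_of_le_length (by omega : t ≤ w.length)]
      rcases eq_or_lt_of_le htn with rfl | htn'
      · rw [List.take_of_length_le (by omega), hsum]
      · exact hgood t (by omega)
  · intro w hw w' hw' heq
    exact List.append_left_injective _ heq
  · intro g hg
    simp only [Gst, Wst, Finset.mem_filter, mem_wordsF] at hg
    obtain ⟨⟨⟨hlen, hlet⟩, hsum⟩, hgood⟩ := hg
    have hdrop : (g.drop n).length = 1 := by rw [List.length_drop, hlen]; omega
    obtain ⟨x, hx⟩ := List.length_eq_one_iff.mp hdrop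
    have hsplit : g.take n ++ [x] = g := by rw [← hx, List.take_append_drop]
    have htsum : 0 ≤ (g.take n).sum := hgood n (by omega)
    have hsum' : (g.take n).sum + x = -1 := by
      have := congrArg List.sum hsplit
      simp only [List.sum_append, List.sum_cons, List.sum_nil, add_zero] at this
      omega
    have hxg : x ∈ g := by
      have : x ∈ g.drop n := by rw [hx]; simp
      exact List.drop_subset n g this
    have hxa : x = (k:ℤ) ∨ x = -1 ∨ x = 0 := by simpa [alpha] using hlet x hxg
    have hxm : x = -1 := by rcases hxa with rfl | rfl | rfl <;> omega
    subst hxm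
    have hts : (g.take n).sum = 0 := by omega
    refine ⟨g.take n, ?_, hsplit⟩
    simp only [Mst, Finset.mem_filter, mem_wordsF]
    refine ⟨⟨by rw [List.length_take, hlen]; omega, fun s hs => hlet s (List.take_subset n g hs)⟩,
      hts, ?_⟩
    intro t ht
    rw [List.length_take, hlen] at ht
    rw [List.take_take, min_eq_left (by omega)]
    exact hgood t (by omega)

end KM

namespace KM

lemma set_eq (k n : ℕ) : {w : List ℤ | IsKMotzkinPath k n w} = ↑(Mst k n) := by
  ext w
  simp only [Set.mem_setOf_eq, IsKMotzkinPath, Finset.coe_filter, Mst, Set.mem_setOf_eq,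
    Finset.mem_coe, Finset.mem_filter, mem_wordsF]
  constructor
  · rintro ⟨hlen, hlet, hsum, hpref⟩
    refine ⟨⟨hlen, fun s hs => ?_⟩, hsum, fun t _ => hpref t⟩
    simp only [alpha, Finset.mem_insert, Finset.mem_singleton]
    exact hlet s hs
  · rintro ⟨⟨hlen, hlet⟩, hsum, hgood⟩
    refine ⟨hlen, fun s hs => ?_, hsum, ?_⟩
    · have := hlet s hs
      simpa [alpha] using this
    · intro i
      rcases lt_or_ge i w.length with hi | hi
      · exact hgood i hi
      · rw [List.take_of_length_le hi, hsum]

lemma main_nat (k n : ℕ) (hk : 1 ≤ k) :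
    (n + 1) * (Mst k n).card
      = ∑ j ∈ Finset.range (n / k + 1), (n + 1).choose (n - k * j) * ((n - k * j).choose j) := by
  rw [card_M_eq_G k n hk, ← card_W_eq_mul k n, card_Wst k n hk]
  refine Finset.sum_congr rfl fun j hj => ?_
  have hjn : j ≤ n / k := by have := Finset.mem_range.mp hj; omega
  have hc : k * j ≤ n :=
    le_trans (Nat.mul_le_mul_left k hjn) (Nat.mul_div_le n k)
  exact choose_id' n j (k * j) hc

end KM

/-- `|Mot(n;k)| = (1/(n+1)) Σ_{j=0}^{⌊n/k⌋} C(n+1, n-kj) C(n-kj, j)`. -/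
theorem number_of_kMotzkin_paths (k n : ℕ) (hk : 1 ≤ k) :
    ({w : List ℤ | IsKMotzkinPath k n w}.ncard : ℚ)
      = (1 / (n + 1 : ℚ)) *
          ∑ j ∈ Finset.range (n / k + 1),
            ((n + 1).choose (n - k * j) : ℚ) * ((n - k * j).choose j : ℚ) := by
  have h1 : {w : List ℤ | IsKMotzkinPath k n w}.ncard = (KM.Mst k n).card := by
    rw [KM.set_eq]
    exact Set.ncard_coe_finset _
  have h5 := KM.main_nat k n hk
  have h5Q : ((n : ℚ) + 1) * ((KM.Mst k n).card : ℚ)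
      = ∑ j ∈ Finset.range (n / k + 1),
          ((n + 1).choose (n - k * j) : ℚ) * ((n - k * j).choose j : ℚ) := by
    exact_mod_cast congrArg (Nat.cast : ℕ → ℚ) h5
  have hne : ((n : ℚ) + 1) ≠ 0 := by positivity
  rw [h1, ← h5Q]
  field_simp
end

section
/- The n-th large Schröder number satisfies |Sch(n)| = (1/n) Σ_{j=0}^{n} binomial(n,j) binomial(n+j, n−1) for n ≥ 1. -/
/-- A `k`-Schröder path of type B of size `n`; for `k = 1` these are the ordinary
Schröder paths, with steps `U = (0,1)`, `D = (1,0)`, `H = (1,1)`. -/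
def IsKSchroederB (k n : ℕ) (w : List (ℕ × ℕ)) : Prop :=
  (∀ s ∈ w, s = (0, 1) ∨ s = (1, 0) ∨ s = (1, 1)) ∧
  (w.map Prod.fst).sum = k * n ∧ (w.map Prod.snd).sum = n ∧
  ∀ i, ((w.take i).map Prod.fst).sum ≤ k * ((w.take i).map Prod.snd).sum

open List DyckStep

namespace SchroederAux

/-- Is the step a diagonal (H) step? -/
def isH (s : ℕ × ℕ) : Bool := s = (1, 1)

lemma isH_true {x : ℕ × ℕ} (h : x = (1, 1)) : isH x = true := decide_eq_true h
lemma isH_false {x : ℕ × ℕ} (h : x ≠ (1, 1)) : isH x = false := decide_eq_false h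
lemma eq_of_isH {x : ℕ × ℕ} (h : isH x = true) : x = (1, 1) := of_decide_eq_true h

/-- Interleave H steps (at `true` mask positions) with a core list. -/
def riffle : List Bool → List (ℕ × ℕ) → List (ℕ × ℕ)
  | [], c => c
  | true :: m, c => (1, 1) :: riffle m c
  | false :: _, [] => []
  | false :: m, x :: c => x :: riffle m c

lemma riffle_self (w : List (ℕ × ℕ)) :
    riffle (w.map isH) (w.filter fun s => !isH s) = w := by
  induction w with
  | nil => rfl
  | cons x t ih =>
    by_cases h : x = (1, 1)
    · have hx : isH x = true := isH_true h
      simp only [map_cons, filter_cons, hx]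
      subst h
      simpa [riffle] using ih
    · have hx : isH x = false := isH_false h
      simp only [map_cons, filter_cons, hx]
      simpa [riffle] using ih

lemma mem_riffle {x : ℕ × ℕ} : ∀ {m : List Bool} {c : List (ℕ × ℕ)},
    x ∈ riffle m c → x = (1, 1) ∨ x ∈ c
  | [], c, h => Or.inr h
  | true :: m, c, h => by
    rcases (by simpa [riffle] using h : x = (1,1) ∨ x ∈ riffle m c) with h | h
    · exact Or.inl h
    · exact mem_riffle h
  | false :: m, [], h => by simp [riffle] at h
  | false :: m, y :: c, h => by
    rcases (by simpa [riffle] using h : x = y ∨ x ∈ riffle m c) with h | h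
    · exact Or.inr (by simp [h])
    · rcases mem_riffle h with h | h
      · exact Or.inl h
      · exact Or.inr (mem_cons_of_mem _ h)

lemma riffle_map_isH : ∀ (m : List Bool) (c : List (ℕ × ℕ)),
    m.count false = c.length → (∀ x ∈ c, isH x = false) →
    (riffle m c).map isH = m
  | [], c, hlen, hc => by
    have : c = [] := by simpa using (length_eq_zero_iff.mp (by simpa using hlen.symm))
    simp [riffle, this]
  | true :: m, c, hlen, hc => by
    simp only [riffle, map_cons]
    rw [riffle_map_isH m c (by simpa using hlen) hc]
    simp [isH]
  | false :: m, [], hlen, hc => by simp [count_cons] at hlen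
  | false :: m, x :: c, hlen, hc => by
    simp only [riffle, map_cons]
    rw [riffle_map_isH m c (by simpa [count_cons] using hlen)
      (fun y hy => hc y (mem_cons_of_mem _ hy))]
    simp [hc x (mem_cons_self)]

lemma riffle_filter : ∀ (m : List Bool) (c : List (ℕ × ℕ)),
    m.count false = c.length → (∀ x ∈ c, isH x = false) →
    (riffle m c).filter (fun s => !isH s) = c
  | [], c, hlen, hc => by
    show c.filter _ = c
    exact filter_eq_self.mpr (fun x hx => by rw [hc x hx]; rfl)
  | true :: m, c, hlen, hc => by
    simp only [riffle, filter_cons]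
    rw [riffle_filter m c (by simpa using hlen) hc]
    simp [isH]
  | false :: m, [], hlen, hc => by simp [count_cons] at hlen
  | false :: m, x :: c, hlen, hc => by
    simp only [riffle, filter_cons]
    rw [riffle_filter m c (by simpa [count_cons] using hlen)
      (fun y hy => hc y (mem_cons_of_mem _ hy))]
    simp [hc x (mem_cons_self)]

lemma riffle_length : ∀ (m : List Bool) (c : List (ℕ × ℕ)),
    m.count false = c.length → (riffle m c).length = m.length
  | [], c, hlen => by
    simp [riffle, ← hlen]
  | true :: m, c, hlen => by
    simp [riffle, riffle_length m c (by simpa using hlen)]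
  | false :: m, [], hlen => by simp [count_cons] at hlen
  | false :: m, x :: c, hlen => by
    simp [riffle, riffle_length m c (by simpa [count_cons] using hlen)]

lemma bool_count (m : List Bool) : m.count true + m.count false = m.length := by
  induction m with
  | nil => simp
  | cons b t ih => cases b <;> simp [count_cons] <;> omega


/-- Convert a Dyck step to a lattice step. -/
def stepOf : DyckStep → ℕ × ℕ
  | U => (0, 1)
  | D => (1, 0)

lemma stepOf_injective : Function.Injective stepOf := by
  intro a b h
  cases a <;> cases b <;> simp [stepOf] at h ⊢

lemma isH_stepOf (s : DyckStep) : isH (stepOf s) = false := by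
  cases s <;> rfl

lemma sum_fst_dyck (l : List DyckStep) :
    ((l.map stepOf).map Prod.fst).sum = l.count D := by
  induction l with
  | nil => simp
  | cons s t ih => cases s <;> simp [stepOf, count_cons, map_map] at ih ⊢ <;> omega

lemma sum_snd_dyck (l : List DyckStep) :
    ((l.map stepOf).map Prod.snd).sum = l.count U := by
  induction l with
  | nil => simp
  | cons s t ih => cases s <;> simp [stepOf, count_cons, map_map] at ih ⊢ <;> omega

lemma countP_isH (w : List (ℕ × ℕ)) : w.countP isH = w.count (1, 1) := by
  induction w with
  | nil => rfl
  | cons x t ih =>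
    by_cases h : x = (1, 1)
    · rw [countP_cons_of_pos (isH_true h), ih, h, count_cons_self]
    · rw [countP_cons_of_neg (by simp [isH_false h]), ih,
        count_cons_of_ne h]

/-- Splitting prefix sums along the H-filter. -/
lemma sum_fst_filter (u : List (ℕ × ℕ)) :
    (u.map Prod.fst).sum
      = (((u.filter fun s => !isH s).map Prod.fst)).sum + u.countP isH := by
  induction u with
  | nil => simp
  | cons x t ih =>
    by_cases h : x = (1, 1)
    · rw [filter_cons_of_neg (by simp [isH_true h]), countP_cons_of_pos (isH_true h)]
      subst h; simp [ih]; omega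
    · rw [filter_cons_of_pos (by simp [isH_false h]), countP_cons_of_neg (by simp [isH_false h])]
      simp [ih]; omega

lemma sum_snd_filter (u : List (ℕ × ℕ)) :
    (u.map Prod.snd).sum
      = (((u.filter fun s => !isH s).map Prod.snd)).sum + u.countP isH := by
  induction u with
  | nil => simp
  | cons x t ih =>
    by_cases h : x = (1, 1)
    · rw [filter_cons_of_neg (by simp [isH_true h]), countP_cons_of_pos (isH_true h)]
      subst h; simp [ih]; omega
    · rw [filter_cons_of_pos (by simp [isH_false h]), countP_cons_of_neg (by simp [isH_false h])]
      simp [ih]; omega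

lemma sum_fst_eq (w : List (ℕ × ℕ))
    (hw : ∀ s ∈ w, s = (0, 1) ∨ s = (1, 0) ∨ s = (1, 1)) :
    (w.map Prod.fst).sum = w.count (1, 0) + w.count (1, 1) := by
  induction w with
  | nil => simp
  | cons x t ih =>
    have hx := hw x (mem_cons_self)
    have ht := fun s hs => hw s (mem_cons_of_mem _ hs)
    rcases hx with h | h | h <;> subst h <;>
      simp [count_cons, ih ht] <;> omega

lemma sum_snd_eq (w : List (ℕ × ℕ))
    (hw : ∀ s ∈ w, s = (0, 1) ∨ s = (1, 0) ∨ s = (1, 1)) :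
    (w.map Prod.snd).sum = w.count (0, 1) + w.count (1, 1) := by
  induction w with
  | nil => simp
  | cons x t ih =>
    have hx := hw x (mem_cons_self)
    have ht := fun s hs => hw s (mem_cons_of_mem _ hs)
    rcases hx with h | h | h <;> subst h <;>
      simp [count_cons, ih ht] <;> omega

lemma length_eq_counts (w : List (ℕ × ℕ))
    (hw : ∀ s ∈ w, s = (0, 1) ∨ s = (1, 0) ∨ s = (1, 1)) :
    w.length = w.count (0, 1) + w.count (1, 0) + w.count (1, 1) := by
  induction w with
  | nil => simp
  | cons x t ih =>
    have hx := hw x (mem_cons_self)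
    have ht := fun s hs => hw s (mem_cons_of_mem _ hs)
    rcases hx with h | h | h <;> subst h <;>
      simp [count_cons, ih ht] <;> omega

lemma filter_take_exists (p : α → Bool) (w : List α) :
    ∀ i, ∃ j, (w.take j).filter p = (w.filter p).take i := by
  induction w with
  | nil => intro i; exact ⟨0, by simp⟩
  | cons x t ih =>
    intro i
    cases i with
    | zero => exact ⟨0, by simp⟩
    | succ i =>
      by_cases h : p x
      · obtain ⟨j, hj⟩ := ih i
        exact ⟨j + 1, by simp [filter_cons_of_pos h, hj]⟩
      · obtain ⟨j, hj⟩ := ih (i + 1)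
        exact ⟨j + 1, by simp [filter_cons_of_neg h, hj]⟩


instance finite_boolLists (L j : ℕ) :
    Finite {m : List Bool // m.length = L ∧ m.count true = j} := by
  have : Finite {l : List Bool // l.length = L} := (List.finite_length_eq (α := Bool) (n := L)).to_subtype
  exact Finite.of_injective
    (fun m => (⟨m.1, m.2.1⟩ : {l : List Bool // l.length = L}))
    (fun a b h => by simpa [Subtype.ext_iff] using h)

lemma card_bool_lists (L : ℕ) : ∀ j,
    Nat.card {m : List Bool // m.length = L ∧ m.count true = j} = L.choose j := by
  induction L with
  | zero =>
    intro j
    cases j with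
    | zero =>
      haveI : Unique {m : List Bool // m.length = 0 ∧ m.count true = 0} :=
        ⟨⟨⟨[], by simp⟩⟩, by
          rintro ⟨m, h1, h2⟩
          ext1
          simpa using length_eq_zero_iff.mp h1⟩
      exact Nat.card_unique
    | succ j =>
      haveI : IsEmpty {m : List Bool // m.length = 0 ∧ m.count true = j + 1} :=
        ⟨by rintro ⟨m, h1, h2⟩; rw [length_eq_zero_iff.mp h1] at h2; simp at h2⟩
      exact Nat.card_of_isEmpty
  | succ L ih =>
    intro j
    cases j with
    | zero =>
      have hb : Function.Bijective
          (fun m : {m : List Bool // m.length = L ∧ m.count true = 0} =>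
            (⟨false :: m.1, by simp [m.2.1, m.2.2]⟩ :
              {m : List Bool // m.length = L + 1 ∧ m.count true = 0})) := by
        constructor
        · rintro ⟨a, ha⟩ ⟨b, hb⟩ h
          simpa [Subtype.ext_iff] using h
        · rintro ⟨m, h1, h2⟩
          cases m with
          | nil => simp at h1
          | cons b t =>
            cases b with
            | true => simp [count_cons] at h2
            | false =>
              exact ⟨⟨t, by simpa using h1, by simpa [count_cons] using h2⟩, rfl⟩
      rw [← Nat.card_eq_of_bijective _ hb, ih 0]
      simp
    | succ j =>
      have hb : Function.Bijective
          (fun m : {m : List Bool // m.length = L ∧ m.count true = j} ⊕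
              {m : List Bool // m.length = L ∧ m.count true = j + 1} =>
            (match m with
              | .inl m => ⟨true :: m.1, by simp [m.2.1, m.2.2]⟩
              | .inr m => ⟨false :: m.1, by simp [m.2.1, m.2.2]⟩ :
              {m : List Bool // m.length = L + 1 ∧ m.count true = j + 1})) := by
        constructor
        · rintro (⟨a, ha⟩ | ⟨a, ha⟩) (⟨b, hb⟩ | ⟨b, hb⟩) h <;>
            simp_all [Subtype.ext_iff]
        · rintro ⟨m, h1, h2⟩
          cases m with
          | nil => simp at h1
          | cons b t =>
            cases b with
            | true =>
              exact ⟨.inl ⟨t, by simpa using h1, by simpa [count_cons] using h2⟩, rfl⟩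
            | false =>
              exact ⟨.inr ⟨t, by simpa using h1, by simpa [count_cons] using h2⟩, rfl⟩
      rw [← Nat.card_eq_of_bijective _ hb, Nat.card_sum, ih j, ih (j + 1),
        Nat.choose_succ_succ]


def toStep (s : ℕ × ℕ) : DyckStep := if s = (0, 1) then U else D

lemma count_true_map_isH (w : List (ℕ × ℕ)) : (w.map isH).count true = w.countP isH := by
  induction w with
  | nil => rfl
  | cons x t ih =>
    by_cases h : x = (1, 1)
    · simp [count_cons, countP_cons, isH_true h, ih]
    · simp [count_cons, countP_cons, isH_false h, ih]

/-- The parameter space: number of `U` steps, a Dyck word, and an H-mask. -/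
abbrev SchT (n : ℕ) := Σ k : Fin (n + 1),
  {d : DyckWord // d.semilength = (k : ℕ)} ×
  {m : List Bool // m.length = n + (k : ℕ) ∧ m.count true = n - (k : ℕ)}

def toWord (n : ℕ) (x : SchT n) : List (ℕ × ℕ) :=
  riffle x.2.2.1 (x.2.1.1.toList.map stepOf)

lemma isH_core (d : DyckWord) : ∀ s ∈ d.toList.map stepOf, isH s = false := by
  intro s hs
  obtain ⟨a, -, rfl⟩ := mem_map.mp hs
  exact isH_stepOf a

lemma count_false_core (n : ℕ) (x : SchT n) :
    x.2.2.1.count false = (x.2.1.1.toList.map stepOf).length := by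
  have h1 := bool_count x.2.2.1
  have h2 := x.2.2.2.1
  have h3 := x.2.2.2.2
  have h4 : (x.1 : ℕ) ≤ n := Nat.lt_succ_iff.mp x.1.2
  have h5 := x.2.1.1.two_mul_semilength_eq_length
  rw [length_map, ← h5, x.2.1.2]
  omega

lemma toWord_spec (n : ℕ) (x : SchT n) : IsKSchroederB 1 n (toWord n x) := by
  obtain ⟨k, ⟨d, hd⟩, ⟨m, hm1, hm2⟩⟩ := x
  have hk : (k : ℕ) ≤ n := Nat.lt_succ_iff.mp k.2
  set c : List (ℕ × ℕ) := d.toList.map stepOf with hc_def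
  have hlen : m.count false = c.length := count_false_core n ⟨k, ⟨d, hd⟩, ⟨m, hm1, hm2⟩⟩
  have hcH : ∀ s ∈ c, isH s = false := isH_core d
  set w : List (ℕ × ℕ) := riffle m c with hw_def
  show IsKSchroederB 1 n w
  have hfil : w.filter (fun s => !isH s) = c := riffle_filter m c hlen hcH
  have hmask : w.map isH = m := riffle_map_isH m c hlen hcH
  have hcntH : w.countP isH = n - (k : ℕ) := by
    rw [← count_true_map_isH, hmask, hm2]
  have hsumc_fst : (c.map Prod.fst).sum = (k : ℕ) := by
    rw [hc_def, sum_fst_dyck, ← DyckWord.semilength_eq_count_D, hd]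
  have hsumc_snd : (c.map Prod.snd).sum = (k : ℕ) := by
    rw [hc_def, sum_snd_dyck]
    exact hd
  refine ⟨?_, ?_, ?_, ?_⟩
  · intro s hs
    rcases mem_riffle hs with h | h
    · exact Or.inr (Or.inr h)
    · obtain ⟨a, -, rfl⟩ := mem_map.mp h
      cases a
      · exact Or.inl rfl
      · exact Or.inr (Or.inl rfl)
  · rw [one_mul, sum_fst_filter w, hfil, hcntH, hsumc_fst]
    omega
  · rw [sum_snd_filter w, hfil, hcntH, hsumc_snd]
    omega
  · intro i
    rw [one_mul]
    set u : List (ℕ × ℕ) := w.take i with hu_def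
    have hpre : u.filter (fun s => !isH s) <+: c := by
      rw [← hfil]
      exact (take_prefix i w).filter _
    set t : ℕ := (u.filter (fun s => !isH s)).length with ht_def
    have htake : u.filter (fun s => !isH s) = c.take t := prefix_iff_eq_take.mp hpre
    have hct : c.take t = (d.toList.take t).map stepOf := by
      rw [hc_def, map_take]
    have h1 := sum_fst_filter u
    have h2 := sum_snd_filter u
    have h3 : ((c.take t).map Prod.fst).sum = (d.toList.take t).count D := by
      rw [hct, sum_fst_dyck]
    have h4 : ((c.take t).map Prod.snd).sum = (d.toList.take t).count U := by
      rw [hct, sum_snd_dyck]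
    have h5 := d.count_D_le_count_U t
    rw [htake] at h1 h2
    omega

def fSch (n : ℕ) (x : SchT n) : {w : List (ℕ × ℕ) // IsKSchroederB 1 n w} :=
  ⟨toWord n x, toWord_spec n x⟩

lemma fSch_injective (n : ℕ) : Function.Injective (fSch n) := by
  rintro ⟨kf, ⟨d, hd⟩, ⟨m, hm1, hm2⟩⟩ ⟨kf', ⟨d', hd'⟩, ⟨m', hm1', hm2'⟩⟩ h
  have h0 : riffle m (d.toList.map stepOf) = riffle m' (d'.toList.map stepOf) :=
    congrArg Subtype.val h
  have hlen : m.count false = (d.toList.map stepOf).length :=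
    count_false_core n ⟨kf, ⟨d, hd⟩, ⟨m, hm1, hm2⟩⟩
  have hlen' : m'.count false = (d'.toList.map stepOf).length :=
    count_false_core n ⟨kf', ⟨d', hd'⟩, ⟨m', hm1', hm2'⟩⟩
  have hmm : m = m' := by
    rw [← riffle_map_isH m (d.toList.map stepOf) hlen (isH_core d),
      ← riffle_map_isH m' (d'.toList.map stepOf) hlen' (isH_core d')]
    exact congrArg (List.map isH) h0
  have hcc : d.toList.map stepOf = d'.toList.map stepOf := by
    rw [← riffle_filter m (d.toList.map stepOf) hlen (isH_core d),
      ← riffle_filter m' (d'.toList.map stepOf) hlen' (isH_core d')]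
    rw [hmm]
    rw [hmm] at h0
    exact congrArg (List.filter _) h0
  have hdd : d = d' := DyckWord.ext (map_injective_iff.mpr stepOf_injective hcc)
  have hkk : kf = kf' := by
    have hl := congrArg List.length hmm
    rw [hm1, hm1'] at hl
    exact Fin.ext (by omega)
  subst hkk hdd hmm
  rfl

lemma fSch_surjective (n : ℕ) : Function.Surjective (fSch n) := by
  rintro ⟨w, hw, hf, hs, hpre⟩
  rw [one_mul] at hf
  simp only [one_mul] at hpre
  set k : ℕ := w.count (0, 1) with hk_def
  have hsf := sum_fst_eq w hw
  have hss := sum_snd_eq w hw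
  have hwl := length_eq_counts w hw
  have hcount10 : w.count (1, 0) = k := by omega
  have hcountH : w.count (1, 1) = n - k := by omega
  have hk_le : k ≤ n := by omega
  set c : List (ℕ × ℕ) := w.filter (fun s => !isH s) with hc_def
  have hc_mem : ∀ s ∈ c, s = (0, 1) ∨ s = (1, 0) := by
    intro s hs
    rw [hc_def, mem_filter] at hs
    rcases hw s hs.1 with h | h | h
    · exact Or.inl h
    · exact Or.inr h
    · rw [isH_true h] at hs; simp at hs
  have hcU : ∀ (l : List (ℕ × ℕ)), (∀ s ∈ l, s = (0, 1) ∨ s = (1, 0)) →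
      (l.map toStep).count U = l.count (0, 1) ∧ (l.map toStep).count D = l.count (1, 0) := by
    intro l
    induction l with
    | nil => intro; simp
    | cons x t ih =>
      intro hl
      obtain ⟨ih1, ih2⟩ := ih (fun s hs => hl s (mem_cons_of_mem _ hs))
      rcases hl x (mem_cons_self) with h | h <;> subst h <;>
        constructor <;> simp [toStep, count_cons, ih1, ih2]
  have hfilter01 : ∀ (v : List (ℕ × ℕ)), (v.filter (fun s => !isH s)).count (0, 1) = v.count (0, 1) := by
    intro v; exact count_filter (by simp [isH])
  have hfilter10 : ∀ (v : List (ℕ × ℕ)), (v.filter (fun s => !isH s)).count (1, 0) = v.count (1, 0) := by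
    intro v; exact count_filter (by simp [isH])
  have hprefixDU : ∀ i, ((c.map toStep).take i).count D ≤ ((c.map toStep).take i).count U := by
    intro i
    rw [← map_take, (hcU _ (fun s hs => hc_mem s (take_subset _ _ hs))).1,
      (hcU _ (fun s hs => hc_mem s (take_subset _ _ hs))).2]
    obtain ⟨j, hj⟩ := filter_take_exists (fun s => !isH s) w i
    rw [← hc_def] at hj
    rw [← hj, hfilter01, hfilter10]
    have h1 := sum_fst_eq (w.take j) (fun s hs => hw s (take_subset _ _ hs))
    have h2 := sum_snd_eq (w.take j) (fun s hs => hw s (take_subset _ _ hs))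
    have h3 := hpre j
    omega
  have hcU' := hcU c hc_mem
  have hcount01c : c.count (0, 1) = k := by rw [hc_def, hfilter01]
  have hcount10c : c.count (1, 0) = k := by rw [hc_def, hfilter10, hcount10]
  set d : DyckWord := ⟨c.map toStep, by omega, hprefixDU⟩ with hd_def
  have hsem : d.semilength = k := by
    show (c.map toStep).count U = k
    omega
  set m : List Bool := w.map isH with hm_def
  have hm1 : m.length = n + k := by
    rw [hm_def, length_map]
    omega
  have hm2 : m.count true = n - k := by
    rw [hm_def, count_true_map_isH, countP_isH]
    omega
  refine ⟨⟨⟨k, by omega⟩, ⟨d, hsem⟩, ⟨m, hm1, hm2⟩⟩, ?_⟩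
  apply Subtype.ext
  show riffle m (d.toList.map stepOf) = w
  have : d.toList.map stepOf = c := by
    show (c.map toStep).map stepOf = c
    rw [map_map]
    conv_rhs => rw [← map_id c]
    exact map_congr_left (fun s hs => by
      rcases hc_mem s hs with h | h <;> subst h <;> simp [toStep, stepOf])
  rw [this, hm_def, hc_def, riffle_self]

lemma card_schroeder (n : ℕ) :
    Nat.card {w : List (ℕ × ℕ) // IsKSchroederB 1 n w}
      = ∑ k ∈ Finset.range (n + 1), catalan k * (n + k).choose (n - k) := by
  rw [← Nat.card_eq_of_bijective (fSch n) ⟨fSch_injective n, fSch_surjective n⟩]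
  letI : ∀ k : Fin (n + 1),
      Fintype {m : List Bool // m.length = n + (k : ℕ) ∧ m.count true = n - (k : ℕ)} :=
    fun _ => Fintype.ofFinite _
  rw [Nat.card_eq_fintype_card, Fintype.card_sigma]
  rw [← Fin.sum_univ_eq_sum_range
    (fun k => catalan k * (n + k).choose (n - k)) (n + 1)]
  refine Finset.sum_congr rfl fun k _ => ?_
  rw [Fintype.card_prod, DyckWord.card_dyckWord_semilength_eq_catalan,
    ← Nat.card_eq_fintype_card, card_bool_lists]

lemma term_identity (n k : ℕ) (hn : 1 ≤ n) (hk : k ≤ n) :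
    ((catalan k : ℚ) * ((n + k).choose (n - k) : ℚ))
      = 1 / (n : ℚ) * ((n.choose k : ℚ) * (((n + k).choose (n - 1) : ℚ))) := by
  have hn0 : (n : ℚ) ≠ 0 := Nat.cast_ne_zero.mpr (by omega)
  have hk1 : ((k : ℚ) + 1) ≠ 0 := by positivity
  have hcat : ((k : ℚ) + 1) * (catalan k : ℚ) = ((2 * k).choose k : ℚ) := by
    have := succ_mul_catalan_eq_centralBinom k
    rw [Nat.centralBinom] at this
    exact_mod_cast congrArg (Nat.cast : ℕ → ℚ) this
  have key : (n : ℚ) * ((2 * k).choose k : ℚ) * ((n + k).choose (n - k) : ℚ)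
      = ((k : ℚ) + 1) * (n.choose k : ℚ) * ((n + k).choose (n - 1) : ℚ) := by
    rw [Nat.cast_choose ℚ (show k ≤ 2 * k by omega),
      Nat.cast_choose ℚ (show n - k ≤ n + k by omega),
      Nat.cast_choose ℚ hk,
      Nat.cast_choose ℚ (show n - 1 ≤ n + k by omega)]
    rw [show 2 * k - k = k by omega, show n + k - (n - k) = 2 * k by omega,
      show n + k - (n - 1) = k + 1 by omega]
    rw [show Nat.factorial n = n * Nat.factorial (n - 1) from
      (Nat.mul_factorial_pred (by omega)).symm]
    rw [Nat.factorial_succ k]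
    have f1 : ((Nat.factorial k : ℕ) : ℚ) ≠ 0 := Nat.cast_ne_zero.mpr (Nat.factorial_ne_zero _)
    have f2 : ((Nat.factorial (2 * k) : ℕ) : ℚ) ≠ 0 := Nat.cast_ne_zero.mpr (Nat.factorial_ne_zero _)
    have f3 : ((Nat.factorial (n - k) : ℕ) : ℚ) ≠ 0 := Nat.cast_ne_zero.mpr (Nat.factorial_ne_zero _)
    have f4 : ((Nat.factorial (n - 1) : ℕ) : ℚ) ≠ 0 := Nat.cast_ne_zero.mpr (Nat.factorial_ne_zero _)
    push_cast
    field_simp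
  have hcat' : (catalan k : ℚ) = ((2 * k).choose k : ℚ) / ((k : ℚ) + 1) := by
    rw [eq_div_iff hk1]
    linear_combination hcat
  rw [hcat']
  field_simp
  linear_combination key

end SchroederAux

/-- The `n`-th large Schröder number: `|Sch(n)| = (1/n) Σ_{j=0}^n C(n,j) C(n+j, n-1)`. -/
theorem large_schroeder_formula (n : ℕ) (hn : 1 ≤ n) :
    ({w : List (ℕ × ℕ) | IsKSchroederB 1 n w}.ncard : ℚ)
      = (1 / (n : ℚ)) *
          ∑ j ∈ Finset.range (n + 1), (n.choose j : ℚ) * ((n + j).choose (n - 1) : ℚ) := by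
  have hset : {w : List (ℕ × ℕ) | IsKSchroederB 1 n w}.ncard
      = ∑ k ∈ Finset.range (n + 1), catalan k * (n + k).choose (n - k) := by
    rw [← Nat.card_coe_set_eq]
    exact SchroederAux.card_schroeder n
  rw [hset, Finset.mul_sum]
  push_cast
  refine Finset.sum_congr rfl fun k hk => ?_
  exact SchroederAux.term_identity n k hn (by
    have := Finset.mem_range.mp hk; omega)
end

section
/- If the formal power series χ satisfies χ = 1 + x(χ^k + χ^{k+1}), then its n-th coefficient is [x^n]χ = (1/n) Σ_{m=0}^{n−1} 2^{m+1} binomial(nk, m) binomial(n, n−m−1) for n ≥ 1. Consequently, the number of k-Schröder paths of type B of size n equals this expression. -/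
open Polynomial Finset

namespace SchroederAux





lemma coeff_pow_eq_zero {g : PowerSeries ℚ} (hg : PowerSeries.X ∣ g) {M m : ℕ} (h : M < m) :
    PowerSeries.coeff M (g ^ m) = 0 := by
  obtain ⟨h', rfl⟩ := hg
  rw [mul_pow]
  exact PowerSeries.X_pow_dvd_iff.mp ⟨h' ^ m, rfl⟩ M h

lemma coeff_aeval (g : PowerSeries ℚ) (hg : PowerSeries.X ∣ g) (q : ℚ[X]) (M : ℕ) :
    PowerSeries.coeff M (aeval g q)
      = ∑ m ∈ range (M + 1), q.coeff m * PowerSeries.coeff M (g ^ m) := by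
  set B := max (q.natDegree + 1) (M + 1) with hB
  rw [aeval_eq_sum_range' (lt_of_lt_of_le (Nat.lt_succ_self _) (le_max_left _ _))]
  rw [map_sum]
  rw [← Finset.sum_subset (Finset.range_subset_range.2 (le_max_right _ _ : M + 1 ≤ B))]
  · exact Finset.sum_congr rfl fun m _ => by rw [PowerSeries.coeff_smul, smul_eq_mul]
  · intro m _ hm
    rw [PowerSeries.coeff_smul, coeff_pow_eq_zero hg (by simpa using hm), smul_zero]

/-- Lagrange inversion, key induction. -/
lemma lagrange (g : PowerSeries ℚ) (φ : ℚ[X]) (heq : g = PowerSeries.X * aeval g φ) :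
    ∀ N j : ℕ, 1 ≤ j → j ≤ N →
      (N : ℚ) * PowerSeries.coeff N (g ^ j) = j * (φ ^ N).coeff (N - j) := by
  have hdvd : PowerSeries.X ∣ g := ⟨_, heq⟩
  intro N
  induction N using Nat.strong_induction_on with
  | _ N IH =>
    intro j hj1 hjN
    set M := N - j with hM
    have hNM : N = M + j := by omega
    have step1 : PowerSeries.coeff N (g ^ j)
        = PowerSeries.coeff M (aeval g (φ ^ j)) := by
      conv_lhs => rw [heq]
      rw [mul_pow, ← map_pow, hNM, mul_comm, PowerSeries.coeff_mul_X_pow]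
    rw [step1, coeff_aeval g hdvd]
    rcases Nat.eq_zero_or_pos M with hM0 | hMpos
    · have hNj : N = j := by omega
      rw [hM0, Finset.sum_range_one, pow_zero]
      simp only [PowerSeries.coeff_zero_eq_constantCoeff, map_one, mul_one]
      rw [hNj]
    · have hsum : ∑ m ∈ range (M + 1), (φ ^ j).coeff m * PowerSeries.coeff M (g ^ m)
          = ∑ m ∈ range M, (φ ^ j).coeff (m + 1) * PowerSeries.coeff M (g ^ (m + 1)) := by
        rw [Finset.sum_range_succ']
        simp [PowerSeries.coeff_one, hMpos.ne']
      rw [hsum]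
      have hM0q : (M : ℚ) ≠ 0 := Nat.cast_ne_zero.mpr (by omega)
      have hIH : ∀ m ∈ range M, (φ ^ j).coeff (m + 1) * PowerSeries.coeff M (g ^ (m + 1))
          = (φ ^ j).coeff (m + 1) * ((m + 1 : ℚ) * (φ ^ M).coeff (M - (m+1)) / M) := by
        intro m hm
        have hmM : m + 1 ≤ M := by simpa using hm
        have hIHm := IH M (by omega) (m + 1) (by omega) hmM
        congr 1
        rw [eq_div_iff hM0q]
        push_cast at hIHm ⊢
        linarith [hIHm]
      rw [Finset.sum_congr rfl hIH]
      have hMs : (M - 1).succ = M := by omega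
      have hder : ∑ m ∈ range M, (φ ^ j).coeff (m + 1) * ((m + 1 : ℚ) * (φ ^ M).coeff (M - (m+1)) / M)
          = (derivative (φ ^ j) * φ ^ M).coeff (M - 1) / M := by
        rw [Polynomial.coeff_mul, Finset.Nat.sum_antidiagonal_eq_sum_range_succ
          (fun a b => (derivative (φ ^ j)).coeff a * (φ ^ M).coeff b), hMs, Finset.sum_div]
        refine Finset.sum_congr rfl fun m hm => ?_
        rw [Polynomial.coeff_derivative]
        have h2 : M - 1 - m = M - (m + 1) := by omega
        rw [h2]
        push_cast
        ring
      rw [hder]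
      have e1 : derivative (φ ^ j) * φ ^ M = C (j : ℚ) * (φ ^ (N-1) * derivative φ) := by
        rw [derivative_pow]
        have h : φ ^ (N - 1) = φ ^ (j - 1) * φ ^ M := by
          rw [← pow_add]; congr 1; omega
        rw [h]; ring
      have e2 : derivative (φ ^ N) = C (N : ℚ) * (φ ^ (N-1) * derivative φ) := by
        rw [derivative_pow, mul_assoc]
      have e3 : (derivative (φ ^ N)).coeff (M - 1) = (M : ℚ) * (φ ^ N).coeff M := by
        have h1 : M - 1 + 1 = M := by omega
        rw [Polynomial.coeff_derivative, h1, Nat.cast_sub (by omega : 1 ≤ M)]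
        ring
      have e4 : (derivative (φ ^ j) * φ ^ M).coeff (M - 1)
          = (j : ℚ) * ((φ ^ (N-1) * derivative φ).coeff (M - 1)) := by
        rw [e1, Polynomial.coeff_C_mul]
      have e5 : (N : ℚ) * ((φ ^ (N-1) * derivative φ).coeff (M - 1))
          = (M : ℚ) * (φ ^ N).coeff M := by
        rw [← e3, e2, Polynomial.coeff_C_mul]
      rw [e4]
      field_simp
      linear_combination e5



noncomputable def phi (k : ℕ) : ℚ[X] := (X + 1) ^ k + (X + 1) ^ (k + 1)

lemma E1 (k n : ℕ) (hn : 1 ≤ n) :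
    ((phi k ^ n).coeff (n - 1) : ℚ)
      = ∑ m ∈ range n, 2 ^ (m + 1) * ((n * k).choose m : ℚ) * (n.choose (n - m - 1) : ℚ) := by
  have hφ : phi k = (X + 1) ^ k * (X + C (2:ℚ)) := by
    unfold phi
    rw [pow_succ]
    have h2 : (C (2:ℚ)) = 2 := map_ofNat C 2
    rw [h2]; ring
  rw [hφ, mul_pow, ← pow_mul, Polynomial.coeff_mul,
    Finset.Nat.sum_antidiagonal_eq_sum_range_succ_mk]
  have hns : (n-1).succ = n := by omega
  rw [hns]
  refine Finset.sum_congr rfl fun m hm => ?_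
  rw [coeff_X_add_one_pow, coeff_X_add_C_pow]
  have hm' : m < n := by simpa using hm
  have h1 : n - (n - 1 - m) = m + 1 := by omega
  have h2 : n - 1 - m = n - m - 1 := by omega
  rw [h1, h2, mul_comm k n]
  ring

lemma E2 (k n : ℕ) :
    ((phi k ^ n).coeff (n - 1) : ℚ)
      = ∑ m ∈ range (n+1), (n.choose m : ℚ) * ((k*n + n - m).choose (n-1) : ℚ) := by
  unfold phi
  rw [add_pow, Polynomial.finset_sum_coeff]
  refine Finset.sum_congr rfl fun m hm => ?_
  have hm' : m ≤ n := by simpa [Nat.lt_succ_iff] using hm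
  have hexp : ((X + 1 : ℚ[X]) ^ k) ^ m * ((X + 1) ^ (k+1)) ^ (n - m)
      = (X + 1) ^ (k*n + n - m) := by
    rw [← pow_mul, ← pow_mul, ← pow_add]
    congr 1
    obtain ⟨d, rfl⟩ := Nat.exists_eq_add_of_le hm'
    have h1 : m + d - m = d := by omega
    have h2 : k * (m + d) + (m + d) - m = k * m + (k + 1) * d + d - d := by ring_nf; omega
    rw [h1, h2]
    ring_nf
    omega
  rw [hexp, ← Polynomial.C_eq_natCast, Polynomial.coeff_mul_C, coeff_X_add_one_pow]
  ring

lemma coeff_chi (k n : ℕ) (hn : 1 ≤ n) (χ : PowerSeries ℚ)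
    (hχ : χ = 1 + PowerSeries.X * (χ ^ k + χ ^ (k + 1))) :
    PowerSeries.coeff n χ = (1/(n:ℚ)) * (phi k ^ n).coeff (n-1) := by
  set g := χ - 1 with hgdef
  have h1g : (1 : PowerSeries ℚ) + g = χ := by rw [hgdef]; ring
  have heq : g = PowerSeries.X * aeval g (phi k) := by
    have ha : aeval g (phi k) = χ ^ k + χ ^ (k+1) := by
      unfold phi
      simp only [map_add, map_pow, aeval_X, map_one]
      rw [add_comm g 1, h1g]
    rw [ha, hgdef]
    conv_lhs => rw [hχ]
    ring
  have hlag := lagrange g (phi k) heq n 1 le_rfl hn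
  rw [pow_one] at hlag
  have hcg : PowerSeries.coeff n g = PowerSeries.coeff n χ := by
    rw [hgdef, map_sub, PowerSeries.coeff_one, if_neg (by omega), sub_zero]
  rw [hcg] at hlag
  push_cast at hlag
  have hn0 : (n:ℚ) ≠ 0 := Nat.cast_ne_zero.mpr (by omega)
  field_simp
  linarith [hlag]



/-- Abstract cycle lemma. -/
lemma cycle_abstract (N : ℕ) (hN : 0 < N) (p : ℕ → ℤ)
    (hper : ∀ j, p (j + N) = p j - 1) :
    ∃! r, r < N ∧ ∀ j, j < N → p r ≤ p (r + j) := by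
  classical
  have hne : (Finset.range N).Nonempty := ⟨0, Finset.mem_range.mpr hN⟩
  have hne' : ((Finset.range N).image p).Nonempty := hne.image p
  set μ := ((Finset.range N).image p).min' hne' with hμ
  obtain ⟨r₁, hr₁, hpr₁⟩ := Finset.mem_image.mp (Finset.min'_mem _ hne')
  rw [Finset.mem_range] at hr₁
  have hex : ∃ r, r < N ∧ p r = μ := ⟨r₁, hr₁, hpr₁⟩
  have hspec := Nat.find_spec hex
  set r₀ := Nat.find hex with hr₀def
  obtain ⟨hr₀N, hpr₀⟩ := hspec
  have hmin : ∀ t, t < N → μ ≤ p t := fun t ht =>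
    Finset.min'_le _ _ (Finset.mem_image_of_mem p (Finset.mem_range.mpr ht))
  have hstrict : ∀ s, s < r₀ → p r₀ < p s := by
    intro s hs
    have h1 : ¬ (s < N ∧ p s = μ) := Nat.find_min hex hs
    have h2 : s < N := lt_trans hs hr₀N
    have h3 := hmin s h2
    rcases lt_or_eq_of_le h3 with h | h
    · omega
    · exact absurd ⟨h2, h.symm⟩ h1
  refine ⟨r₀, ⟨hr₀N, ?_⟩, ?_⟩
  · intro j hj
    by_cases hcase : r₀ + j < N
    · rw [hpr₀]; exact hmin _ hcase
    · have hs : r₀ + j - N < r₀ := by omega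
      have he : r₀ + j = (r₀ + j - N) + N := by omega
      rw [he, hper]
      have := hstrict _ hs
      omega
  · rintro r ⟨hrN, hgood⟩
    have hlt : ∀ t, t < r → p r < p t := by
      intro t ht
      have h1 := hgood (t + N - r) (by omega)
      have h2 : r + (t + N - r) = t + N := by omega
      rw [h2, hper] at h1
      omega
    have hle : ∀ t, t < N → p r ≤ p t := by
      intro t ht
      by_cases hc : r ≤ t
      · have he : t = r + (t - r) := by omega
        rw [he]; exact hgood _ (by omega)
      · exact le_of_lt (hlt t (by omega))
    have hrμ : p r = μ := le_antisymm ((hle r₁ hr₁).trans_eq hpr₁) (hmin r hrN)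
    have h1 : r₀ ≤ r := Nat.find_le ⟨hrN, hrμ⟩
    rcases lt_or_eq_of_le h1 with h | h
    · have := hlt r₀ h
      rw [hrμ, hpr₀] at this
      omega
    · exact h.symm

def wval (k : ℕ) : Fin 3 → ℤ := ![(k : ℤ), (k : ℤ) - 1, -1]

section Words
variable (k : ℕ) {N : ℕ} [NeZero N]
set_option linter.unusedSectionVars false

def pre (g : ZMod N → Fin 3) (j : ℕ) : ℤ := ∑ i ∈ range j, wval k (g (i : ZMod N))

def Dom (g : ZMod N → Fin 3) : Prop := ∀ j, j < N → 0 ≤ pre k g j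

def rot (r : ZMod N) (g : ZMod N → Fin 3) : ZMod N → Fin 3 := fun p => g (p + r)

lemma zsum (F : ZMod N → ℤ) (c : ZMod N) :
    ∑ x ∈ range N, F (c + (x : ZMod N)) = ∑ p : ZMod N, F p := by
  refine Finset.sum_nbij' (fun x => c + (x : ZMod N)) (fun p => (p - c).val)
    (fun a _ => Finset.mem_univ _) (fun p _ => Finset.mem_range.mpr (ZMod.val_lt _))
    (fun a ha => ?_) (fun p _ => ?_) (fun a _ => rfl)
  · show (c + (a : ZMod N) - c).val = a
    rw [add_sub_cancel_left]
    exact ZMod.val_cast_of_lt (Finset.mem_range.mp ha)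
  · show c + (((p - c).val : ℕ) : ZMod N) = p
    rw [ZMod.natCast_val, ZMod.cast_id, add_sub_cancel]

lemma pre_N (g : ZMod N → Fin 3) : pre k g N = ∑ p : ZMod N, wval k (g p) := by
  unfold pre
  rw [← zsum (fun p => wval k (g p)) 0]
  simp

lemma pre_add_N (g : ZMod N → Fin 3) (j : ℕ) :
    pre k g (j + N) = pre k g j + pre k g N := by
  unfold pre
  rw [Finset.sum_range_add]
  congr 1
  calc ∑ x ∈ range N, wval k (g ((j + x : ℕ) : ZMod N))
      = ∑ x ∈ range N, wval k (g ((j : ZMod N) + (x : ZMod N))) := by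
        refine Finset.sum_congr rfl fun x _ => ?_
        push_cast
        ring_nf
    _ = ∑ p : ZMod N, wval k (g p) := zsum (fun p => wval k (g p)) (j : ZMod N)
    _ = ∑ i ∈ range N, wval k (g (i : ZMod N)) := by
        rw [← zsum (fun p => wval k (g p)) 0]
        simp

lemma pre_rot (g : ZMod N → Fin 3) (r j : ℕ) :
    pre k (rot (r : ZMod N) g) j = pre k g (r + j) - pre k g r := by
  unfold pre rot
  rw [Finset.sum_range_add]
  rw [add_sub_cancel_left]
  refine Finset.sum_congr rfl fun x _ => ?_
  congr 1
  push_cast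
  ring

lemma rot_rot (r s : ZMod N) (g : ZMod N → Fin 3) : rot r (rot s g) = rot (s + r) g := by
  funext p
  unfold rot
  congr 1
  ring

lemma rot_zero (g : ZMod N → Fin 3) : rot 0 g = g := by
  funext p; unfold rot; rw [add_zero]
instance domDecidable : DecidablePred (Dom k (N := N)) := fun g =>
  inferInstanceAs (Decidable (∀ j, j < N → 0 ≤ pre k g j))

def countv (g : ZMod N → Fin 3) (v : Fin 3) : ℕ := (univ.filter (fun i => g i = v)).card

lemma fin3_cases : ∀ v : Fin 3, v = 0 ∨ v = 1 ∨ v = 2 := by decide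

lemma countv_rot (g : ZMod N → Fin 3) (r : ZMod N) (v : Fin 3) :
    countv (rot r g) v = countv g v := by
  unfold countv rot
  refine Finset.card_nbij' (fun i => i + r) (fun i => i - r) ?_ ?_ ?_ ?_
  · intro a ha
    simp only [Finset.mem_coe, Finset.mem_filter, Finset.mem_univ, true_and] at ha ⊢
    exact ha
  · intro a ha
    simp only [Finset.mem_coe, Finset.mem_filter, Finset.mem_univ, true_and] at ha ⊢
    rw [sub_add_cancel]
    exact ha
  · intro a _; simp [add_sub_cancel_right]
  · intro a _; simp [sub_add_cancel]

lemma countv_sum (g : ZMod N → Fin 3) : countv g 0 + countv g 1 + countv g 2 = N := by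
  have h := Finset.card_eq_sum_card_fiberwise
    (f := g) (s := univ) (t := univ) (fun x _ => mem_univ _)
  rw [Finset.card_univ, ZMod.card, Fin.sum_univ_three] at h
  exact h.symm

lemma sum_fiber (g : ZMod N → Fin 3) (F : Fin 3 → ℤ) : ∑ p : ZMod N, F (g p)
    = (countv g 0 : ℤ) * F 0 + (countv g 1 : ℤ) * F 1
      + (countv g 2 : ℤ) * F 2 := by
  have hv : ∀ v : Fin 3, ∑ p ∈ univ.filter (fun i => g i = v), F (g p)
      = (countv g v : ℤ) * F v := by
    intro v
    rw [Finset.sum_congr rfl (fun p hp => by rw [(Finset.mem_filter.mp hp).2])]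
    rw [Finset.sum_const, nsmul_eq_mul]
    rfl
  rw [← Finset.sum_fiberwise univ g (fun p => F (g p)), Fin.sum_univ_three,
    hv 0, hv 1, hv 2]

lemma sum_univ_eq_range (F : ZMod N → ℤ) : ∑ p : ZMod N, F p = ∑ i ∈ range N, F (i : ZMod N) := by
  rw [← zsum F 0]
  simp

def W (a b : ℕ) : Finset (ZMod N → Fin 3) :=
  univ.filter (fun g => countv g 0 = a ∧ countv g 1 = b)

def DomW (a b : ℕ) : Finset (ZMod N → Fin 3) := (W a b).filter (Dom k)

lemma card_W (a b : ℕ) : (W (N := N) a b).card = N.choose a * (N - a).choose b := by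
  classical
  have hcard : (((univ : Finset (ZMod N)).powersetCard a).sigma
      (fun A => powersetCard b Aᶜ)).card = N.choose a * (N - a).choose b := by
    rw [Finset.card_sigma]
    have hA : ∀ A ∈ (univ : Finset (ZMod N)).powersetCard a,
        (powersetCard b Aᶜ).card = (N - a).choose b := by
      intro A hA
      rw [Finset.card_powersetCard, Finset.card_compl, Fintype.card_eq_nat_card]
      rw [Nat.card_zmod, (Finset.mem_powersetCard.mp hA).2]
    rw [Finset.sum_congr rfl hA, Finset.sum_const, Finset.card_powersetCard,
      Finset.card_univ, ZMod.card, smul_eq_mul]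
  rw [← hcard]
  refine Finset.card_nbij'
    (fun g => ⟨univ.filter (fun i => g i = 0), univ.filter (fun i => g i = 1)⟩)
    (fun AB => fun i => if i ∈ AB.1 then 0 else if i ∈ AB.2 then 1 else 2)
    ?_ ?_ ?_ ?_
  · intro g hg
    obtain ⟨-, h0, h1⟩ := Finset.mem_filter.mp hg
    rw [Finset.mem_coe, Finset.mem_sigma]
    constructor
    · exact Finset.mem_powersetCard.mpr ⟨Finset.subset_univ _, h0⟩
    · refine Finset.mem_powersetCard.mpr ⟨?_, h1⟩
      intro i hi
      simp only [Finset.mem_filter, Finset.mem_univ, true_and] at hi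
      simp only [Finset.mem_compl, Finset.mem_filter, Finset.mem_univ, true_and]
      rw [hi]; decide
  · intro AB hAB
    rw [Finset.mem_coe, Finset.mem_sigma] at hAB
    obtain ⟨h1, h2⟩ := hAB
    obtain ⟨-, hcA⟩ := Finset.mem_powersetCard.mp h1
    obtain ⟨hsub, hcB⟩ := Finset.mem_powersetCard.mp h2
    refine Finset.mem_filter.mpr ⟨Finset.mem_univ _, ?_, ?_⟩
    · unfold countv
      rw [← hcA]
      congr 1
      ext i
      simp only [Finset.mem_filter, Finset.mem_univ, true_and]
      constructor
      · intro h
        by_contra hiA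
        rw [if_neg hiA] at h
        by_cases hiB : i ∈ AB.2
        · rw [if_pos hiB] at h; exact absurd h (by decide)
        · rw [if_neg hiB] at h; exact absurd h (by decide)
      · intro h; rw [if_pos h]
    · unfold countv
      rw [← hcB]
      congr 1
      ext i
      simp only [Finset.mem_filter, Finset.mem_univ, true_and]
      constructor
      · intro h
        by_cases hiA : i ∈ AB.1
        · rw [if_pos hiA] at h; exact absurd h (by decide)
        · rw [if_neg hiA] at h
          by_cases hiB : i ∈ AB.2
          · exact hiB
          · rw [if_neg hiB] at h; exact absurd h (by decide)
      · intro h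
        have hiA : i ∉ AB.1 := fun hc => (Finset.mem_compl.mp (hsub h)) hc
        rw [if_neg hiA, if_pos h]
  · intro g hg
    funext i
    rcases fin3_cases (g i) with h | h | h <;>
      simp only [Finset.mem_filter, Finset.mem_univ, true_and, h] <;> simp
  · intro AB hAB
    rw [Finset.mem_coe, Finset.mem_sigma] at hAB
    obtain ⟨h1, h2⟩ := hAB
    obtain ⟨hsub, -⟩ := Finset.mem_powersetCard.mp h2
    have e1 : (univ.filter (fun i =>
        (if i ∈ AB.1 then (0:Fin 3) else if i ∈ AB.2 then 1 else 2) = 0)) = AB.1 := by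
      ext i
      simp only [Finset.mem_filter, Finset.mem_univ, true_and]
      constructor
      · intro h
        by_contra hiA
        rw [if_neg hiA] at h
        by_cases hiB : i ∈ AB.2
        · rw [if_pos hiB] at h; exact absurd h (by decide)
        · rw [if_neg hiB] at h; exact absurd h (by decide)
      · intro h; rw [if_pos h]
    have e2 : (univ.filter (fun i =>
        (if i ∈ AB.1 then (0:Fin 3) else if i ∈ AB.2 then 1 else 2) = 1)) = AB.2 := by
      ext i
      simp only [Finset.mem_filter, Finset.mem_univ, true_and]
      constructor
      · intro h
        by_cases hiA : i ∈ AB.1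
        · rw [if_pos hiA] at h; exact absurd h (by decide)
        · rw [if_neg hiA] at h
          by_cases hiB : i ∈ AB.2
          · exact hiB
          · rw [if_neg hiB] at h; exact absurd h (by decide)
      · intro h
        have hiA : i ∉ AB.1 := fun hc => (Finset.mem_compl.mp (hsub h)) hc
        rw [if_neg hiA, if_pos h]
    exact Sigma.ext e1 (heq_of_eq e2)

lemma exists_unique_rot (g : ZMod N → Fin 3) (hneg : pre k g N = -1) :
    ∃! r : ZMod N, Dom k (rot r g) := by
  have hNpos : 0 < N := Nat.pos_of_ne_zero (NeZero.ne N)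
  have hper : ∀ j, pre k g (j + N) = pre k g j - 1 := by
    intro j; rw [pre_add_N, hneg]; ring
  obtain ⟨r, ⟨hrN, hrdom⟩, hruniq⟩ := cycle_abstract N hNpos (pre k g) hper
  have key : ∀ s : ℕ, s < N → (Dom k (rot (s : ZMod N) g) ↔
      (∀ j, j < N → pre k g s ≤ pre k g (s + j))) := by
    intro s hs
    unfold Dom
    constructor
    · intro h j hj
      have := h j hj
      rw [pre_rot] at this
      linarith
    · intro h j hj
      rw [pre_rot]
      have := h j hj
      linarith
  refine ⟨(r : ZMod N), (key r hrN).mpr hrdom, ?_⟩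
  intro s hs
  have hsval : s = ((s.val : ℕ) : ZMod N) := by
    rw [ZMod.natCast_val, ZMod.cast_id]
  rw [hsval] at hs
  have := hruniq s.val ⟨ZMod.val_lt s, (key s.val (ZMod.val_lt s)).mp hs⟩
  rw [hsval, this]

lemma card_W_eq_mul (a b : ℕ)
    (hneg : ∀ g, g ∈ W (N := N) a b → pre k g N = -1) :
    (W (N := N) a b).card = N * (DomW (N := N) k a b).card := by
  classical
  have h1 : ((univ : Finset (ZMod N)) ×ˢ DomW (N := N) k a b).card = N * (DomW (N := N) k a b).card := by
    rw [Finset.card_product, Finset.card_univ, ZMod.card]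
  rw [← h1]
  have hWrot : ∀ (g : ZMod N → Fin 3) (r : ZMod N), g ∈ W (N := N) a b →
      rot r g ∈ W (N := N) a b := by
    intro g r hg
    obtain ⟨-, h0, h1⟩ := Finset.mem_filter.mp hg
    exact Finset.mem_filter.mpr ⟨mem_univ _, by rw [countv_rot, h0], by rw [countv_rot, h1]⟩
  set σ : (ZMod N → Fin 3) → ZMod N := fun g =>
    if h : ∃ r : ZMod N, Dom k (rot r g) then h.choose else 0 with hσ
  have hσspec : ∀ g, g ∈ W (N := N) a b → Dom k (rot (σ g) g) ∧
      ∀ r, Dom k (rot r g) → r = σ g := by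
    intro g hg
    obtain ⟨r, hr, huniq⟩ := exists_unique_rot k g (hneg g hg)
    have hex : ∃ r : ZMod N, Dom k (rot r g) := ⟨r, hr⟩
    rw [hσ]
    simp only [dif_pos hex]
    exact ⟨hex.choose_spec, fun r' hr' => (huniq r' hr').trans (huniq _ hex.choose_spec).symm⟩
  refine (Finset.card_nbij' (fun rg : ZMod N × (ZMod N → Fin 3) => rot rg.1 rg.2)
    (fun g : ZMod N → Fin 3 => (- σ g, rot (σ g) g)) ?_ ?_ ?_ ?_).symm
  · intro rg hrg
    rw [Finset.mem_coe, Finset.mem_product] at hrg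
    exact hWrot _ _ (Finset.mem_filter.mp hrg.2).1
  · intro g hg
    rw [Finset.mem_coe, Finset.mem_product]
    refine ⟨mem_univ _, Finset.mem_filter.mpr ⟨hWrot _ _ hg, (hσspec g hg).1⟩⟩
  · intro rg hrg
    rw [Finset.mem_coe, Finset.mem_product] at hrg
    obtain ⟨-, hd⟩ := hrg
    obtain ⟨hw, hdom⟩ := Finset.mem_filter.mp hd
    have hg' : rot rg.1 rg.2 ∈ W (N := N) a b := hWrot _ _ hw
    have hback : Dom k (rot (- rg.1) (rot rg.1 rg.2)) := by
      rw [rot_rot, add_neg_cancel, rot_zero]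
      exact hdom
    have hσval : - rg.1 = σ (rot rg.1 rg.2) := (hσspec _ hg').2 _ hback
    have h2 : σ (rot rg.1 rg.2) = - rg.1 := hσval.symm
    have hfst : - σ (rot rg.1 rg.2) = rg.1 := by rw [h2, neg_neg]
    have hsnd : rot (σ (rot rg.1 rg.2)) (rot rg.1 rg.2) = rg.2 := by
      rw [h2, rot_rot, add_neg_cancel, rot_zero]
    show (- σ (rot rg.1 rg.2), rot (σ (rot rg.1 rg.2)) (rot rg.1 rg.2)) = rg
    rw [hfst, hsnd]
  · intro g hg
    show rot (- σ g) (rot (σ g) g) = g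
    rw [rot_rot, add_neg_cancel, rot_zero]

end Words



def sval : Fin 3 → ℤ := ![1, 1, 0]
def tval : Fin 3 → ℤ := ![0, 1, 1]

def encode : ℕ × ℕ → Fin 3 := fun s => if s = (0,1) then 0 else if s = (1,1) then 1 else 2
def decode : Fin 3 → ℕ × ℕ := ![(0,1),(1,1),(1,0)]

@[simp] lemma encode_U : encode (0,1) = 0 := by decide
@[simp] lemma encode_D : encode (1,0) = 2 := by decide
@[simp] lemma encode_H : encode (1,1) = 1 := by decide

lemma decode_encode (s : ℕ × ℕ) (hs : s = (0, 1) ∨ s = (1, 0) ∨ s = (1, 1)) :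
    decode (encode s) = s := by rcases hs with rfl | rfl | rfl <;> decide

lemma encode_decode : ∀ v : Fin 3, encode (decode v) = v := by decide

lemma encode_inj (s t : ℕ × ℕ) (hs : s = (0, 1) ∨ s = (1, 0) ∨ s = (1, 1))
    (ht : t = (0, 1) ∨ t = (1, 0) ∨ t = (1, 1)) (h : encode s = encode t) : s = t := by
  rcases hs with rfl | rfl | rfl <;> rcases ht with rfl | rfl | rfl <;> first | rfl | exact absurd h (by decide)

lemma wval_encode (k : ℕ) (s : ℕ × ℕ) (hs : s = (0, 1) ∨ s = (1, 0) ∨ s = (1, 1)) :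
    wval k (encode s) = (k : ℤ) * s.2 - s.1 := by
  rcases hs with rfl | rfl | rfl <;>
    simp only [encode_U, encode_D, encode_H, wval, Matrix.cons_val_zero, Matrix.cons_val_one,
      Matrix.head_cons, Matrix.cons_val_two, Matrix.tail_cons] <;> push_cast <;> ring

lemma sval_encode (s : ℕ × ℕ) (hs : s = (0, 1) ∨ s = (1, 0) ∨ s = (1, 1)) :
    sval (encode s) = (s.2 : ℤ) := by
  rcases hs with rfl | rfl | rfl <;>
    simp only [encode_U, encode_D, encode_H, sval, Matrix.cons_val_zero, Matrix.cons_val_one,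
      Matrix.head_cons, Matrix.cons_val_two, Matrix.tail_cons] <;> push_cast <;> ring

lemma tval_encode (s : ℕ × ℕ) (hs : s = (0, 1) ∨ s = (1, 0) ∨ s = (1, 1)) :
    tval (encode s) = (s.1 : ℤ) := by
  rcases hs with rfl | rfl | rfl <;>
    simp only [encode_U, encode_D, encode_H, tval, Matrix.cons_val_zero, Matrix.cons_val_one,
      Matrix.head_cons, Matrix.cons_val_two, Matrix.tail_cons] <;> push_cast <;> ring

/-- prefix sums of a mapped list as a range sum over `getD`. -/
lemma take_map_sum (l : List (ℕ × ℕ)) (f : ℕ × ℕ → ℤ) (d : ℕ × ℕ) :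
    ∀ j, j ≤ l.length → ((l.take j).map f).sum = ∑ i ∈ range j, f (l.getD i d) := by
  intro j
  induction j with
  | zero => simp
  | succ j ih =>
    intro hj
    have hj' : j ≤ l.length := by omega
    have hjl : j < l.length := by omega
    rw [List.map_take, List.sum_take_succ (l.map f) j (by simpa using hjl), ← List.map_take,
      List.getElem_map, Finset.sum_range_succ, ih hj']
    congr 1
    exact (congrArg f (List.getD_eq_getElem l d hjl)).symm

lemma list_sum_wval (k : ℕ) (l : List (ℕ × ℕ))
    (hl : ∀ s ∈ l, s = (0, 1) ∨ s = (1, 0) ∨ s = (1, 1)) :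
    (l.map (fun s => wval k (encode s))).sum
      = (k : ℤ) * ((l.map Prod.snd).sum : ℕ) - ((l.map Prod.fst).sum : ℕ) := by
  induction l with
  | nil => simp
  | cons a t ih =>
    have ha := hl a (by simp)
    have ht : ∀ s ∈ t, s = (0, 1) ∨ s = (1, 0) ∨ s = (1, 1) := fun s hs => hl s (by simp [hs])
    simp only [List.map_cons, List.sum_cons, ih ht, wval_encode k a ha]
    push_cast
    ring

lemma list_sum_sval (l : List (ℕ × ℕ))
    (hl : ∀ s ∈ l, s = (0, 1) ∨ s = (1, 0) ∨ s = (1, 1)) :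
    (l.map (fun s => sval (encode s))).sum = ((l.map Prod.snd).sum : ℤ) := by
  induction l with
  | nil => simp
  | cons a t ih =>
    have ha := hl a (by simp)
    have ht : ∀ s ∈ t, s = (0, 1) ∨ s = (1, 0) ∨ s = (1, 1) := fun s hs => hl s (by simp [hs])
    simp only [List.map_cons, List.sum_cons, ih ht, sval_encode a ha]
    push_cast
    ring

lemma list_sum_tval (l : List (ℕ × ℕ))
    (hl : ∀ s ∈ l, s = (0, 1) ∨ s = (1, 0) ∨ s = (1, 1)) :
    (l.map (fun s => tval (encode s))).sum = ((l.map Prod.fst).sum : ℤ) := by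
  induction l with
  | nil => simp
  | cons a t ih =>
    have ha := hl a (by simp)
    have ht : ∀ s ∈ t, s = (0, 1) ∨ s = (1, 0) ∨ s = (1, 1) := fun s hs => hl s (by simp [hs])
    simp only [List.map_cons, List.sum_cons, ih ht, tval_encode a ha]
    push_cast
    ring

lemma length_le (l : List (ℕ × ℕ))
    (hl : ∀ s ∈ l, s = (0, 1) ∨ s = (1, 0) ∨ s = (1, 1)) :
    l.length ≤ (l.map Prod.fst).sum + (l.map Prod.snd).sum := by
  induction l with
  | nil => simp
  | cons a t ih =>
    have ha := hl a (by simp)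
    have ht : ∀ s ∈ t, s = (0, 1) ∨ s = (1, 0) ∨ s = (1, 1) := fun s hs => hl s (by simp [hs])
    have := ih ht
    rcases ha with rfl | rfl | rfl <;> simp <;> omega

lemma fst_le_length (l : List (ℕ × ℕ))
    (hl : ∀ s ∈ l, s = (0, 1) ∨ s = (1, 0) ∨ s = (1, 1)) :
    (l.map Prod.fst).sum ≤ l.length := by
  induction l with
  | nil => simp
  | cons a t ih =>
    have ha := hl a (by simp)
    have ht : ∀ s ∈ t, s = (0, 1) ∨ s = (1, 0) ∨ s = (1, 1) := fun s hs => hl s (by simp [hs])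
    have := ih ht
    rcases ha with rfl | rfl | rfl <;> simp <;> omega


lemma decode_mem : ∀ v : Fin 3, decode v = (0,1) ∨ decode v = (1,0) ∨ decode v = (1,1) := by
  decide

lemma heq_fun {a b : ℕ} (h : a = b) (f : ZMod (a+1) → Fin 3) (g : ZMod (b+1) → Fin 3)
    (hfg : ∀ i : ℕ, i < a + 1 → f (i : ZMod (a+1)) = g (i : ZMod (b+1))) : HEq f g := by
  subst h
  apply heq_of_eq
  funext p
  have h1 := hfg p.val (ZMod.val_lt p)
  rwa [ZMod.natCast_val, ZMod.cast_id] at h1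

lemma heq_fun_apply {a b : ℕ} (h : a = b) {f : ZMod (a+1) → Fin 3} {g : ZMod (b+1) → Fin 3}
    (hfg : HEq f g) (i : ℕ) : f (i : ZMod (a+1)) = (g (i : ZMod (b+1)) : Fin 3) := by
  subst h
  rw [heq_iff_eq] at hfg
  rw [hfg]

def F (k n : ℕ) (w : List (ℕ × ℕ)) : (Σ m : ℕ, ZMod (k*n + n - m + 1) → Fin 3) :=
  ⟨k*n + n - w.length, fun p => encode ((w ++ [(1,0)]).getD p.val (1,0))⟩

def T (k n : ℕ) : Finset (Σ m : ℕ, ZMod (k*n + n - m + 1) → Fin 3) :=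
  (range (n+1)).sigma (fun m => DomW (N := k*n + n - m + 1) k (n - m) m)

/-- core translation between a word function and a list -/
lemma g_list (k M : ℕ) (g : ZMod (M+1) → Fin 3) (l : List (ℕ × ℕ))
    (hlen : l.length = M + 1)
    (hrel : ∀ i, i < M + 1 → g (i : ZMod (M+1)) = encode (l.getD i (1,0)))
    (hent : ∀ s ∈ l, s = (0, 1) ∨ s = (1, 0) ∨ s = (1, 1)) :
    (∀ j, j ≤ M + 1 → pre k g j
        = (k : ℤ) * (((l.take j).map Prod.snd).sum : ℕ) - (((l.take j).map Prod.fst).sum : ℕ))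
    ∧ (∑ p : ZMod (M+1), sval (g p)) = ((l.map Prod.snd).sum : ℤ)
    ∧ (∑ p : ZMod (M+1), tval (g p)) = ((l.map Prod.fst).sum : ℤ) := by
  have hone : ∀ (F : Fin 3 → ℤ) (j : ℕ), j ≤ M + 1 →
      ∑ i ∈ range j, F (g (i : ZMod (M+1)))
        = ((l.take j).map (fun s => F (encode s))).sum := by
    intro F j hj
    rw [take_map_sum l (fun s => F (encode s)) (1,0) j (by omega)]
    refine Finset.sum_congr rfl fun i hi => ?_
    rw [hrel i (by simp at hi; omega)]
  have hentt : ∀ j, ∀ s ∈ l.take j, s = (0, 1) ∨ s = (1, 0) ∨ s = (1, 1) :=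
    fun j s hs => hent s (List.take_subset j l hs)
  refine ⟨?_, ?_, ?_⟩
  · intro j hj
    unfold pre
    rw [hone (wval k) j hj, list_sum_wval k _ (hentt j)]
  · rw [sum_univ_eq_range, hone sval (M+1) le_rfl]
    have : l.take (M+1) = l := by rw [← hlen]; exact List.take_length
    rw [this, list_sum_sval l hent]
  · rw [sum_univ_eq_range, hone tval (M+1) le_rfl]
    have : l.take (M+1) = l := by rw [← hlen]; exact List.take_length
    rw [this, list_sum_tval l hent]

lemma sval_vals : sval 0 = 1 ∧ sval 1 = 1 ∧ sval 2 = 0 := by refine ⟨rfl, rfl, rfl⟩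
lemma tval_vals : tval 0 = 0 ∧ tval 1 = 1 ∧ tval 2 = 1 := by refine ⟨rfl, rfl, rfl⟩
lemma wval_vals (k : ℕ) : wval k 0 = (k:ℤ) ∧ wval k 1 = (k:ℤ) - 1 ∧ wval k 2 = -1 := by
  refine ⟨rfl, rfl, rfl⟩

lemma path_mem (k n : ℕ) (hk : 1 ≤ k) (w : List (ℕ × ℕ)) (hw : IsKSchroederB k n w)
    (m : ℕ) (hm : m = k*n + n - w.length) :
    m ∈ range (n+1) ∧
      (fun p : ZMod (k*n+n-m+1) => encode ((w ++ [(1,0)]).getD p.val (1,0)))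
        ∈ DomW (N := k*n+n-m+1) k (n-m) m := by
  obtain ⟨hsteps, hfst, hsnd, hpre⟩ := hw
  have hL1 : k*n ≤ w.length := by rw [← hfst]; exact fst_le_length w hsteps
  have hL2 : w.length ≤ k*n + n := by
    have h1 := length_le w hsteps
    omega
  have hM : k*n + n - m = w.length := by
    rw [hm]
    generalize k*n = K at hL1 hL2 ⊢
    omega
  have hmn : m ≤ n := by
    rw [hm]
    generalize k*n = K at hL1 hL2 ⊢
    omega
  set l := w ++ [(1,0)] with hldef
  have hlent : ∀ s ∈ l, s = (0, 1) ∨ s = (1, 0) ∨ s = (1, 1) := by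
    intro s hs
    rw [hldef, List.mem_append] at hs
    rcases hs with hs | hs
    · exact hsteps s hs
    · rw [List.mem_singleton] at hs
      subst hs
      right; left; rfl
  have hlfst : (l.map Prod.fst).sum = k*n + 1 := by
    rw [hldef]
    simp [hfst]
  have hlsnd : (l.map Prod.snd).sum = n := by
    rw [hldef]
    simp [hsnd]
  have hlen : l.length = (k*n + n - m) + 1 := by
    rw [hldef, List.length_append, hM]
    rfl
  set M := k*n + n - m with hMdef
  set g : ZMod (M+1) → Fin 3 := fun p => encode (l.getD p.val (1,0)) with hgdef
  have hrel : ∀ i, i < M + 1 → g (i : ZMod (M+1)) = encode (l.getD i (1,0)) := by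
    intro i hi
    show encode (l.getD ((i : ZMod (M+1)).val) (1,0)) = _
    rw [ZMod.val_cast_of_lt hi]
  obtain ⟨hpre', hsval, htval⟩ := g_list k M g l hlen hrel hlent
  -- count equations
  have e1 : (countv g 0 : ℤ) + countv g 1 = n := by
    have h := sum_fiber g sval
    rw [hsval, hlsnd, sval_vals.1, sval_vals.2.1, sval_vals.2.2] at h
    push_cast at h ⊢
    linarith
  have e2 : (countv g 1 : ℤ) + countv g 2 = k*n + 1 := by
    have h := sum_fiber g tval
    rw [htval, hlfst, tval_vals.1, tval_vals.2.1, tval_vals.2.2] at h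
    push_cast at h ⊢
    linarith
  have e3 : countv g 0 + countv g 1 + countv g 2 = M + 1 := countv_sum g
  have hc0 : countv g 0 = n - m := by
    generalize hKK : k*n = K at e2 hM hMdef hmn
    omega
  have hc1 : countv g 1 = m := by
    generalize hKK : k*n = K at e2 hM hMdef hmn
    omega
  -- domination
  have hdom : Dom k g := by
    intro j hj
    have hj' : j ≤ M := by omega
    rw [hpre' j (by omega)]
    have htake : l.take j = w.take j := by
      rw [hldef]
      exact List.take_append_of_le_length (by omega)
    rw [htake]
    have := hpre j
    have hcast : (((w.take j).map Prod.fst).sum : ℤ) ≤ (k : ℤ) * ((w.take j).map Prod.snd).sum := by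
      exact_mod_cast this
    linarith
  refine ⟨Finset.mem_range.mpr (by omega), ?_⟩
  unfold DomW
  rw [Finset.mem_filter]
  refine ⟨?_, hdom⟩
  unfold W
  rw [Finset.mem_filter]
  exact ⟨Finset.mem_univ _, hc0, hc1⟩

lemma F_mem_T (k n : ℕ) (hk : 1 ≤ k) (w : List (ℕ × ℕ)) (hw : IsKSchroederB k n w) :
    F k n w ∈ T k n := by
  rw [T, Finset.mem_sigma]
  exact path_mem k n hk w hw _ rfl

lemma F_fst_eq (k n : ℕ) (hk : 1 ≤ k) (w : List (ℕ × ℕ)) (hw : IsKSchroederB k n w) :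
    k*n + n - (k*n + n - w.length) = w.length := by
  obtain ⟨hsteps, hfst, hsnd, -⟩ := hw
  have hL1 : k*n ≤ w.length := by rw [← hfst]; exact fst_le_length w hsteps
  have hL2 : w.length ≤ k*n + n := by
    have h1 := length_le w hsteps
    omega
  generalize k*n = K at hL1 hL2 ⊢
  omega

lemma F_injOn (k n : ℕ) (hk : 1 ≤ k) :
    ∀ w ∈ {w | IsKSchroederB k n w}, ∀ w' ∈ {w | IsKSchroederB k n w},
      F k n w = F k n w' → w = w' := by
  intro w hw w' hw' hF
  have hfst : k*n + n - w.length = k*n + n - w'.length := congrArg Sigma.fst hF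
  have ha := F_fst_eq k n hk w hw
  have ha' := F_fst_eq k n hk w' hw'
  have hlen : w.length = w'.length := by rw [← ha, ← ha', hfst]
  have h2 : HEq (F k n w).2 (F k n w').2 := by rw [hF]
  have h3 := heq_fun_apply (a := k*n + n - (k*n + n - w.length))
    (b := k*n + n - (k*n + n - w'.length)) (by rw [hlen]) h2
  refine List.ext_getElem hlen ?_
  intro i hi hi'
  have h5 := h3 i
  have hv : ((i : ZMod (k*n + n - (k*n + n - w.length) + 1))).val = i :=
    ZMod.val_cast_of_lt (by rw [ha]; omega)
  have hv' : ((i : ZMod (k*n + n - (k*n + n - w'.length) + 1))).val = i :=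
    ZMod.val_cast_of_lt (by rw [ha']; omega)
  simp only [F] at h5
  rw [hv, hv'] at h5
  have h6 := h5
  rw [List.getD_append _ _ _ i hi, List.getD_append _ _ _ i hi',
    List.getD_eq_getElem w _ hi, List.getD_eq_getElem w' _ hi'] at h6
  exact encode_inj _ _ (hw.1 _ (List.getElem_mem hi)) (hw'.1 _ (List.getElem_mem hi')) h6

lemma T_surj (k n : ℕ) (hk : 1 ≤ k) (x : Σ m : ℕ, ZMod (k*n + n - m + 1) → Fin 3)
    (hx : x ∈ T k n) : ∃ w, IsKSchroederB k n w ∧ F k n w = x := by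
  obtain ⟨m, g⟩ := x
  rw [T, Finset.mem_sigma, Finset.mem_range] at hx
  obtain ⟨hm, hg⟩ := hx
  dsimp only at hm hg
  have hmn : m ≤ n := by omega
  have hnK : n ≤ k*n := Nat.le_mul_of_pos_left n hk
  have hmK : m ≤ k*n := le_trans hmn hnK
  unfold DomW at hg
  rw [Finset.mem_filter] at hg
  obtain ⟨hgW, hdom⟩ := hg
  unfold W at hgW
  rw [Finset.mem_filter] at hgW
  obtain ⟨-, hc0, hc1⟩ := hgW
  have e3 : countv g 0 + countv g 1 + countv g 2 = (k*n + n - m) + 1 := countv_sum g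
  have hmkn : m ≤ k*n + n := le_trans hmK (Nat.le_add_right _ n)
  have hc2 : countv g 2 = k*n - m + 1 := by
    rw [hc0, hc1] at e3
    zify [hmn, hmK, hmkn] at e3 ⊢
    linarith
  have hpreN : pre k g ((k*n + n - m)+1) = -1 := by
    have h := pre_N k g
    rw [sum_fiber g (wval k), hc0, hc1, hc2, (wval_vals k).1, (wval_vals k).2.1,
      (wval_vals k).2.2] at h
    rw [h]
    push_cast [Nat.cast_sub hmn, Nat.cast_sub hmK]
    ring
  have hlast : g (((k*n + n - m) : ℕ) : ZMod ((k*n + n - m)+1)) = 2 := by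
    have h1 : 0 ≤ pre k g (k*n + n - m) := hdom (k*n + n - m) (by omega)
    have h2 : pre k g ((k*n + n - m)+1) = pre k g (k*n + n - m)
        + wval k (g (((k*n + n - m) : ℕ) : ZMod ((k*n + n - m)+1))) := by
      unfold pre
      rw [Finset.sum_range_succ]
    have hk1 : (1:ℤ) ≤ (k:ℤ) := by exact_mod_cast hk
    rcases fin3_cases (g (((k*n + n - m) : ℕ) : ZMod ((k*n + n - m)+1))) with h | h | h
    · rw [h, (wval_vals k).1] at h2
      omega
    · rw [h, (wval_vals k).2.1] at h2
      omega
    · exact h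
  set w : List (ℕ×ℕ) :=
    List.ofFn (fun i : Fin (k*n + n - m) => decode (g ((i : ℕ) : ZMod ((k*n + n - m)+1))))
    with hwdef
  have hwlen : w.length = k*n + n - m := by rw [hwdef, List.length_ofFn]
  set l := w ++ [(1,0)] with hldef
  have hlen : l.length = (k*n + n - m) + 1 := by
    rw [hldef, List.length_append, hwlen]
    rfl
  have hwent : ∀ s ∈ w, s = (0, 1) ∨ s = (1, 0) ∨ s = (1, 1) := by
    intro s hs
    rw [hwdef] at hs
    rw [List.mem_ofFn] at hs
    obtain ⟨i, rfl⟩ := hs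
    exact decode_mem _
  have hent : ∀ s ∈ l, s = (0, 1) ∨ s = (1, 0) ∨ s = (1, 1) := by
    intro s hs
    rw [hldef, List.mem_append] at hs
    rcases hs with hs | hs
    · exact hwent s hs
    · rw [List.mem_singleton] at hs
      subst hs
      right; left; rfl
  have hrel : ∀ i, i < (k*n + n - m) + 1 → g (i : ZMod ((k*n + n - m)+1))
      = encode (l.getD i (1,0)) := by
    intro i hi
    rcases Nat.lt_or_ge i (k*n + n - m) with hiM | hiM
    · rw [hldef, List.getD_append _ _ _ i (by rw [hwlen]; exact hiM),
        List.getD_eq_getElem w _ (by rw [hwlen]; exact hiM)]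
      simp only [hwdef]
      rw [List.getElem_ofFn]
      rw [encode_decode]
    · have hiM' : i = k*n + n - m := by omega
      subst hiM'
      have hD : l.getD (k*n + n - m) (1,0) = (1,0) := by
        rw [hldef, List.getD_append_right _ _ _ _ (by rw [hwlen])]
        rw [hwlen, Nat.sub_self]
        rfl
      rw [hD, hlast]
      rfl
  obtain ⟨hpre', hsval, htval⟩ := g_list k (k*n + n - m) g l hlen hrel hent
  have hlw_snd : (l.map Prod.snd).sum = (w.map Prod.snd).sum := by
    rw [hldef]
    simp
  have hlw_fst : (l.map Prod.fst).sum = (w.map Prod.fst).sum + 1 := by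
    rw [hldef]
    simp
  have hsum_snd : (w.map Prod.snd).sum = n := by
    have h := sum_fiber g sval
    rw [hsval, hlw_snd, hc0, hc1, hc2, sval_vals.1, sval_vals.2.1, sval_vals.2.2] at h
    rw [Nat.cast_sub hmn] at h
    exact_mod_cast (by linarith : ((w.map Prod.snd).sum : ℤ) = n)
  have hsum_fst : (w.map Prod.fst).sum = k*n := by
    have h := sum_fiber g tval
    rw [htval, hlw_fst, hc0, hc1, hc2, tval_vals.1, tval_vals.2.1, tval_vals.2.2] at h
    rw [Nat.cast_add, Nat.cast_one] at h
    have h3 : ((k*n - m + 1 : ℕ) : ℤ) = (k*n : ℕ) - (m : ℕ) + 1 := by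
      push_cast [Nat.cast_sub hmK]
      ring
    rw [h3] at h
    have h4 : ((w.map Prod.fst).sum : ℤ) = ((k*n : ℕ) : ℤ) := by linarith
    exact_mod_cast h4
  have hprefix : ∀ i, ((w.take i).map Prod.fst).sum ≤ k * ((w.take i).map Prod.snd).sum := by
    intro i
    rcases le_or_gt i (k*n + n - m) with hiM | hiM
    · have h1 := hdom i (by omega)
      rw [hpre' i (by omega)] at h1
      have htake : l.take i = w.take i := by
        rw [hldef]
        exact List.take_append_of_le_length (by omega)
      rw [htake] at h1
      have h2 : (((w.take i).map Prod.fst).sum : ℤ)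
          ≤ (k : ℤ) * ((w.take i).map Prod.snd).sum := by
        linarith
      exact_mod_cast h2
    · rw [List.take_of_length_le (by omega), hsum_fst, hsum_snd]
  have hpath : IsKSchroederB k n w := ⟨hwent, hsum_fst, hsum_snd, hprefix⟩
  refine ⟨w, hpath, ?_⟩
  have hfst1 : k*n + n - w.length = m := by
    rw [hwlen]
    generalize k*n = K at hmK hnK ⊢
    omega
  have ha : k*n + n - (k*n + n - w.length) = k*n + n - m := by rw [hfst1]
  refine Sigma.ext hfst1 ?_
  refine heq_fun ha _ _ ?_
  intro i hi
  have hiM : i < (k*n + n - m) + 1 := by rw [← ha]; exact hi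
  have hv : ((i : ZMod (k*n + n - (k*n + n - w.length) + 1))).val = i :=
    ZMod.val_cast_of_lt hi
  have e1 : (F k n w).2 (i : ZMod (k*n + n - (k*n + n - w.length) + 1))
      = encode (l.getD i (1,0)) := by
    simp only [F]
    rw [hv, ← hldef]
  rw [e1]
  exact (hrel i hiM).symm

lemma W_pre_neg (k n m : ℕ) (hk : 1 ≤ k) (hmn : m ≤ n) :
    ∀ g, g ∈ W (N := k*n+n-m+1) (n-m) m → pre k g (k*n+n-m+1) = -1 := by
  intro g hg
  have hnK : n ≤ k*n := Nat.le_mul_of_pos_left n hk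
  have hmK : m ≤ k*n := le_trans hmn hnK
  have hmkn : m ≤ k*n + n := le_trans hmK (Nat.le_add_right _ n)
  unfold W at hg
  rw [Finset.mem_filter] at hg
  obtain ⟨-, hc0, hc1⟩ := hg
  have e3 : countv g 0 + countv g 1 + countv g 2 = (k*n + n - m) + 1 := countv_sum g
  have hc2 : countv g 2 = k*n - m + 1 := by
    rw [hc0, hc1] at e3
    zify [hmn, hmK, hmkn] at e3 ⊢
    linarith
  have h := pre_N k g
  rw [sum_fiber g (wval k), hc0, hc1, hc2, (wval_vals k).1, (wval_vals k).2.1,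
    (wval_vals k).2.2] at h
  rw [h]
  push_cast [Nat.cast_sub hmn, Nat.cast_sub hmK]
  ring

lemma domW_card (k n m : ℕ) (hk : 1 ≤ k) (hn : 1 ≤ n) (hmn : m ≤ n) :
    (n : ℚ) * (DomW (N := k*n+n-m+1) k (n-m) m).card
      = (n.choose m) * ((k*n + n - m).choose (n-1)) := by
  have hnK : n ≤ k*n := Nat.le_mul_of_pos_left n hk
  have h1 := card_W_eq_mul (N := k*n+n-m+1) k (n-m) m (W_pre_neg k n m hk hmn)
  have h2 := card_W (N := k*n+n-m+1) (n-m) m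
  rw [h1] at h2
  -- h2 : (k*n+n-m+1) * D = choose * choose
  set D := (DomW (N := k*n+n-m+1) k (n-m) m).card with hD
  have e1 : k*n+n-m+1-(n-m) = k*n+1 := by
    generalize k*n = K at hnK ⊢
    omega
  rw [e1] at h2
  -- now pure arithmetic
  have e2 : k*n+n-m = k*n + (n - m) := by
    generalize k*n = K at hnK ⊢
    omega
  have hq : ((k*n+n-m+1 : ℕ) : ℚ) * D = ((k*n+n-m+1).choose (n-m)) * ((k*n+1).choose m) := by
    exact_mod_cast h2
  have hN0 : ((k*n+n-m+1 : ℕ) : ℚ) ≠ 0 := Nat.cast_ne_zero.mpr (by omega)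
  have hc_a : (((k*n+n-m+1).choose (n-m) : ℕ) : ℚ)
      = ((k*n+n-m+1).factorial : ℚ) / ((n-m).factorial * (k*n+1).factorial) := by
    have := Nat.cast_choose ℚ (show n-m ≤ k*n+n-m+1 by omega)
    rw [e1] at this
    exact this
  have hc_b : (((k*n+1).choose m : ℕ) : ℚ) = ((k*n+1).factorial : ℚ) / (m.factorial * (k*n+1-m).factorial) :=
    Nat.cast_choose ℚ (by omega)
  have hc_c : ((n.choose m : ℕ) : ℚ) = (n.factorial : ℚ) / (m.factorial * (n-m).factorial) :=
    Nat.cast_choose ℚ hmn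
  have hc_d : (((k*n+n-m).choose (n-1) : ℕ) : ℚ)
      = ((k*n+n-m).factorial : ℚ) / ((n-1).factorial * (k*n+1-m).factorial) := by
    have hle : n-1 ≤ k*n+n-m := by
      generalize k*n = K at hnK ⊢
      omega
    have hsub : k*n+n-m-(n-1) = k*n+1-m := by
      generalize k*n = K at hnK ⊢
      omega
    have := Nat.cast_choose ℚ hle
    rw [hsub] at this
    exact this
  have hfacN : ((k*n+n-m+1).factorial : ℚ) = ((k*n+n-m+1 : ℕ) : ℚ) * ((k*n+n-m).factorial : ℚ) := by
    rw [Nat.factorial_succ]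
    push_cast
    ring
  have hfacn : (n.factorial : ℚ) = (n : ℚ) * ((n-1).factorial : ℚ) := by
    have h4 := Nat.factorial_succ (n-1)
    have h3 : n - 1 + 1 = n := by omega
    rw [h3] at h4
    exact_mod_cast h4
  have hf1 : ((n-m).factorial : ℚ) ≠ 0 := Nat.cast_ne_zero.mpr (Nat.factorial_ne_zero _)
  have hf2 : (m.factorial : ℚ) ≠ 0 := Nat.cast_ne_zero.mpr (Nat.factorial_ne_zero _)
  have hf3 : ((k*n+1).factorial : ℚ) ≠ 0 := Nat.cast_ne_zero.mpr (Nat.factorial_ne_zero _)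
  have hf4 : ((k*n+1-m).factorial : ℚ) ≠ 0 := Nat.cast_ne_zero.mpr (Nat.factorial_ne_zero _)
  have hf5 : ((n-1).factorial : ℚ) ≠ 0 := Nat.cast_ne_zero.mpr (Nat.factorial_ne_zero _)
  have hq' : (D : ℚ) * ((n-m).factorial * m.factorial * (k*n+1-m).factorial)
      = ((k*n+n-m).factorial : ℚ) := by
    apply mul_left_cancel₀
      (mul_ne_zero hN0 hf3 : ((k*n+n-m+1 : ℕ) : ℚ) * ((k*n+1).factorial : ℚ) ≠ 0)
    rw [hc_a, hc_b, hfacN] at hq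
    rw [div_mul_div_comm, eq_div_iff (by positivity)] at hq
    push_cast at hq ⊢
    linear_combination hq
  rw [hc_c, hc_d, hfacn, div_mul_div_comm, eq_div_iff (by positivity : 
      ((m.factorial : ℚ) * (n-m).factorial) * ((n-1).factorial * (k*n+1-m).factorial) ≠ 0)]
  linear_combination ((n : ℚ) * ((n-1).factorial : ℚ)) * hq'

lemma ncard_eq_T (k n : ℕ) (hk : 1 ≤ k) :
    {w | IsKSchroederB k n w}.ncard = (T k n).card := by
  have himg : F k n '' {w | IsKSchroederB k n w} = ↑(T k n) := by
    ext x
    constructor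
    · rintro ⟨w, hw, rfl⟩
      exact F_mem_T k n hk w hw
    · intro hx
      obtain ⟨w, hw, hFw⟩ := T_surj k n hk x hx
      exact ⟨w, hw, hFw⟩
  rw [← Set.ncard_coe_finset, ← himg, Set.ncard_image_of_injOn (F_injOn k n hk)]

lemma ncard_formula (k n : ℕ) (hk : 1 ≤ k) (hn : 1 ≤ n) :
    ({w | IsKSchroederB k n w}.ncard : ℚ) = (1/(n:ℚ)) * (phi k ^ n).coeff (n-1) := by
  have hcard : ({w | IsKSchroederB k n w}.ncard : ℚ)
      = ∑ m ∈ range (n+1), ((DomW (N := k*n+n-m+1) k (n-m) m).card : ℚ) := by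
    rw [ncard_eq_T k n hk, T, Finset.card_sigma]
    push_cast
    rfl
  have hmul : (n:ℚ) * ({w | IsKSchroederB k n w}.ncard : ℚ)
      = ∑ m ∈ range (n+1), ((n.choose m : ℕ) : ℚ) * (((k*n + n - m).choose (n-1) : ℕ) : ℚ) := by
    rw [hcard, Finset.mul_sum]
    refine Finset.sum_congr rfl fun m hm => ?_
    exact domW_card k n m hk hn (by simpa [Nat.lt_succ_iff] using hm)
  have hE2 := E2 k n
  have hn0 : (n:ℚ) ≠ 0 := Nat.cast_ne_zero.mpr (by omega)
  rw [hE2, ← hmul]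
  field_simp

end SchroederAux

/-- If `χ = 1 + x(χ^k + χ^{k+1})` then
`[xⁿ]χ = (1/n) Σ_{m=0}^{n-1} 2^{m+1} C(nk, m) C(n, n-m-1)`, and the number of
`k`-Schröder paths of type B of size `n` is given by the same expression. -/
theorem schroederB_coeff_formula (k n : ℕ) (hk : 1 ≤ k) (hn : 1 ≤ n)
    (χ : PowerSeries ℚ)
    (hχ : χ = 1 + PowerSeries.X * (χ ^ k + χ ^ (k + 1))) :
    (PowerSeries.coeff n) χ
        = (1 / (n : ℚ)) * ∑ m ∈ Finset.range n,
            2 ^ (m + 1) * ((n * k).choose m : ℚ) * (n.choose (n - m - 1) : ℚ) ∧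
    ({w : List (ℕ × ℕ) | IsKSchroederB k n w}.ncard : ℚ)
        = (1 / (n : ℚ)) * ∑ m ∈ Finset.range n,
            2 ^ (m + 1) * ((n * k).choose m : ℚ) * (n.choose (n - m - 1) : ℚ) := by
  constructor
  · rw [SchroederAux.coeff_chi k n hn χ hχ, SchroederAux.E1 k n hn]
  · rw [SchroederAux.ncard_formula k n hk hn, SchroederAux.E1 k n hn]
end

section
/- For n ≥ 1, the two expressions (1/n) Σ_{m=0}^{n−1} 2^{m+1} binomial(nk, m) binomial(n, n−m−1) and (1/n) Σ_{j=0}^{n} binomial(n, j) binomial(kn+j, n−1) are equal; both count k-Schröder paths of type B of size n. -/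
open Finset

lemma aux_sum_choose_choose (n b : ℕ) (hb : b ≤ n) :
    ∑ j ∈ range (n + 1), n.choose j * j.choose b = 2 ^ (n - b) * n.choose b := by
  have h1 : ∑ j ∈ range (n + 1), n.choose j * j.choose b
      = ∑ j ∈ Ico b (n + 1), n.choose j * j.choose b := by
    rw [range_eq_Ico, ← Finset.sum_Ico_consecutive _ (Nat.zero_le b) (by omega)]
    have : ∑ j ∈ Ico 0 b, n.choose j * j.choose b = 0 := by
      apply Finset.sum_eq_zero
      intro j hj
      simp only [mem_Ico] at hj
      rw [Nat.choose_eq_zero_of_lt hj.2, mul_zero]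
    omega
  rw [h1, Finset.sum_Ico_eq_sum_range]
  have h2 : ∀ i ∈ range (n + 1 - b), n.choose (b + i) * (b + i).choose b
      = n.choose b * (n - b).choose i := by
    intro i hi
    simp only [mem_range] at hi
    rw [Nat.choose_mul (by omega), Nat.add_sub_cancel_left]
  rw [Finset.sum_congr rfl h2, ← Finset.mul_sum]
  have h3 : n + 1 - b = (n - b) + 1 := by omega
  rw [h3, Nat.sum_range_choose, mul_comm]

lemma nat_version (k n : ℕ) (hn : 1 ≤ n) :
    ∑ m ∈ range n, 2 ^ (m + 1) * (n * k).choose m * n.choose (n - m - 1)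
      = ∑ j ∈ range (n + 1), n.choose j * (k * n + j).choose (n - 1) := by
  have expand : ∀ j, n.choose j * (k * n + j).choose (n - 1)
      = ∑ a ∈ range n, (k * n).choose a * (n.choose j * j.choose (n - 1 - a)) := by
    intro j
    rw [Nat.add_choose_eq, Finset.Nat.sum_antidiagonal_eq_sum_range_succ
      (fun a b => (k * n).choose a * j.choose b), Finset.mul_sum]
    have h0 : n - 1 + 1 = n := by omega
    simp only [Nat.succ_eq_add_one, h0]
    apply Finset.sum_congr rfl
    intro a _
    ring
  calc ∑ m ∈ range n, 2 ^ (m + 1) * (n * k).choose m * n.choose (n - m - 1)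
      = ∑ a ∈ range n, (k * n).choose a *
          ∑ j ∈ range (n + 1), n.choose j * j.choose (n - 1 - a) := by
        apply Finset.sum_congr rfl
        intro a ha
        simp only [mem_range] at ha
        rw [aux_sum_choose_choose n (n - 1 - a) (by omega)]
        have h4 : n - (n - 1 - a) = a + 1 := by omega
        have h5 : n - a - 1 = n - 1 - a := by omega
        rw [h4, h5, mul_comm n k]
        ring
    _ = ∑ j ∈ range (n + 1), n.choose j * (k * n + j).choose (n - 1) := by
        simp_rw [expand, Finset.mul_sum]
        rw [Finset.sum_comm]

/-- The two formulas for the number of `k`-Schröder paths of type B of size `n` agree: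
`(1/n) Σ_{m=0}^{n-1} 2^{m+1} C(nk, m) C(n, n-m-1) = (1/n) Σ_{j=0}^{n} C(n,j) C(kn+j, n-1)`. -/
theorem schroederB_two_formulas (k n : ℕ) (hk : 1 ≤ k) (hn : 1 ≤ n) :
    (1 / (n : ℚ)) * ∑ m ∈ Finset.range n,
        2 ^ (m + 1) * ((n * k).choose m : ℚ) * (n.choose (n - m - 1) : ℚ)
      = (1 / (n : ℚ)) * ∑ j ∈ Finset.range (n + 1),
          (n.choose j : ℚ) * ((k * n + j).choose (n - 1) : ℚ) := by
  congr 1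
  have := nat_version k n hn
  have : ((∑ m ∈ range n, 2 ^ (m + 1) * (n * k).choose m * n.choose (n - m - 1) : ℕ) : ℚ)
      = ((∑ j ∈ range (n + 1), n.choose j * (k * n + j).choose (n - 1) : ℕ) : ℚ) := by
    exact congrArg (fun x : ℕ => (x : ℚ)) this
  push_cast at this
  convert this using 2
end

section
/- If the formal power series ν satisfies ν = 1 + x(ν + ν^{k+1}), then [x^n]ν = (1/n) Σ_{j=0}^{n} binomial(n, j) binomial(n+kj, n−1) for n ≥ 1. Consequently, the number of k-Schröder paths of type A of size n equals this expression. -/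
/-- A `k`-Schröder path of type A of size `n`: a lattice path from `(0,0)` to `(kn,n)`
with steps `U = (0,1)`, `D = (1,0)`, `H = (k,1)` (recorded as pairs `(Δx, Δy)`),
never going below `y = x/k`. -/
def IsKSchroederA (k n : ℕ) (w : List (ℕ × ℕ)) : Prop :=
  (∀ s ∈ w, s = (0, 1) ∨ s = (1, 0) ∨ s = (k, 1)) ∧
  (w.map Prod.fst).sum = k * n ∧ (w.map Prod.snd).sum = n ∧
  ∀ i, ((w.take i).map Prod.fst).sum ≤ k * ((w.take i).map Prod.snd).sum


open PowerSeries Finset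

noncomputable def dd : Derivation ℚ ℚ⟦X⟧ ℚ⟦X⟧ := PowerSeries.derivative ℚ

lemma dd_coeff (f : ℚ⟦X⟧) (m : ℕ) : coeff m (dd f) = coeff (m+1) f * (m+1) :=
  PowerSeries.coeff_derivative f m

-- residue lemma
lemma resid (u : ℚ⟦X⟧) (hu : constantCoeff u ≠ 0) (m : ℕ) (hm : 1 ≤ m) :
    coeff (m - 1) (dd (X * u) * u⁻¹ ^ m) = if m = 1 then 1 else 0 := by
  have huw : u * u⁻¹ = 1 := PowerSeries.mul_inv_cancel u hu
  have hderiv : dd (X * u) = u + X * dd u := by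
    rw [Derivation.leibniz]
    simp only [dd, PowerSeries.derivative_X, smul_eq_mul, mul_one, one_mul]
    ring
  rcases eq_or_lt_of_le hm with h1 | h2
  · rw [← h1]
    simp only [pow_one, hderiv, if_pos rfl]
    rw [add_mul, map_add]
    have h0 : coeff 0 (u * u⁻¹) = 1 := by rw [huw]; simp
    rw [show (1:ℕ) - 1 = 0 from rfl, h0, mul_assoc]
    simp [PowerSeries.coeff_zero_eq_constantCoeff]
  · -- m ≥ 2
    have hm2 : 2 ≤ m := h2
    have hdw : dd u * u⁻¹ ^ 2 = - dd u⁻¹ := by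
      have h0 : dd (u * u⁻¹) = 0 := by rw [huw]; exact Derivation.map_one_eq_zero dd
      rw [Derivation.leibniz] at h0
      have h0' := congrArg (fun z => z * u⁻¹) h0
      simp only [smul_eq_mul, add_mul, zero_mul] at h0'
      linear_combination h0' - dd u⁻¹ * huw
    have key : dd (X * u) * u⁻¹ ^ m = u⁻¹ ^ (m-1) - X * (dd u⁻¹ * u⁻¹ ^ (m-2)) := by
      have e1 : u * u⁻¹ ^ m = u⁻¹ ^ (m-1) := by
        conv_lhs => rw [show m = (m-1) + 1 by omega, pow_succ', ← mul_assoc, huw, one_mul]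
      have e2 : dd u * u⁻¹ ^ m = - (dd u⁻¹ * u⁻¹ ^ (m-2)) := by
        conv_lhs => rw [show m = 2 + (m-2) by omega, pow_add, ← mul_assoc, hdw]
        ring
      rw [hderiv, add_mul, e1, mul_assoc, e2]; ring
    rw [key, map_sub]
    have hup : dd (u⁻¹ ^ (m-1)) = ((m-1 : ℕ) : ℚ⟦X⟧) * (u⁻¹ ^ (m-2) * dd u⁻¹) := by
      rw [Derivation.leibniz_pow]
      simp only [smul_eq_mul, nsmul_eq_mul]
      have : m - 1 - 1 = m - 2 := by omega
      rw [this]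
    have h1 : coeff (m-1) (X * (dd u⁻¹ * u⁻¹ ^ (m-2))) = coeff (m-2) (dd u⁻¹ * u⁻¹ ^ (m-2)) := by
      have hm' : m - 1 = (m-2) + 1 := by omega
      rw [hm', PowerSeries.coeff_succ_X_mul]
    have h2' : coeff (m-2) (dd (u⁻¹ ^ (m-1))) = coeff (m-1) (u⁻¹ ^ (m-1)) * ((m-1:ℕ):ℚ) := by
      rw [dd_coeff]
      have e1 : m - 2 + 1 = m - 1 := by omega
      rw [e1, show ((m-2:ℕ):ℚ) + 1 = ((m-1:ℕ):ℚ) by norm_cast]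
    have h3 : coeff (m-2) (dd (u⁻¹ ^ (m-1)))
        = ((m-1:ℕ):ℚ) * coeff (m-2) (u⁻¹ ^ (m-2) * dd u⁻¹) := by
      rw [hup]
      rw [show ((m-1:ℕ) : ℚ⟦X⟧) = PowerSeries.C ((m-1:ℕ):ℚ) by push_cast; simp]
      rw [PowerSeries.coeff_C_mul]
    have hne : ((m-1:ℕ):ℚ) ≠ 0 := by
      have : 1 ≤ m - 1 := by omega
      positivity
    have hAB : coeff (m-2) (u⁻¹ ^ (m-2) * dd u⁻¹) = coeff (m-1) (u⁻¹ ^ (m-1)) :=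
      mul_left_cancel₀ hne (by rw [← h3, h2']; ring)
    have h4 : coeff (m-2) (dd u⁻¹ * u⁻¹ ^ (m-2)) = coeff (m-1) (u⁻¹ ^ (m-1)) := by
      rw [mul_comm (dd u⁻¹)]; exact hAB
    rw [h1, h4, if_neg (by omega)]
    ring

lemma coeff_natCast_mul (c : ℕ) (f : ℚ⟦X⟧) (m : ℕ) :
    coeff m ((c : ℚ⟦X⟧) * f) = (c : ℚ) * coeff m f := by
  rw [← map_natCast (PowerSeries.C) c, PowerSeries.coeff_C_mul]

lemma winv (u : ℚ⟦X⟧) (huw : u * u⁻¹ = 1) (n t : ℕ) (ht : t ≤ n) :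
    u⁻¹ ^ n * u ^ t = u⁻¹ ^ (n - t) := by
  conv_lhs => rw [show n = (n - t) + t by omega]
  rw [pow_add, mul_assoc, ← mul_pow, mul_comm u⁻¹ u, huw, one_pow, mul_one]

lemma inner_coeff (u : ℚ⟦X⟧) (hu : constantCoeff u ≠ 0) (n N : ℕ) (hn : 1 ≤ n)
    (hN : n - 1 ≤ N) :
    coeff (n-1) (dd (X*u) * u⁻¹^n * (1 + X*u)^N) = (N.choose (n-1) : ℚ) := by
  have huw : u * u⁻¹ = 1 := PowerSeries.mul_inv_cancel u hu
  rw [show ((1:ℚ⟦X⟧) + X*u) = (X*u + 1) from by ring, add_pow, Finset.mul_sum, map_sum]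
  rw [Finset.sum_eq_single (n-1)]
  · have e : dd (X*u) * u⁻¹^n * ((X*u)^(n-1) * (1:ℚ⟦X⟧)^(N-(n-1)) * ((N.choose (n-1):ℕ):ℚ⟦X⟧))
        = ((N.choose (n-1):ℕ):ℚ⟦X⟧) * (X^(n-1) * (dd (X*u) * (u⁻¹^n * u^(n-1)))) := by
      rw [mul_pow, one_pow]; ring
    rw [e, coeff_natCast_mul, winv u huw n (n-1) (by omega),
      PowerSeries.coeff_X_pow_mul' _ _ _, if_pos le_rfl, Nat.sub_self,
      show n - (n-1) = 1 by omega]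
    have := resid u hu 1 le_rfl
    rw [if_pos rfl] at this
    rw [show (0:ℕ) = 1 - 1 from rfl, this, mul_one]
  · intro t ht htne
    have e : dd (X*u) * u⁻¹^n * ((X*u)^t * (1:ℚ⟦X⟧)^(N-t) * ((N.choose t:ℕ):ℚ⟦X⟧))
        = ((N.choose t:ℕ):ℚ⟦X⟧) * (X^t * (dd (X*u) * (u⁻¹^n * u^t))) := by
      rw [mul_pow, one_pow]; ring
    rw [e, coeff_natCast_mul, PowerSeries.coeff_X_pow_mul' _ _ _]
    by_cases htn : t ≤ n - 1
    · rw [if_pos htn, winv u huw n t (by omega)]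
      have hres := resid u hu (n - t) (by omega)
      rw [if_neg (by omega)] at hres
      rw [show n - 1 - t = n - t - 1 by omega, hres, mul_zero]
    · rw [if_neg htn, mul_zero]
  · intro h
    exact absurd (Finset.mem_range.2 (by omega)) h

lemma part1_core (k n : ℕ) (hn : 1 ≤ n) (u : ℚ⟦X⟧) (hu0 : constantCoeff u ≠ 0)
    (hu_fact : u = (1 + X*u) * (1 + (1 + X*u)^k)) :
    (n:ℚ) * coeff n (1 + X * u)
      = ∑ j ∈ Finset.range (n+1), (n.choose j : ℚ) * ((n + k*j).choose (n-1) : ℚ) := by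
  have huw : u * u⁻¹ = 1 := PowerSeries.mul_inv_cancel u hu0
  have h1 : coeff (n-1) (dd (X * u)) = (n:ℚ) * coeff n (1 + X * u) := by
    rw [dd_coeff, show n - 1 + 1 = n by omega]
    have hc : coeff n (1 + X * u) = coeff n (X * u) := by
      rw [map_add, PowerSeries.coeff_one, if_neg (by omega), zero_add]
    rw [← hc, show ((n-1 : ℕ):ℚ) + 1 = (n:ℚ) by rw [Nat.cast_sub hn]; push_cast; ring]
    ring
  rw [← h1]
  have hone : u⁻¹ ^ n * u ^ n = 1 := by rw [← mul_pow, mul_comm u⁻¹ u, huw, one_pow]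
  have h2 : coeff (n-1) (dd (X*u)) = coeff (n-1) (dd (X*u) * u⁻¹^n * u^n) := by
    rw [mul_assoc, hone, mul_one]
  rw [h2]
  have hun : u ^ n = ∑ j ∈ Finset.range (n+1), ((n.choose j : ℕ) : ℚ⟦X⟧) * (1+X*u)^(n+k*j) := by
    calc u ^ n = ((1+X*u) * (1 + (1+X*u)^k))^n := by rw [← hu_fact]
      _ = (((1+X*u)^k + 1))^n * (1+X*u)^n := by
            rw [mul_pow, mul_comm, add_comm (1:ℚ⟦X⟧) ((1+X*u)^k)]
      _ = (∑ j ∈ Finset.range (n+1), ((1+X*u)^k)^j * (1:ℚ⟦X⟧)^(n-j) * ((n.choose j:ℕ) : ℚ⟦X⟧))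
            * (1+X*u)^n := by rw [add_pow]
      _ = ∑ j ∈ Finset.range (n+1), ((n.choose j :ℕ): ℚ⟦X⟧) * (1+X*u)^(n+k*j) := by
          rw [Finset.sum_mul]
          apply Finset.sum_congr rfl
          intro j hj
          rw [one_pow, ← pow_mul, pow_add]
          ring
  rw [hun, Finset.mul_sum, map_sum]
  apply Finset.sum_congr rfl
  intro j hj
  have e : dd (X*u) * u⁻¹^n * (((n.choose j : ℕ) : ℚ⟦X⟧) * (1+X*u)^(n+k*j))
      = ((n.choose j : ℕ) : ℚ⟦X⟧) * (dd (X*u) * u⁻¹^n * (1+X*u)^(n+k*j)) := by ring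
  rw [e, coeff_natCast_mul, inner_coeff u hu0 n (n+k*j) hn (by omega)]

lemma part1 (k n : ℕ) (hn : 1 ≤ n) (ν : ℚ⟦X⟧)
    (hν : ν = 1 + X * (ν + ν ^ (k+1))) :
    (n:ℚ) * coeff n ν
      = ∑ j ∈ Finset.range (n+1), (n.choose j : ℚ) * ((n + k*j).choose (n-1) : ℚ) := by
  have hν0 : constantCoeff ν = 1 := by
    have h := congrArg (constantCoeff) hν
    simpa using h
  have hu0 : constantCoeff (ν + ν ^ (k+1)) ≠ 0 := by
    have h2 : constantCoeff (ν + ν ^ (k+1)) = 2 := by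
      rw [map_add, map_pow, hν0]; norm_num
    rw [h2]; norm_num
  have hu_fact : (ν + ν ^ (k+1)) = (1 + X*(ν + ν ^ (k+1))) * (1 + (1 + X*(ν + ν ^ (k+1)))^k) := by
    rw [← hν]; ring
  conv_lhs => rw [hν]
  exact part1_core k n hn (ν + ν ^ (k+1)) hu0 hu_fact




/-- all proper prefixes have nonnegative sum -/
def GoodZ (a : List ℤ) : Prop := ∀ i < a.length, 0 ≤ (a.take i).sum

lemma take_sum_drop (a : List ℤ) (r i : ℕ) :
    ((a.drop r).take i).sum = (a.take (r + i)).sum - (a.take r).sum := by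
  have h := List.take_add (l := a) (i := r) (j := i)
  have := congrArg List.sum h
  rw [List.sum_append] at this
  omega

lemma rotate_take_sum_low (a : List ℤ) (r i : ℕ) (hr : r ≤ a.length) (hi : i ≤ a.length - r) :
    ((a.rotate r).take i).sum = (a.take (r + i)).sum - (a.take r).sum := by
  rw [List.rotate_eq_drop_append_take hr, List.take_append, List.sum_append]
  have hlen : (a.drop r).length = a.length - r := List.length_drop (i := r) (l := a)
  have h0 : i - (a.drop r).length = 0 := by omega
  rw [h0, List.take_zero, List.sum_nil, add_zero, take_sum_drop]

lemma rotate_take_sum_high (a : List ℤ) (r i : ℕ) (hr : r ≤ a.length)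
    (hi : a.length - r ≤ i) (hi2 : i ≤ a.length) :
    ((a.rotate r).take i).sum = a.sum - (a.take r).sum + (a.take (r + i - a.length)).sum := by
  rw [List.rotate_eq_drop_append_take hr, List.take_append, List.sum_append]
  have hlen : (a.drop r).length = a.length - r := List.length_drop (i := r) (l := a)
  have h1 : (a.drop r).take i = a.drop r := List.take_of_length_le (by omega)
  have h2 : (a.drop r).sum = a.sum - (a.take r).sum := by
    have h := congrArg List.sum (List.take_append_drop r a)
    rw [List.sum_append] at h; omega
  rw [h1, h2, List.take_take, hlen]
  have h3 : min (i - (a.length - r)) r = r + i - a.length := by omega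
  rw [h3]

lemma cycle_exists (a : List ℤ) (h : a.sum = -1) :
    ∃ r < a.length, GoodZ (a.rotate r) := by
  classical
  have hSL : (a.take a.length).sum = -1 := by rw [List.take_of_length_le (le_refl _), h]
  have hS0 : (a.take 0).sum = 0 := by simp
  have hL1 : 1 ≤ a.length := by
    rcases Nat.eq_zero_or_pos a.length with h0 | h1
    · rw [h0, hS0] at hSL; exact absurd hSL (by norm_num)
    · exact h1
  obtain ⟨r0, hr0L, hr0min, hstrict⟩ :
      ∃ r0, r0 ≤ a.length ∧ (∀ j ≤ a.length, (a.take r0).sum ≤ (a.take j).sum) ∧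
        (∀ i < r0, (a.take r0).sum < (a.take i).sum) := by
    obtain ⟨m0, hm0mem, hm0min⟩ := Finset.exists_min_image (Finset.range (a.length+1))
      (fun i => (a.take i).sum) ⟨0, Finset.mem_range.2 (by omega)⟩
    have hTne : ((Finset.range (a.length+1)).filter
        (fun i => ∀ j ≤ a.length, (a.take i).sum ≤ (a.take j).sum)).Nonempty := by
      refine ⟨m0, Finset.mem_filter.2 ⟨hm0mem, fun j hj => ?_⟩⟩
      exact hm0min j (Finset.mem_range.2 (by omega))
    refine ⟨Finset.min' _ hTne, ?_, ?_, ?_⟩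
    · have hmem := Finset.min'_mem _ hTne
      rw [Finset.mem_filter, Finset.mem_range] at hmem
      omega
    · have hmem := Finset.min'_mem _ hTne
      rw [Finset.mem_filter] at hmem
      exact hmem.2
    · intro i hi
      have hmem := Finset.min'_mem _ hTne
      rw [Finset.mem_filter] at hmem
      have hiT : i ∉ (Finset.range (a.length+1)).filter
          (fun i => ∀ j ≤ a.length, (a.take i).sum ≤ (a.take j).sum) := by
        intro hmem2
        have := Finset.min'_le _ i hmem2
        omega
      rw [Finset.mem_filter, Finset.mem_range] at hiT
      push_neg at hiT
      have hmemr : i < a.length + 1 := by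
        have := Finset.min'_mem _ hTne
        rw [Finset.mem_filter, Finset.mem_range] at this
        omega
      rcases hiT hmemr with ⟨jj, hjL, hjlt⟩
      exact lt_of_le_of_lt (hmem.2 jj hjL) hjlt
  have hr0pos : 1 ≤ r0 := by
    by_contra hc
    have h0 : r0 = 0 := by omega
    have hcmp := hr0min a.length (le_refl _)
    rw [h0, hS0, hSL] at hcmp
    omega
  by_cases hcase : r0 = a.length
  · refine ⟨0, by omega, ?_⟩
    rw [List.rotate_zero]
    intro i hi
    have hlt := hstrict i (by omega)
    rw [hcase, hSL] at hlt
    omega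
  · refine ⟨r0, by omega, ?_⟩
    intro i hi
    rw [List.length_rotate] at hi
    by_cases hlow : i ≤ a.length - r0
    · rw [rotate_take_sum_low a r0 i hr0L hlow]
      have hcmp := hr0min (r0 + i) (by omega)
      omega
    · rw [rotate_take_sum_high a r0 i hr0L (by omega) (by omega), h]
      have hlt := hstrict (r0 + i - a.length) (by omega)
      omega

lemma cycle_unique (a : List ℤ) (h : a.sum = -1) (hg : GoodZ a) (t : ℕ)
    (ht : t < a.length) (hgt : GoodZ (a.rotate t)) : t = 0 := by
  by_contra hne
  have ht1 : 1 ≤ t := by omega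
  have hL1 : 1 ≤ a.length := by omega
  have h1 := hgt (a.length - t) (by rw [List.length_rotate]; omega)
  rw [rotate_take_sum_high a t (a.length - t) (by omega) (le_refl _) (by omega)] at h1
  have h2 : t + (a.length - t) - a.length = 0 := by omega
  rw [h2] at h1
  simp only [List.take_zero, List.sum_nil, add_zero, h] at h1
  have h3 := hg t ht
  omega


def stepU : ℕ × ℕ := (0, 1)
def stepD : ℕ × ℕ := (1, 0)
def stepH (k : ℕ) : ℕ × ℕ := (k, 1)

def sval (k : ℕ) (s : ℕ × ℕ) : ℤ := (k : ℤ) * s.2 - s.1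

def vlist (k : ℕ) (w : List (ℕ × ℕ)) : List ℤ := w.map (sval k)

lemma stepU_ne_stepD : stepU ≠ stepD := by simp [stepU, stepD]
lemma stepU_ne_stepH (k : ℕ) (hk : 1 ≤ k) : stepU ≠ stepH k := by
  simp [stepU, stepH]; omega
lemma stepD_ne_stepH (k : ℕ) : stepD ≠ stepH k := by simp [stepD, stepH]

def wordOf (k L : ℕ) (A B : Finset ℕ) : List (ℕ × ℕ) :=
  (List.range L).map (fun i => if i ∈ A then stepU else if i ∈ B then stepH k else stepD)

noncomputable def AllF (k L j h : ℕ) : Finset (List (ℕ × ℕ)) :=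
  (((Finset.range L).powersetCard j).sigma
    (fun A => ((Finset.range L) \ A).powersetCard h)).image
    (fun p => wordOf k L p.1 p.2)

lemma count_map_range (g : ℕ → ℕ × ℕ) (c : ℕ × ℕ) (L : ℕ) :
    ((List.range L).map g).count c = ((Finset.range L).filter (fun i => g i = c)).card := by
  induction L with
  | zero => simp
  | succ m ih =>
      rw [List.range_succ, List.map_append, List.count_append, Finset.range_add_one,
        Finset.filter_insert]
      by_cases hc : g m = c
      · rw [if_pos hc, Finset.card_insert_of_notMem (by simp)]
        simp [hc, ih]
      · rw [if_neg hc]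
        simp [List.count_singleton, hc, ih]

lemma length_wordOf (k L : ℕ) (A B : Finset ℕ) : (wordOf k L A B).length = L := by
  simp [wordOf]

lemma counts_wordOf (k L : ℕ) (hk : 1 ≤ k) (A B : Finset ℕ) (hA : A ⊆ Finset.range L)
    (hB : B ⊆ Finset.range L) (hAB : Disjoint A B) :
    (wordOf k L A B).count stepU = A.card ∧ (wordOf k L A B).count (stepH k) = B.card := by
  constructor
  · rw [wordOf, count_map_range]
    congr 1
    ext i
    simp only [Finset.mem_filter, Finset.mem_range]
    constructor
    · rintro ⟨hi, hval⟩
      by_cases h1 : i ∈ A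
      · exact h1
      · exfalso
        rw [if_neg h1] at hval
        by_cases h2 : i ∈ B
        · rw [if_pos h2] at hval; exact (stepU_ne_stepH k hk) hval.symm
        · rw [if_neg h2] at hval; exact stepU_ne_stepD hval.symm
    · intro h1
      exact ⟨Finset.mem_range.1 (hA h1), by rw [if_pos h1]⟩
  · rw [wordOf, count_map_range]
    congr 1
    ext i
    simp only [Finset.mem_filter, Finset.mem_range]
    constructor
    · rintro ⟨hi, hval⟩
      by_cases h1 : i ∈ A
      · rw [if_pos h1] at hval; exact absurd hval (stepU_ne_stepH k hk)
      · rw [if_neg h1] at hval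
        by_cases h2 : i ∈ B
        · exact h2
        · rw [if_neg h2] at hval; exact absurd hval (stepD_ne_stepH k)
    · intro h1
      refine ⟨Finset.mem_range.1 (hB h1), ?_⟩
      rw [if_neg (fun h2 => (Finset.disjoint_left.1 hAB) h2 h1), if_pos h1]

lemma alphabet_wordOf (k L : ℕ) (A B : Finset ℕ) :
    ∀ s ∈ wordOf k L A B, s = stepU ∨ s = stepD ∨ s = stepH k := by
  intro s hs
  rw [wordOf, List.mem_map] at hs
  obtain ⟨i, _, hi⟩ := hs
  by_cases h1 : i ∈ A
  · rw [if_pos h1] at hi; left; exact hi.symm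
  · rw [if_neg h1] at hi
    by_cases h2 : i ∈ B
    · rw [if_pos h2] at hi; right; right; exact hi.symm
    · rw [if_neg h2] at hi; right; left; exact hi.symm

lemma mem_AllF (k L j h : ℕ) (hk : 1 ≤ k) (w : List (ℕ × ℕ)) :
    w ∈ AllF k L j h ↔ w.length = L ∧ (∀ s ∈ w, s = stepU ∨ s = stepD ∨ s = stepH k)
      ∧ w.count stepU = j ∧ w.count (stepH k) = h := by
  constructor
  · intro hw
    rw [AllF, Finset.mem_image] at hw
    obtain ⟨⟨A, B⟩, hmem, hword⟩ := hw
    rw [Finset.mem_sigma, Finset.mem_powersetCard, Finset.mem_powersetCard] at hmem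
    obtain ⟨⟨hA, hAcard⟩, hB', hBcard⟩ := hmem
    have hB : B ⊆ Finset.range L := hB'.trans (Finset.sdiff_subset)
    have hAB : Disjoint A B := by
      rw [Finset.disjoint_right]
      intro x hxB
      exact fun hxA => (Finset.mem_sdiff.1 (hB' hxB)).2 hxA
    obtain ⟨hcU, hcH⟩ := counts_wordOf k L hk A B hA hB hAB
    subst hword
    exact ⟨length_wordOf k L A B, alphabet_wordOf k L A B, by rw [hcU, hAcard],
      by rw [hcH, hBcard]⟩
  · rintro ⟨hlen, halph, hcU, hcH⟩
    rw [AllF, Finset.mem_image]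
    classical
    set A := (Finset.range L).filter (fun i => w.getD i stepD = stepU) with hAdef
    set B := (Finset.range L).filter (fun i => w.getD i stepD = stepH k) with hBdef
    have hA : A ⊆ Finset.range L := Finset.filter_subset _ _
    have hB : B ⊆ Finset.range L := Finset.filter_subset _ _
    have hAB : Disjoint A B := by
      rw [Finset.disjoint_left]
      intro x hxA hxB
      rw [hAdef, Finset.mem_filter] at hxA
      rw [hBdef, Finset.mem_filter] at hxB
      exact (stepU_ne_stepH k hk) (hxA.2.symm.trans hxB.2)
    have hword : w = wordOf k L A B := by
      apply List.ext_getElem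
      · rw [hlen, length_wordOf]
      · intro i hi1 hi2
        rw [length_wordOf] at hi2
        have hgetD : w.getD i stepD = w[i] := List.getD_eq_getElem w stepD hi1
        have hmemA : i ∈ A ↔ w[i] = stepU := by
          rw [hAdef, Finset.mem_filter, Finset.mem_range, hgetD]
          exact ⟨fun hx => hx.2, fun hx => ⟨hi2, hx⟩⟩
        have hmemB : i ∈ B ↔ w[i] = stepH k := by
          rw [hBdef, Finset.mem_filter, Finset.mem_range, hgetD]
          exact ⟨fun hx => hx.2, fun hx => ⟨hi2, hx⟩⟩
        have hentry : (wordOf k L A B)[i] =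
            (if i ∈ A then stepU else if i ∈ B then stepH k else stepD) := by
          simp [wordOf]
        rw [hentry]
        rcases halph w[i] (w.getElem_mem hi1) with hU | hD | hH
        · rw [if_pos (hmemA.2 hU), hU]
        · rw [if_neg (fun hx => stepU_ne_stepD ((hmemA.1 hx).symm.trans hD)),
            if_neg (fun hx => (stepD_ne_stepH k) (hD.symm.trans (hmemB.1 hx))), hD]
        · rw [if_neg (fun hx => (stepU_ne_stepH k hk) ((hmemA.1 hx).symm.trans hH)),
            if_pos (hmemB.2 hH), hH]
    obtain ⟨hcU', hcH'⟩ := counts_wordOf k L hk A B hA hB hAB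
    refine ⟨⟨A, B⟩, ?_, hword.symm⟩
    rw [Finset.mem_sigma, Finset.mem_powersetCard, Finset.mem_powersetCard]
    refine ⟨⟨hA, ?_⟩, ?_, ?_⟩
    · rw [← hcU', ← hword, hcU]
    · intro x hxB
      rw [Finset.mem_sdiff]
      exact ⟨hB hxB, fun hxA => (Finset.disjoint_left.1 hAB hxA) hxB⟩
    · rw [← hcH', ← hword, hcH]

lemma card_AllF (k L j h : ℕ) (hk : 1 ≤ k) :
    (AllF k L j h).card = L.choose j * (L - j).choose h := by
  rw [AllF, Finset.card_image_of_injOn]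
  · rw [Finset.card_sigma]
    have hconst : ∀ A ∈ (Finset.range L).powersetCard j,
        ((Finset.range L \ A).powersetCard h).card = (L - j).choose h := by
      intro A hA
      rw [Finset.mem_powersetCard] at hA
      rw [Finset.card_powersetCard, Finset.card_sdiff_of_subset hA.1, Finset.card_range, hA.2]
    rw [Finset.sum_congr rfl hconst, Finset.sum_const, Finset.card_powersetCard,
      Finset.card_range, smul_eq_mul]
  · rintro ⟨A, B⟩ hmem ⟨A', B'⟩ hmem' heq
    simp only [Finset.mem_coe, Finset.mem_sigma, Finset.mem_powersetCard] at hmem hmem'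
    obtain ⟨⟨hA, _⟩, hB', _⟩ := hmem
    obtain ⟨⟨hA2, _⟩, hB2', _⟩ := hmem'
    have hB : B ⊆ Finset.range L := hB'.trans Finset.sdiff_subset
    have hB2 : B' ⊆ Finset.range L := hB2'.trans Finset.sdiff_subset
    have hentry : ∀ i, i < L →
        (if i ∈ A then stepU else if i ∈ B then stepH k else stepD)
          = (if i ∈ A' then stepU else if i ∈ B' then stepH k else stepD) := by
      intro i hi
      have h1 := congrArg (fun l => l.getD i stepD) heq
      simpa [wordOf, List.getD_eq_getElem, hi] using h1
    have hAeq : A = A' := by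
      ext i
      by_cases hi : i < L
      · have he := hentry i hi
        constructor
        · intro hiA
          rw [if_pos hiA] at he
          by_contra hiA'
          rw [if_neg hiA'] at he
          by_cases h2 : i ∈ B'
          · rw [if_pos h2] at he; exact (stepU_ne_stepH k hk) he
          · rw [if_neg h2] at he; exact stepU_ne_stepD he
        · intro hiA'
          rw [if_pos hiA'] at he
          by_contra hiA
          rw [if_neg hiA] at he
          by_cases h2 : i ∈ B
          · rw [if_pos h2] at he; exact (stepU_ne_stepH k hk) he.symm
          · rw [if_neg h2] at he; exact stepU_ne_stepD he.symm
      · constructor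
        · intro hiA; exact absurd (Finset.mem_range.1 (hA hiA)) hi
        · intro hiA; exact absurd (Finset.mem_range.1 (hA2 hiA)) hi
    have hBeq : B = B' := by
      subst hAeq
      ext i
      by_cases hi : i < L
      · have he := hentry i hi
        constructor
        · intro hiB
          have hiA : i ∉ A := (Finset.mem_sdiff.1 (hB' hiB)).2
          rw [if_neg hiA, if_neg hiA, if_pos hiB] at he
          by_contra hiB'
          rw [if_neg hiB'] at he
          exact (stepD_ne_stepH k) he.symm
        · intro hiB'
          have hiA : i ∉ A := (Finset.mem_sdiff.1 (hB2' hiB')).2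
          rw [if_neg hiA, if_neg hiA, if_pos hiB'] at he
          by_contra hiB
          rw [if_neg hiB] at he
          exact (stepD_ne_stepH k) he
      · constructor
        · intro hiB; exact absurd (Finset.mem_range.1 (hB hiB)) hi
        · intro hiB; exact absurd (Finset.mem_range.1 (hB2 hiB)) hi
    subst hAeq
    subst hBeq
    rfl

lemma sval_stepU (k : ℕ) : sval k stepU = (k : ℤ) := by simp [sval, stepU]
lemma sval_stepD (k : ℕ) : sval k stepD = -1 := by simp [sval, stepD]
lemma sval_stepH (k : ℕ) : sval k (stepH k) = 0 := by simp [sval, stepH]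

lemma vlist_sum (k : ℕ) (w : List (ℕ × ℕ)) :
    (vlist k w).sum = (k : ℤ) * ((w.map Prod.snd).sum : ℕ) - ((w.map Prod.fst).sum : ℕ) := by
  induction w with
  | nil => simp [vlist]
  | cons a t ih =>
      simp only [vlist, List.map_cons, List.sum_cons] at ih ⊢
      push_cast
      rw [sval]
      push_cast at ih
      rw [ih]
      ring

lemma counts_sum (k : ℕ) (hk : 1 ≤ k) (w : List (ℕ × ℕ))
    (halph : ∀ s ∈ w, s = stepU ∨ s = stepD ∨ s = stepH k) :
    (w.map Prod.snd).sum = w.count stepU + w.count (stepH k)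
    ∧ (w.map Prod.fst).sum = w.count stepD + k * w.count (stepH k)
    ∧ w.length = w.count stepU + w.count stepD + w.count (stepH k) := by
  induction w with
  | nil => simp
  | cons a t ih =>
      obtain ⟨ih1, ih2, ih3⟩ := ih (fun s hs => halph s (List.mem_cons_of_mem a hs))
      have hkne : ¬ (0 = k) := by omega
      have hkne' : ¬ (k = 0) := by omega
      rcases halph a (List.mem_cons_self) with ha | ha | ha <;> subst ha <;>
        refine ⟨?_, ?_, ?_⟩ <;>
        simp only [List.map_cons, List.sum_cons, List.length_cons, List.count_cons,
          beq_iff_eq, stepU, stepD, stepH, Prod.mk.injEq] at ih1 ih2 ih3 ⊢ <;>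
        simp [hkne, hkne'] <;> ring_nf at ih1 ih2 ih3 ⊢ <;> omega

instance : DecidablePred GoodZ := fun a => by unfold GoodZ; infer_instance

noncomputable def WordsF (k L j h : ℕ) : Finset (List (ℕ × ℕ)) :=
  (AllF k L j h).filter (fun w => GoodZ (vlist k w))

lemma mem_WordsF (k L j h : ℕ) (w : List (ℕ × ℕ)) :
    w ∈ WordsF k L j h ↔ w ∈ AllF k L j h ∧ GoodZ (vlist k w) := Finset.mem_filter

lemma vlist_rotate (k : ℕ) (w : List (ℕ × ℕ)) (r : ℕ) :
    vlist k (w.rotate r) = (vlist k w).rotate r := List.map_rotate _ _ _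

lemma vlist_length (k : ℕ) (w : List (ℕ × ℕ)) : (vlist k w).length = w.length :=
  List.length_map _

lemma count_rotate (c : ℕ × ℕ) (w : List (ℕ × ℕ)) (r : ℕ) :
    (w.rotate r).count c = w.count c := by
  simpa [List.count] using (w.rotate_perm r).countP_eq (· == c)

lemma rotate_mem_AllF (k L j h : ℕ) (hk : 1 ≤ k) (w : List (ℕ × ℕ))
    (hw : w ∈ AllF k L j h) (r : ℕ) : w.rotate r ∈ AllF k L j h := by
  rw [mem_AllF k L j h hk] at hw ⊢
  obtain ⟨h1, h2, h3, h4⟩ := hw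
  have hperm : List.Perm (w.rotate r) w := w.rotate_perm r
  exact ⟨by rw [List.length_rotate, h1], fun s hs => h2 s (hperm.subset hs),
    by rw [count_rotate, h3], by rw [count_rotate, h4]⟩

lemma sum_vlist_eq (k n j : ℕ) (hk : 1 ≤ k) (hj : j ≤ n) (w : List (ℕ × ℕ))
    (hlen : w.length = n + k*j + 1)
    (halph : ∀ s ∈ w, s = stepU ∨ s = stepD ∨ s = stepH k)
    (hcU : w.count stepU = j) (hcH : w.count (stepH k) = n - j) :
    (vlist k w).sum = -1 := by
  obtain ⟨h1, h2, h3⟩ := counts_sum k hk w halph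
  obtain ⟨m, rfl⟩ : ∃ m, n = j + m := ⟨n - j, by omega⟩
  have hm : j + m - j = m := by omega
  rw [hm] at hcH
  have hD : w.count stepD = k*j + 1 := by omega
  rw [vlist_sum, h1, h2, hcU, hcH, hD]
  push_cast
  ring

lemma unique_rot (k : ℕ) (a b : List (ℕ × ℕ)) (hlen : b.length = a.length)
    (ha : (vlist k a).sum = -1) (hga : GoodZ (vlist k a)) (hgb : GoodZ (vlist k b))
    (r r' : ℕ) (hr : r < a.length) (hr' : r' < a.length) (heq : a.rotate r = b.rotate r') :
    a = b ∧ r = r' := by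
  have hL1 : 1 ≤ a.length := by omega
  have hbrot : b = a.rotate ((r + (a.length - r')) % a.length) := by
    rw [List.rotate_mod, ← List.rotate_rotate, heq, List.rotate_rotate]
    have hx : r' + (a.length - r') = b.length := by omega
    rw [hx, List.rotate_length]
  have ht : (r + (a.length - r')) % a.length < a.length := Nat.mod_lt _ (by omega)
  have hgz : GoodZ ((vlist k a).rotate ((r + (a.length - r')) % a.length)) := by
    rw [← vlist_rotate, ← hbrot]
    exact hgb
  have ht0 := cycle_unique (vlist k a) ha hga _ (by rw [vlist_length]; exact ht) hgz
  have hdvd : a.length ∣ (r + (a.length - r')) := Nat.dvd_of_mod_eq_zero ht0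
  obtain ⟨c, hc⟩ := hdvd
  have hc1 : c = 1 := by
    rcases c with _ | _ | c
    · omega
    · rfl
    · exfalso
      rw [Nat.mul_succ, Nat.mul_succ] at hc
      omega
  rw [hc1, mul_one] at hc
  have hrr' : r = r' := by omega
  subst hrr'
  refine ⟨?_, rfl⟩
  rw [hbrot, ht0, List.rotate_zero]

lemma card_AllF_eq_words (k L j h : ℕ) (hk : 1 ≤ k) (hL1 : 1 ≤ L)
    (hsum : ∀ w ∈ AllF k L j h, (vlist k w).sum = -1) :
    (AllF k L j h).card = (WordsF k L j h).card * L := by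
  have hbij : ((WordsF k L j h) ×ˢ Finset.range L).card = (AllF k L j h).card := by
    apply Finset.card_bij (fun (p : List (ℕ × ℕ) × ℕ) _ => p.1.rotate p.2)
    · rintro ⟨v, r⟩ hp
      rw [Finset.mem_product] at hp
      exact rotate_mem_AllF k L j h hk v ((mem_WordsF k L j h v).1 hp.1).1 r
    · rintro ⟨v, r⟩ hp ⟨v', r'⟩ hp' heq
      rw [Finset.mem_product] at hp hp'
      obtain ⟨hv, hr⟩ := hp
      obtain ⟨hv', hr'⟩ := hp'
      rw [mem_WordsF] at hv hv'
      have hvlen : v.length = L := ((mem_AllF k L j h hk v).1 hv.1).1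
      have hvlen' : v'.length = L := ((mem_AllF k L j h hk v').1 hv'.1).1
      have huniq := unique_rot k v v' (by rw [hvlen, hvlen'])
        (hsum v hv.1) hv.2 hv'.2 r r'
        (by rw [hvlen]; exact Finset.mem_range.1 hr)
        (by rw [hvlen]; exact Finset.mem_range.1 hr') heq
      obtain ⟨h1, h2⟩ := huniq
      subst h1; subst h2; rfl
    · intro b hb
      have hblen : b.length = L := ((mem_AllF k L j h hk b).1 hb).1
      obtain ⟨r, hr, hgood⟩ := cycle_exists (vlist k b) (hsum b hb)
      rw [vlist_length, hblen] at hr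
      have hvmem : b.rotate r ∈ WordsF k L j h := by
        rw [mem_WordsF]
        refine ⟨rotate_mem_AllF k L j h hk b hb r, ?_⟩
        rw [vlist_rotate]
        exact hgood
      refine ⟨⟨b.rotate r, (L - r) % L⟩, Finset.mem_product.2
        ⟨hvmem, Finset.mem_range.2 (Nat.mod_lt _ (by omega))⟩, ?_⟩
      have hrlen : (b.rotate r).length = L := by rw [List.length_rotate, hblen]
      rw [← hrlen, List.rotate_mod, hrlen, List.rotate_rotate]
      have hx : r + (L - r) = b.length := by omega
      rw [hx, List.rotate_length]
  rw [← hbij, Finset.card_product, Finset.card_range]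


noncomputable def PathsF (k n j : ℕ) : Finset (List (ℕ × ℕ)) :=
  (WordsF k (n+k*j+1) j (n-j)).image List.dropLast

def PathProp (k n j : ℕ) (w : List (ℕ × ℕ)) : Prop :=
  w.length = n + k*j ∧ (∀ s ∈ w, s = stepU ∨ s = stepD ∨ s = stepH k) ∧
  w.count stepU = j ∧ w.count (stepH k) = n - j ∧ ∀ i, 0 ≤ ((vlist k w).take i).sum

lemma vlist_append (k : ℕ) (a b : List (ℕ × ℕ)) :
    vlist k (a ++ b) = vlist k a ++ vlist k b := List.map_append

lemma vlist_take (k : ℕ) (w : List (ℕ × ℕ)) (i : ℕ) :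
    vlist k (w.take i) = (vlist k w).take i := by simp [vlist, List.map_take]

lemma take_concat_sum (x : List ℤ) (c : ℤ) (i : ℕ) (hi : i ≤ x.length) :
    ((x ++ [c]).take i).sum = (x.take i).sum := by
  rw [List.take_append, List.sum_append]
  have h0 : i - x.length = 0 := by omega
  rw [h0, List.take_zero, List.sum_nil, add_zero]

lemma words_end_stepD (k n j : ℕ) (hk : 1 ≤ k) (hj : j ≤ n) (v : List (ℕ × ℕ))
    (hv : v ∈ WordsF k (n+k*j+1) j (n-j)) :
    ∃ w, v = w ++ [stepD] ∧ w ∈ PathsF k n j := by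
  obtain ⟨hall, hgood⟩ := (mem_WordsF _ _ _ _ v).1 hv
  obtain ⟨hlen, halph, hcU, hcH⟩ := (mem_AllF _ _ _ _ hk v).1 hall
  have hsum : (vlist k v).sum = -1 := sum_vlist_eq k n j hk hj v hlen halph hcU hcH
  have hne : v ≠ [] := by
    intro h0; rw [h0] at hlen; simp at hlen
  have hvdec : v.dropLast ++ [v.getLast hne] = v := List.dropLast_append_getLast hne
  have hdsum : (vlist k v.dropLast).sum + sval k (v.getLast hne) = -1 := by
    conv_lhs at hsum => rw [← hvdec]
    rw [vlist_append, List.sum_append] at hsum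
    simpa [vlist] using hsum
  have hgd := hgood (v.length - 1) (by rw [vlist_length]; omega)
  have htake : (vlist k v).take (v.length - 1) = vlist k v.dropLast := by
    rw [← vlist_take, List.dropLast_eq_take]
  rw [htake] at hgd
  have hlast : v.getLast hne = stepD := by
    rcases halph (v.getLast hne) (List.getLast_mem hne) with h | h | h
    · exfalso; rw [h, sval_stepU] at hdsum
      have : (1:ℤ) ≤ k := by exact_mod_cast hk
      omega
    · exact h
    · exfalso; rw [h, sval_stepH] at hdsum; omega
  refine ⟨v.dropLast, by rw [← hlast, hvdec], ?_⟩
  rw [PathsF, Finset.mem_image]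
  exact ⟨v, hv, rfl⟩

lemma mem_PathsF (k n j : ℕ) (hk : 1 ≤ k) (hj : j ≤ n) (w : List (ℕ × ℕ)) :
    w ∈ PathsF k n j ↔ PathProp k n j w := by
  constructor
  · intro hw
    rw [PathsF, Finset.mem_image] at hw
    obtain ⟨v, hv, hdrop⟩ := hw
    obtain ⟨w', hw', hmem'⟩ := words_end_stepD k n j hk hj v hv
    have hww' : w = w' := by rw [← hdrop, hw', List.dropLast_concat]
    subst hww'
    obtain ⟨hall, hgood⟩ := (mem_WordsF _ _ _ _ v).1 hv
    obtain ⟨hlen, halph, hcU, hcH⟩ := (mem_AllF _ _ _ _ hk v).1 hall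
    have hsum : (vlist k v).sum = -1 := sum_vlist_eq k n j hk hj v hlen halph hcU hcH
    subst hw'
    rw [List.length_append, List.length_singleton] at hlen
    have hwlen : w.length = n + k*j := by omega
    refine ⟨hwlen, ?_, ?_, ?_, ?_⟩
    · intro s hs; exact halph s (List.mem_append_left _ hs)
    · rw [List.count_append] at hcU
      simpa [List.count_singleton, stepU, stepD] using hcU
    · rw [List.count_append] at hcH
      have hkne : ¬ ((1,0) = ((k:ℕ),1)) := by simp
      simp only [List.count_singleton, stepD, stepH] at hcH ⊢
      rw [← hcH]
      simp [hkne]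
    · intro i
      have hvl : vlist k (w ++ [stepD]) = vlist k w ++ [-1] := by
        rw [vlist_append]; simp [vlist, sval_stepD]
      by_cases hi : i ≤ w.length
      · have hgi := hgood i (by rw [vlist_length, List.length_append]; simp; omega)
        rw [hvl, take_concat_sum _ _ _ (by rw [vlist_length]; exact hi)] at hgi
        exact hgi
      · have htk : (vlist k w).take i = vlist k w := by
          apply List.take_of_length_le; rw [vlist_length]; omega
        rw [htk]
        have : (vlist k w).sum + (-1) = -1 := by
          rw [hvl, List.sum_append] at hsum; simpa using hsum
        omega
  · rintro ⟨hwlen, halph, hcU, hcH, hpre⟩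
    rw [PathsF, Finset.mem_image]
    refine ⟨w ++ [stepD], ?_, List.dropLast_concat⟩
    rw [mem_WordsF]
    constructor
    · rw [mem_AllF _ _ _ _ hk]
      refine ⟨?_, ?_, ?_, ?_⟩
      · rw [List.length_append, List.length_singleton]; omega
      · intro s hs
        rcases List.mem_append.1 hs with h | h
        · exact halph s h
        · right; left; simpa using h
      · rw [List.count_append]
        simpa [List.count_singleton, stepU, stepD] using hcU
      · rw [List.count_append]
        have hkne : ¬ ((1,0) = ((k:ℕ),1)) := by simp
        simp only [List.count_singleton, stepD, stepH] at hcH ⊢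
        rw [hcH]
        simp [hkne]
    · intro i hi
      have hvl : vlist k (w ++ [stepD]) = vlist k w ++ [-1] := by
        rw [vlist_append]; simp [vlist, sval_stepD]
      rw [vlist_length, List.length_append, List.length_singleton] at hi
      rw [hvl, take_concat_sum _ _ _ (by rw [vlist_length]; omega)]
      exact hpre i

lemma isk_iff (k n : ℕ) (hk : 1 ≤ k) (w : List (ℕ × ℕ)) :
    IsKSchroederA k n w ↔ ∃ j, j ≤ n ∧ PathProp k n j w := by
  constructor
  · rintro ⟨halph, hfst, hsnd, hpre⟩
    have halph' : ∀ s ∈ w, s = stepU ∨ s = stepD ∨ s = stepH k := by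
      simpa [stepU, stepD, stepH] using halph
    obtain ⟨h1, h2, h3⟩ := counts_sum k hk w halph'
    obtain ⟨m, hm⟩ : ∃ m, n = w.count stepU + m := ⟨n - w.count stepU, by omega⟩
    have hcH : w.count (stepH k) = m := by omega
    refine ⟨w.count stepU, by omega, ?_, halph', rfl, by omega, ?_⟩
    · rw [hcH] at h2
      rw [hm, Nat.mul_add] at hfst
      omega
    · intro i
      rw [← vlist_take, vlist_sum]
      have hcast := hpre i
      zify at hcast
      push_cast
      omega
  · rintro ⟨j, hj, hwlen, halph, hcU, hcH, hpre⟩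
    obtain ⟨h1, h2, h3⟩ := counts_sum k hk w halph
    have hcD : w.count stepD = k * j := by omega
    obtain ⟨m, hm⟩ : ∃ m, n = j + m := ⟨n - j, by omega⟩
    have hcH' : w.count (stepH k) = m := by omega
    refine ⟨by simpa [stepU, stepD, stepH] using halph, ?_, by omega, ?_⟩
    · rw [h2, hcD, hcH', hm, Nat.mul_add]
    · intro i
      have hp := hpre i
      rw [← vlist_take, vlist_sum] at hp
      zify
      push_cast at hp
      omega

lemma card_PathsF (k n j : ℕ) (hk : 1 ≤ k) (hj : j ≤ n) :
    (PathsF k n j).card = (WordsF k (n+k*j+1) j (n-j)).card := by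
  rw [PathsF]
  apply Finset.card_image_of_injOn
  intro v hv v' hv' heq
  obtain ⟨w1, hw1, _⟩ := words_end_stepD k n j hk hj v hv
  obtain ⟨w2, hw2, _⟩ := words_end_stepD k n j hk hj v' hv'
  rw [hw1, hw2] at heq
  rw [List.dropLast_concat, List.dropLast_concat] at heq
  rw [hw1, hw2, heq]

open scoped Nat in
lemma qident (k j m : ℕ) (hk : 1 ≤ k) (hn : 1 ≤ j + m) :
    ((j+m) : ℚ) * (((j+m+k*j+1).choose j : ℕ) : ℚ) * (((m+k*j+1).choose m : ℕ) : ℚ)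
      = ((j+m+k*j+1 : ℕ) : ℚ) * (((j+m).choose j : ℕ) : ℚ)
        * (((j+m+k*j).choose (j+m-1) : ℕ) : ℚ) := by
  have c1 : (((j+m+k*j+1).choose j : ℕ) : ℚ)
      = (j+m+k*j+1)! / (j ! * (m+k*j+1)!) := by
    rw [Nat.cast_choose ℚ (by omega)]
    rw [show j+m+k*j+1-j = m+k*j+1 by omega]
  have c2 : (((m+k*j+1).choose m : ℕ) : ℚ) = (m+k*j+1)! / (m ! * (k*j+1)!) := by
    rw [Nat.cast_choose ℚ (by omega)]
    rw [show m+k*j+1-m = k*j+1 by omega]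
  have c3 : (((j+m).choose j : ℕ) : ℚ) = (j+m)! / (j ! * m !) := by
    rw [Nat.cast_choose ℚ (by omega)]
    rw [show j+m-j = m by omega]
  have c4 : (((j+m+k*j).choose (j+m-1) : ℕ) : ℚ)
      = (j+m+k*j)! / ((j+m-1)! * (k*j+1)!) := by
    rw [Nat.cast_choose ℚ (by omega)]
    rw [show j+m+k*j-(j+m-1) = k*j+1 by omega]
  have e1 : ((j+m+k*j+1)! : ℕ) = (j+m+k*j+1) * (j+m+k*j)! := Nat.factorial_succ _
  have e2 : ((j+m)! : ℕ) = (j+m) * (j+m-1)! := by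
    obtain ⟨t, ht⟩ : ∃ t, j+m = t+1 := ⟨j+m-1, by omega⟩
    rw [ht, Nat.factorial_succ, show t+1-1 = t by omega]
  rw [c1, c2, c3, c4, e1, e2]
  have f1 : ((j ! : ℕ) : ℚ) ≠ 0 := Nat.cast_ne_zero.2 (Nat.factorial_ne_zero _)
  have f2 : ((m ! : ℕ) : ℚ) ≠ 0 := Nat.cast_ne_zero.2 (Nat.factorial_ne_zero _)
  have f3 : (((m+k*j+1)! : ℕ) : ℚ) ≠ 0 := Nat.cast_ne_zero.2 (Nat.factorial_ne_zero _)
  have f4 : (((k*j+1)! : ℕ) : ℚ) ≠ 0 := Nat.cast_ne_zero.2 (Nat.factorial_ne_zero _)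
  have f5 : (((j+m-1)! : ℕ) : ℚ) ≠ 0 := Nat.cast_ne_zero.2 (Nat.factorial_ne_zero _)
  field_simp
  push_cast
  ring

lemma part2 (k n : ℕ) (hk : 1 ≤ k) (hn : 1 ≤ n) :
    ({w : List (ℕ × ℕ) | IsKSchroederA k n w}.ncard : ℚ)
      = (1/(n:ℚ)) * ∑ j ∈ Finset.range (n+1),
          (n.choose j : ℚ) * ((n + k*j).choose (n-1) : ℚ) := by
  have hset : {w : List (ℕ × ℕ) | IsKSchroederA k n w}
      = ↑((Finset.range (n+1)).biUnion (fun j => PathsF k n j)) := by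
    ext w
    simp only [Set.mem_setOf_eq, Finset.coe_biUnion, Set.mem_iUnion, Finset.mem_coe,
      Finset.mem_range]
    rw [isk_iff k n hk w]
    constructor
    · rintro ⟨j, hj, hp⟩
      exact ⟨j, by omega, (mem_PathsF k n j hk hj w).2 hp⟩
    · rintro ⟨j, hj, hp⟩
      exact ⟨j, by omega, (mem_PathsF k n j hk (by omega) w).1 hp⟩
  rw [hset, Set.ncard_coe_finset]
  have hdisj : ∀ x ∈ Finset.range (n+1), ∀ y ∈ Finset.range (n+1), x ≠ y →
      Disjoint (PathsF k n x) (PathsF k n y) := by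
    intro x hx y hy hxy
    rw [Finset.disjoint_left]
    intro w hwx hwy
    have p1 := ((mem_PathsF k n x hk (Nat.lt_succ_iff.1 (Finset.mem_range.1 hx))) w).1 hwx
    have p2 := ((mem_PathsF k n y hk (Nat.lt_succ_iff.1 (Finset.mem_range.1 hy))) w).1 hwy
    exact hxy (p1.2.2.1 ▸ p2.2.2.1 ▸ rfl)
  rw [Finset.card_biUnion hdisj]
  push_cast
  rw [Finset.mul_sum]
  apply Finset.sum_congr rfl
  intro j hj
  have hj' : j ≤ n := by
    have := Finset.mem_range.1 hj
    omega
  rw [card_PathsF k n j hk hj']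
  -- counting chain
  have hsum : ∀ w ∈ AllF k (n+k*j+1) j (n-j), (vlist k w).sum = -1 := by
    intro w hw
    obtain ⟨hlen, halph, hcU, hcH⟩ := (mem_AllF _ _ _ _ hk w).1 hw
    exact sum_vlist_eq k n j hk hj' w hlen halph hcU hcH
  have hA1 := card_AllF_eq_words k (n+k*j+1) j (n-j) hk (by omega) hsum
  have hA2 := card_AllF k (n+k*j+1) j (n-j) hk
  obtain ⟨m, hm⟩ : ∃ m, n = j + m := ⟨n - j, by omega⟩
  subst hm
  simp only [show j+m-j = m from by omega, show j+m+k*j+1-j = m+k*j+1 from by omega]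
    at hA1 hA2 ⊢
  have hq := qident k j m hk (by omega)
  have hWq : ((WordsF k (j+m+k*j+1) j m).card : ℚ) * ((j+m+k*j+1 : ℕ) : ℚ)
      = (((j+m+k*j+1).choose j : ℕ) : ℚ) * (((m+k*j+1).choose m : ℕ) : ℚ) := by
    rw [← Nat.cast_mul, ← hA1, hA2]
    push_cast
    ring
  have hLne : ((j+m+k*j+1 : ℕ) : ℚ) ≠ 0 := by
    push_cast
    positivity
  have hnne : ((j+m : ℕ) : ℚ) ≠ 0 := by
    have h1 : (0:ℕ) < j + m := by omega
    exact Nat.cast_ne_zero.2 (by omega)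
  have h3 : ((j+m : ℕ) : ℚ) * ((WordsF k (j+m+k*j+1) j m).card : ℚ)
        * ((j+m+k*j+1 : ℕ) : ℚ)
      = (((j+m).choose j : ℕ) : ℚ) * (((j+m+k*j).choose (j+m-1) : ℕ) : ℚ)
        * ((j+m+k*j+1 : ℕ) : ℚ) := by
    calc ((j+m : ℕ) : ℚ) * ((WordsF k (j+m+k*j+1) j m).card : ℚ) * ((j+m+k*j+1 : ℕ) : ℚ)
        = ((j+m : ℕ) : ℚ) * (((WordsF k (j+m+k*j+1) j m).card : ℚ) * ((j+m+k*j+1:ℕ) : ℚ)) := by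
          ring
      _ = ((j+m : ℕ) : ℚ) * ((((j+m+k*j+1).choose j : ℕ) : ℚ)
            * (((m+k*j+1).choose m : ℕ) : ℚ)) := by rw [hWq]
      _ = ((j+m) : ℚ) * (((j+m+k*j+1).choose j : ℕ) : ℚ)
            * (((m+k*j+1).choose m : ℕ) : ℚ) := by push_cast; ring
      _ = ((j+m+k*j+1 : ℕ) : ℚ) * (((j+m).choose j : ℕ) : ℚ)
            * (((j+m+k*j).choose (j+m-1) : ℕ) : ℚ) := hq
      _ = _ := by ring
  have hfin := mul_right_cancel₀ hLne h3
  push_cast at hfin hnne ⊢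
  field_simp [hnne]
  linear_combination hfin


/-- If `ν = 1 + x(ν + ν^{k+1})` then `[xⁿ]ν = (1/n) Σ_{j=0}^{n} C(n,j) C(n+kj, n-1)`,
and the number of `k`-Schröder paths of type A of size `n` equals this expression. -/
theorem schroederA_coeff_formula (k n : ℕ) (hk : 1 ≤ k) (hn : 1 ≤ n)
    (ν : PowerSeries ℚ)
    (hν : ν = 1 + PowerSeries.X * (ν + ν ^ (k + 1))) :
    (PowerSeries.coeff n) ν
        = (1 / (n : ℚ)) * ∑ j ∈ Finset.range (n + 1),
            (n.choose j : ℚ) * ((n + k * j).choose (n - 1) : ℚ) ∧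
    ({w : List (ℕ × ℕ) | IsKSchroederA k n w}.ncard : ℚ)
        = (1 / (n : ℚ)) * ∑ j ∈ Finset.range (n + 1),
            (n.choose j : ℚ) * ((n + k * j).choose (n - 1) : ℚ) := by
  constructor
  · have h := part1 k n hn ν hν
    have hnne : (n:ℚ) ≠ 0 := Nat.cast_ne_zero.2 (by omega)
    rw [← h]
    field_simp
  · exact part2 k n hk hn
end
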